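/- arXiv:1008.0806 — 6 statements merged into one kernel-verified Lean document; each statement's English description precedes it below -/
import Mathlib

section
/- Let U ⊂ ℝ^n be open, let ν : U × (0,T) → ℝ be C^2 in x and C^1 in t with 𝒫_p ν = 0 on U × (0,T), let φ be a strictly positive C^2 function and ϕ a strictly positive C^1 function, and set Φ(x,t) = ν(x,t)² φ(x_n) ϕ(t). Define the operator 𝓛Φ = ∂_t Φ − Σ_{i,j=1}^n a_{i,j}(t)∂_{x_i}∂_{x_j}Φ + Σ_{i=1}^{n−1}(2p a_{i,n}(t) + b_i(t) + 2a_{i,n}(t)φ'(x_n)/φ(x_n)) ∂_{x_i}Φ + (2p a_{n,n}(t) + b_n(t) + 2a_{n,n}(t)φ'(x_n)/φ(x_n)) ∂_{x_n}Φ. If the matrix (a_{i,j}(t)) is positive semidefinite for each t, then at every point of U × (0,T): 𝓛Φ ≤ φ(x_n)ϕ(t) ν² [ ϕ'(t)/ϕ(t) − a_{n,n}(t)φ''(x_n)/φ(x_n) + 2a_{n,n}(t)(φ'(x_n)/φ(x_n))² − 2(c(t) − p b_n(t) − p² a_{n,n}(t)) + (2p a_{n,n}(t)+b_n(t)) φ'(x_n)/φ(x_n)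 ]. -/
open Set Filter

/-- Spatial partial derivative `∂u/∂xᵢ` of a function `u : ℝⁿ → ℝ`. -/
noncomputable def pd1 {m : ℕ} (i : Fin m) (u : (Fin m → ℝ) → ℝ) (x : Fin m → ℝ) : ℝ :=
  fderiv ℝ u x (Pi.single i 1)

/-- Second spatial partial derivative `∂²u/∂xᵢ∂xⱼ`. -/
noncomputable def pd2 {m : ℕ} (i j : Fin m) (u : (Fin m → ℝ) → ℝ) (x : Fin m → ℝ) : ℝ :=
  pd1 i (fun y => pd1 j u y) x

section helpers
variable {m : ℕ} {u v : (Fin m → ℝ) → ℝ} {x : Fin m → ℝ}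

theorem pd1_congr_nhds (h : u =ᶠ[nhds x] v) (i : Fin m) :
    pd1 i u x = pd1 i v x := by
  unfold pd1; rw [h.fderiv_eq]

theorem pd1_add (hu : DifferentiableAt ℝ u x) (hv : DifferentiableAt ℝ v x) (i : Fin m) :
    pd1 i (fun y => u y + v y) x = pd1 i u x + pd1 i v x := by
  unfold pd1; rw [fderiv_fun_add hu hv]; simp

theorem pd1_mul (hu : DifferentiableAt ℝ u x) (hv : DifferentiableAt ℝ v x) (i : Fin m) :
    pd1 i (fun y => u y * v y) x = pd1 i u x * v x + u x * pd1 i v x := by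
  unfold pd1; rw [fderiv_fun_mul hu hv]; simp; ring

theorem pd1_mul_const (hu : DifferentiableAt ℝ u x) (c : ℝ) (i : Fin m) :
    pd1 i (fun y => u y * c) x = pd1 i u x * c := by
  unfold pd1; rw [fderiv_mul_const hu]; simp; ring

theorem pd1_const_mul (hu : DifferentiableAt ℝ u x) (c : ℝ) (i : Fin m) :
    pd1 i (fun y => c * u y) x = c * pd1 i u x := by
  unfold pd1; rw [fderiv_const_mul hu]; simp

theorem diff_coord (k : Fin m) (x : Fin m → ℝ) :
    DifferentiableAt ℝ (fun y : Fin m → ℝ => y k) x :=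
  (ContinuousLinearMap.proj (R := ℝ) (φ := fun _ : Fin m => ℝ) k).differentiableAt

theorem pd1_comp_coord {f : ℝ → ℝ} (k : Fin m) (hf : DifferentiableAt ℝ f (x k)) (i : Fin m) :
    pd1 i (fun y => f (y k)) x = deriv f (x k) * (if k = i then 1 else 0) := by
  have hproj : HasFDerivAt (fun y : Fin m → ℝ => y k)
      (ContinuousLinearMap.proj (R := ℝ) (φ := fun _ : Fin m => ℝ) k) x :=
    (ContinuousLinearMap.proj (R := ℝ) (φ := fun _ : Fin m => ℝ) k).hasFDerivAt
  have h2 := hf.hasDerivAt.comp_hasFDerivAt x hproj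
  have h3 : HasFDerivAt (fun y : Fin m → ℝ => f (y k))
      (deriv f (x k) • ContinuousLinearMap.proj (R := ℝ) (φ := fun _ : Fin m => ℝ) k) x := h2
  unfold pd1
  rw [h3.fderiv]
  simp [Pi.single_apply]

theorem diff_comp_coord {f : ℝ → ℝ} (k : Fin m) (hf : DifferentiableAt ℝ f (x k)) :
    DifferentiableAt ℝ (fun y : Fin m → ℝ => f (y k)) x :=
  hf.comp x (diff_coord k x)

theorem diff_pd1 (hu : ContDiffAt ℝ 2 u x) (j : Fin m) :
    DifferentiableAt ℝ (fun y => pd1 j u y) x := by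
  have h1 : ContDiffAt ℝ 1 (fderiv ℝ u) x := hu.fderiv_right (by norm_num)
  exact (h1.differentiableAt one_ne_zero).clm_apply (differentiableAt_const _)

end helpers

/-- The parabolic operator
`𝒫u = ∂ₜu − Σᵢⱼ aᵢⱼ(t) ∂ᵢ∂ⱼu + Σᵢ bᵢ(t) ∂ᵢu + c(t) u`. -/
noncomputable def parabolicOp {m : ℕ} (a : Fin m → Fin m → ℝ → ℝ) (b : Fin m → ℝ → ℝ)
    (c : ℝ → ℝ) (u : (Fin m → ℝ) → ℝ → ℝ) (x : Fin m → ℝ) (t : ℝ) : ℝ :=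
  deriv (fun s => u x s) t
    - ∑ i, ∑ j, a i j t * pd2 i j (fun y => u y t) x
    + ∑ i, b i t * pd1 i (fun y => u y t) x
    + c t * u x t

/-- The transformed operator `𝒫ₚε = ∂ₜε − Σᵢⱼ aᵢⱼ ∂ᵢ∂ⱼε
+ Σ_{i<n} (2p aᵢₙ + bᵢ) ∂ᵢε + (2p aₙₙ + bₙ) ∂ₙε + (c − p bₙ − p² aₙₙ) ε`,
in dimension `n+1`, the last coordinate playing the role of `xₙ`. -/
noncomputable def transOp {n : ℕ} (p : ℝ) (a : Fin (n+1) → Fin (n+1) → ℝ → ℝ)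
    (b : Fin (n+1) → ℝ → ℝ) (c : ℝ → ℝ)
    (ε : (Fin (n+1) → ℝ) → ℝ → ℝ) (x : Fin (n+1) → ℝ) (t : ℝ) : ℝ :=
  deriv (fun s => ε x s) t
    - ∑ i, ∑ j, a i j t * pd2 i j (fun y => ε y t) x
    + ∑ i ∈ Finset.univ.erase (Fin.last n),
        (2 * p * a i (Fin.last n) t + b i t) * pd1 i (fun y => ε y t) x
    + (2 * p * a (Fin.last n) (Fin.last n) t + b (Fin.last n) t) *
        pd1 (Fin.last n) (fun y => ε y t) x
    + (c t - p * b (Fin.last n) t - p ^ 2 * a (Fin.last n) (Fin.last n) t) * ε x t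

/-- The first-order-modified operator `𝓛` from the paper:
`𝓛Φ = ∂ₜΦ − Σᵢⱼ aᵢⱼ ∂ᵢ∂ⱼΦ + Σ_{i<n} (2p aᵢₙ + bᵢ + 2aᵢₙ φ'/φ) ∂ᵢΦ
       + (2p aₙₙ + bₙ + 2aₙₙ φ'/φ) ∂ₙΦ`. -/
noncomputable def LOp {n : ℕ} (p : ℝ) (a : Fin (n+1) → Fin (n+1) → ℝ → ℝ)
    (b : Fin (n+1) → ℝ → ℝ) (φ : ℝ → ℝ)
    (Φ : (Fin (n+1) → ℝ) → ℝ → ℝ) (x : Fin (n+1) → ℝ) (t : ℝ) : ℝ :=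
  deriv (fun s => Φ x s) t
    - ∑ i, ∑ j, a i j t * pd2 i j (fun y => Φ y t) x
    + ∑ i ∈ Finset.univ.erase (Fin.last n),
        (2 * p * a i (Fin.last n) t + b i t
          + 2 * a i (Fin.last n) t * (deriv φ (x (Fin.last n)) / φ (x (Fin.last n)))) *
          pd1 i (fun y => Φ y t) x
    + (2 * p * a (Fin.last n) (Fin.last n) t + b (Fin.last n) t
        + 2 * a (Fin.last n) (Fin.last n) t *
            (deriv φ (x (Fin.last n)) / φ (x (Fin.last n)))) *
        pd1 (Fin.last n) (fun y => Φ y t) x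

/-- if `𝒫ₚν = 0` and `(aᵢⱼ)` is positive semidefinite, then for
`Φ = ν² φ(xₙ) ϕ(t)` one has the pointwise bound on `𝓛Φ`. -/
theorem LOp_le_of_transOp_eq_zero
    {n : ℕ} (T p : ℝ) (hT : 0 < T)
    (a : Fin (n+1) → Fin (n+1) → ℝ → ℝ) (b : Fin (n+1) → ℝ → ℝ) (c : ℝ → ℝ)
    (ha_symm : ∀ i j t, a i j t = a j i t)
    (ha_smooth : ∀ i j, ContDiff ℝ (⊤ : ℕ∞) (a i j))
    (ha_bdd : ∀ i j, ∃ C, ∀ t, |a i j t| ≤ C)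
    (hb_smooth : ∀ i, ContDiff ℝ (⊤ : ℕ∞) (b i))
    (hb_bdd : ∀ i, ∃ C, ∀ t, |b i t| ≤ C)
    (hc_smooth : ContDiff ℝ (⊤ : ℕ∞) c)
    (hc_bdd : ∃ C, ∀ t, |c t| ≤ C)
    (ha_psd : ∀ t, ∀ ξ : Fin (n+1) → ℝ, 0 ≤ ∑ i, ∑ j, a i j t * ξ i * ξ j)
    (U : Set (Fin (n+1) → ℝ)) (hU : IsOpen U)
    (ν : (Fin (n+1) → ℝ) → ℝ → ℝ)
    (hν_x : ∀ t ∈ Ioo (0:ℝ) T, ContDiffOn ℝ 2 (fun x => ν x t) U)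
    (hν_t : ∀ x ∈ U, ContDiffOn ℝ 1 (fun s => ν x s) (Ioo 0 T))
    (hν_pde : ∀ x ∈ U, ∀ t ∈ Ioo (0:ℝ) T, transOp p a b c ν x t = 0)
    (φ ϕ : ℝ → ℝ)
    (hφ : ContDiff ℝ 2 φ) (hφ_pos : ∀ x, 0 < φ x)
    (hϕ : ContDiff ℝ 1 ϕ) (hϕ_pos : ∀ t, 0 < ϕ t)
    (Φ : (Fin (n+1) → ℝ) → ℝ → ℝ)
    (hΦ : ∀ x t, Φ x t = ν x t ^ 2 * φ (x (Fin.last n)) * ϕ t) :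
    ∀ x ∈ U, ∀ t ∈ Ioo (0:ℝ) T,
      LOp p a b φ Φ x t ≤
        φ (x (Fin.last n)) * ϕ t * ν x t ^ 2 *
          (deriv ϕ t / ϕ t
            - a (Fin.last n) (Fin.last n) t *
                (deriv (deriv φ) (x (Fin.last n)) / φ (x (Fin.last n)))
            + 2 * a (Fin.last n) (Fin.last n) t *
                (deriv φ (x (Fin.last n)) / φ (x (Fin.last n))) ^ 2
            - 2 * (c t - p * b (Fin.last n) t - p ^ 2 * a (Fin.last n) (Fin.last n) t)
            + (2 * p * a (Fin.last n) (Fin.last n) t + b (Fin.last n) t) *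
                (deriv φ (x (Fin.last n)) / φ (x (Fin.last n)))) := by
  intro x hx t ht
  have hΦt : (fun y => Φ y t) = fun y => ν y t ^ 2 * φ (y (Fin.last n)) * ϕ t :=
    funext fun y => hΦ y t
  have hΦx : (fun s => Φ x s) = fun s => ν x s ^ 2 * φ (x (Fin.last n)) * ϕ s :=
    funext fun s => hΦ x s
  have hνC : ContDiffOn ℝ 2 (fun y => ν y t) U := hν_x t ht
  have hdν : ∀ y ∈ U, DifferentiableAt ℝ (fun z => ν z t) y := fun y hy =>
    (hνC.differentiableOn (by norm_num)).differentiableAt (hU.mem_nhds hy)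
  have hC2 : ContDiffAt ℝ 2 (fun y => ν y t) x := hνC.contDiffAt (hU.mem_nhds hx)
  have hφdiff : ∀ r : ℝ, DifferentiableAt ℝ φ r := fun r =>
    (hφ.differentiable (by norm_num)).differentiableAt
  have hφ'C : ContDiff ℝ 1 (deriv φ) := by
    have h2 : ContDiff ℝ ((1:ℕ) + 1) φ := by exact_mod_cast hφ
    exact (contDiff_succ_iff_deriv.mp h2).2.2
  have hφ'diff : ∀ r : ℝ, DifferentiableAt ℝ (deriv φ) r := fun r =>
    (hφ'C.differentiable one_ne_zero).differentiableAt
  -- first spatial derivative of Φ(·,t) at any point of U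
  have key1 : ∀ y ∈ U, ∀ j : Fin (n+1),
      pd1 j (fun z => ν z t ^ 2 * φ (z (Fin.last n)) * ϕ t) y =
        (2 * ν y t * pd1 j (fun z => ν z t) y * φ (y (Fin.last n))
          + ν y t ^ 2 * deriv φ (y (Fin.last n)) * (if Fin.last n = j then 1 else 0)) * ϕ t := by
    intro y hy j
    have e1 : (fun z => ν z t ^ 2 * φ (z (Fin.last n)) * ϕ t)
        = fun z => ν z t * ν z t * φ (z (Fin.last n)) * ϕ t := by
      funext z; ring
    have hd2 : DifferentiableAt ℝ (fun z => ν z t * ν z t) y := (hdν y hy).mul (hdν y hy)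
    have hdφc : DifferentiableAt ℝ (fun z : Fin (n+1) → ℝ => φ (z (Fin.last n))) y :=
      diff_comp_coord (Fin.last n) (hφdiff _)
    have s1 : pd1 j (fun z => ν z t * ν z t * φ (z (Fin.last n)) * ϕ t) y
        = pd1 j (fun z => ν z t * ν z t * φ (z (Fin.last n))) y * ϕ t :=
      pd1_mul_const (hd2.mul hdφc) (ϕ t) j
    have s2 : pd1 j (fun z => ν z t * ν z t * φ (z (Fin.last n))) y
        = pd1 j (fun z => ν z t * ν z t) y * φ (y (Fin.last n))
          + (ν y t * ν y t) * pd1 j (fun z : Fin (n+1) → ℝ => φ (z (Fin.last n))) y :=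
      pd1_mul hd2 hdφc j
    have s3 : pd1 j (fun z => ν z t * ν z t) y
        = pd1 j (fun z => ν z t) y * ν y t + ν y t * pd1 j (fun z => ν z t) y :=
      pd1_mul (hdν y hy) (hdν y hy) j
    have s4 : pd1 j (fun z : Fin (n+1) → ℝ => φ (z (Fin.last n))) y
        = deriv φ (y (Fin.last n)) * (if Fin.last n = j then 1 else 0) :=
      pd1_comp_coord (Fin.last n) (hφdiff _) j
    rw [e1, s1, s2, s3, s4]; ring
  -- second spatial derivatives of Φ(·,t) at x
  have key2 : ∀ i j : Fin (n+1),
      pd2 i j (fun z => ν z t ^ 2 * φ (z (Fin.last n)) * ϕ t) x =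
        2 * pd1 i (fun y => ν y t) x * pd1 j (fun y => ν y t) x * φ (x (Fin.last n)) * ϕ t
        + 2 * ν x t * pd2 i j (fun y => ν y t) x * φ (x (Fin.last n)) * ϕ t
        + (if Fin.last n = i then
            2 * ν x t * pd1 j (fun y => ν y t) x * deriv φ (x (Fin.last n)) * ϕ t else 0)
        + (if Fin.last n = j then
            2 * ν x t * pd1 i (fun y => ν y t) x * deriv φ (x (Fin.last n)) * ϕ t else 0)
        + (if Fin.last n = i then (if Fin.last n = j then
            ν x t ^ 2 * deriv (deriv φ) (x (Fin.last n)) * ϕ t else 0) else 0) := by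
    intro i j
    show pd1 i (fun y => pd1 j (fun z => ν z t ^ 2 * φ (z (Fin.last n)) * ϕ t) y) x = _
    have hG : (fun y => pd1 j (fun z => ν z t ^ 2 * φ (z (Fin.last n)) * ϕ t) y)
        =ᶠ[nhds x] (fun y =>
          (2 * ν y t * pd1 j (fun z => ν z t) y * φ (y (Fin.last n))
            + ν y t ^ 2 * deriv φ (y (Fin.last n)) * (if Fin.last n = j then 1 else 0)) * ϕ t) :=
      Filter.eventuallyEq_of_mem (hU.mem_nhds hx) (fun y hy => key1 y hy j)
    rw [pd1_congr_nhds hG i]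
    have hd1 : DifferentiableAt ℝ (fun y => ν y t) x := hdν x hx
    have hdw : DifferentiableAt ℝ (fun y => pd1 j (fun z => ν z t) y) x := diff_pd1 hC2 j
    have hdφc : DifferentiableAt ℝ (fun y : Fin (n+1) → ℝ => φ (y (Fin.last n))) x :=
      diff_comp_coord (Fin.last n) (hφdiff _)
    have hdφ'c : DifferentiableAt ℝ (fun y : Fin (n+1) → ℝ => deriv φ (y (Fin.last n))) x :=
      diff_comp_coord (Fin.last n) (hφ'diff _)
    have hdA : DifferentiableAt ℝ
        (fun y => 2 * ν y t * pd1 j (fun z => ν z t) y * φ (y (Fin.last n))) x :=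
      (((differentiableAt_const (2:ℝ)).mul hd1).mul hdw).mul hdφc
    have hdB : DifferentiableAt ℝ
        (fun y => ν y t ^ 2 * deriv φ (y (Fin.last n))
          * (if Fin.last n = j then (1:ℝ) else 0)) x :=
      ((hd1.pow 2).mul hdφ'c).mul (differentiableAt_const _)
    have u1 : pd1 i (fun y =>
        (2 * ν y t * pd1 j (fun z => ν z t) y * φ (y (Fin.last n))
          + ν y t ^ 2 * deriv φ (y (Fin.last n)) * (if Fin.last n = j then 1 else 0)) * ϕ t) x
        = pd1 i (fun y =>
            2 * ν y t * pd1 j (fun z => ν z t) y * φ (y (Fin.last n))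
            + ν y t ^ 2 * deriv φ (y (Fin.last n)) * (if Fin.last n = j then 1 else 0)) x
          * ϕ t := pd1_mul_const (hdA.add hdB) (ϕ t) i
    have u2 : pd1 i (fun y =>
          2 * ν y t * pd1 j (fun z => ν z t) y * φ (y (Fin.last n))
          + ν y t ^ 2 * deriv φ (y (Fin.last n)) * (if Fin.last n = j then 1 else 0)) x
        = pd1 i (fun y => 2 * ν y t * pd1 j (fun z => ν z t) y * φ (y (Fin.last n))) x
          + pd1 i (fun y => ν y t ^ 2 * deriv φ (y (Fin.last n))
              * (if Fin.last n = j then 1 else 0)) x := pd1_add hdA hdB i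
    have u3a : pd1 i (fun y => 2 * ν y t * pd1 j (fun z => ν z t) y * φ (y (Fin.last n))) x
        = pd1 i (fun y => 2 * ν y t * pd1 j (fun z => ν z t) y) x * φ (x (Fin.last n))
          + (2 * ν x t * pd1 j (fun z => ν z t) x)
            * pd1 i (fun y : Fin (n+1) → ℝ => φ (y (Fin.last n))) x :=
      pd1_mul (((differentiableAt_const (2:ℝ)).mul hd1).mul hdw) hdφc i
    have u3b : pd1 i (fun y => 2 * ν y t * pd1 j (fun z => ν z t) y) x
        = pd1 i (fun y => 2 * ν y t) x * pd1 j (fun z => ν z t) x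
          + (2 * ν x t) * pd1 i (fun y => pd1 j (fun z => ν z t) y) x :=
      pd1_mul ((differentiableAt_const (2:ℝ)).mul hd1) hdw i
    have u3c : pd1 i (fun y => 2 * ν y t) x = 2 * pd1 i (fun y => ν y t) x :=
      pd1_const_mul hd1 2 i
    have u3d : pd1 i (fun y => pd1 j (fun z => ν z t) y) x
        = pd2 i j (fun y => ν y t) x := rfl
    have u3e : pd1 i (fun y : Fin (n+1) → ℝ => φ (y (Fin.last n))) x
        = deriv φ (x (Fin.last n)) * (if Fin.last n = i then 1 else 0) :=
      pd1_comp_coord (Fin.last n) (hφdiff _) i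
    have u4a : pd1 i (fun y => ν y t ^ 2 * deriv φ (y (Fin.last n))
          * (if Fin.last n = j then 1 else 0)) x
        = pd1 i (fun y => ν y t ^ 2 * deriv φ (y (Fin.last n))) x
          * (if Fin.last n = j then 1 else 0) :=
      pd1_mul_const ((hd1.pow 2).mul hdφ'c) _ i
    have u4b : pd1 i (fun y => ν y t ^ 2 * deriv φ (y (Fin.last n))) x
        = pd1 i (fun y => ν y t ^ 2) x * deriv φ (x (Fin.last n))
          + ν x t ^ 2 * pd1 i (fun y : Fin (n+1) → ℝ => deriv φ (y (Fin.last n))) x :=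
      pd1_mul (hd1.pow 2) hdφ'c i
    have u4c : pd1 i (fun y => ν y t ^ 2) x = 2 * ν x t * pd1 i (fun y => ν y t) x := by
      have e : (fun y => ν y t ^ 2) = fun y => ν y t * ν y t := by funext y; ring
      rw [e, pd1_mul hd1 hd1 i]; ring
    have u4d : pd1 i (fun y : Fin (n+1) → ℝ => deriv φ (y (Fin.last n))) x
        = deriv (deriv φ) (x (Fin.last n)) * (if Fin.last n = i then 1 else 0) :=
      pd1_comp_coord (Fin.last n) (hφ'diff _) i
    rw [u1, u2, u3a, u3b, u3c, u3d, u3e, u4a, u4b, u4c, u4d]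
    split_ifs <;> ring
  -- time derivative
  have hdt : DifferentiableAt ℝ (fun s => ν x s) t :=
    ((hν_t x hx).differentiableOn one_ne_zero).differentiableAt (isOpen_Ioo.mem_nhds ht)
  have hderiv_t : deriv (fun s => ν x s ^ 2 * φ (x (Fin.last n)) * ϕ s) t
      = 2 * ν x t * deriv (fun s => ν x s) t * φ (x (Fin.last n)) * ϕ t
        + ν x t ^ 2 * φ (x (Fin.last n)) * deriv ϕ t := by
    have h1 : HasDerivAt (fun s => ν x s) (deriv (fun s => ν x s) t) t := hdt.hasDerivAt
    have h2 : HasDerivAt (fun s => ν x s ^ 2)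
        (2 * ν x t * deriv (fun s => ν x s) t) t := by
      have := h1.fun_pow 2
      simpa [mul_comm, mul_assoc] using this
    have h3 : HasDerivAt (fun s => ν x s ^ 2 * φ (x (Fin.last n)))
        (2 * ν x t * deriv (fun s => ν x s) t * φ (x (Fin.last n))) t := h2.mul_const _
    have h4 : HasDerivAt ϕ (deriv ϕ t) t := ((hϕ.differentiable one_ne_zero) t).hasDerivAt
    have h5 := h3.fun_mul h4
    rw [h5.deriv]
  -- double sum of second derivatives
  have hS2 : ∑ i, ∑ j, a i j t * pd2 i j (fun y => ν y t ^ 2 * φ (y (Fin.last n)) * ϕ t) x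
      = 2 * φ (x (Fin.last n)) * ϕ t *
          (∑ i, ∑ j, a i j t * pd1 i (fun y => ν y t) x * pd1 j (fun y => ν y t) x)
        + 2 * ν x t * φ (x (Fin.last n)) * ϕ t *
            (∑ i, ∑ j, a i j t * pd2 i j (fun y => ν y t) x)
        + 4 * ν x t * deriv φ (x (Fin.last n)) * ϕ t *
            (∑ i, a i (Fin.last n) t * pd1 i (fun y => ν y t) x)
        + ν x t ^ 2 * deriv (deriv φ) (x (Fin.last n)) * ϕ t
            * a (Fin.last n) (Fin.last n) t := by
    have step : ∀ i j : Fin (n+1),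
        a i j t * pd2 i j (fun y => ν y t ^ 2 * φ (y (Fin.last n)) * ϕ t) x
        = 2 * φ (x (Fin.last n)) * ϕ t *
            (a i j t * pd1 i (fun y => ν y t) x * pd1 j (fun y => ν y t) x)
          + 2 * ν x t * φ (x (Fin.last n)) * ϕ t * (a i j t * pd2 i j (fun y => ν y t) x)
          + (if Fin.last n = i then
              2 * ν x t * deriv φ (x (Fin.last n)) * ϕ t
                * (a i j t * pd1 j (fun y => ν y t) x) else 0)
          + (if Fin.last n = j then
              2 * ν x t * deriv φ (x (Fin.last n)) * ϕ t
                * (a i j t * pd1 i (fun y => ν y t) x) else 0)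
          + (if Fin.last n = i then (if Fin.last n = j then
              ν x t ^ 2 * deriv (deriv φ) (x (Fin.last n)) * ϕ t * a i j t else 0) else 0) := by
      intro i j
      rw [key2 i j]
      split_ifs <;> ring
    calc ∑ i, ∑ j, a i j t * pd2 i j (fun y => ν y t ^ 2 * φ (y (Fin.last n)) * ϕ t) x
        = ∑ i, ∑ j, (2 * φ (x (Fin.last n)) * ϕ t *
            (a i j t * pd1 i (fun y => ν y t) x * pd1 j (fun y => ν y t) x)
          + 2 * ν x t * φ (x (Fin.last n)) * ϕ t * (a i j t * pd2 i j (fun y => ν y t) x)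
          + (if Fin.last n = i then
              2 * ν x t * deriv φ (x (Fin.last n)) * ϕ t
                * (a i j t * pd1 j (fun y => ν y t) x) else 0)
          + (if Fin.last n = j then
              2 * ν x t * deriv φ (x (Fin.last n)) * ϕ t
                * (a i j t * pd1 i (fun y => ν y t) x) else 0)
          + (if Fin.last n = i then (if Fin.last n = j then
              ν x t ^ 2 * deriv (deriv φ) (x (Fin.last n)) * ϕ t * a i j t else 0) else 0)) :=
          Finset.sum_congr rfl fun i _ => Finset.sum_congr rfl fun j _ => step i j
      _ = _ := by
          simp only [Finset.sum_add_distrib, Finset.sum_ite_irrel, Finset.sum_const_zero,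
            Finset.sum_ite_eq, Finset.mem_univ, if_true, ← Finset.mul_sum]
          have hsymm : ∑ j, a (Fin.last n) j t * pd1 j (fun y => ν y t) x
              = ∑ i, a i (Fin.last n) t * pd1 i (fun y => ν y t) x :=
            Finset.sum_congr rfl fun j _ => by rw [ha_symm]
          rw [hsymm]
          ring
  -- sum over i ≠ last of first-order terms
  have hS1e : ∑ i ∈ Finset.univ.erase (Fin.last n),
        (2 * p * a i (Fin.last n) t + b i t
          + 2 * a i (Fin.last n) t * (deriv φ (x (Fin.last n)) / φ (x (Fin.last n)))) *
        pd1 i (fun y => ν y t ^ 2 * φ (y (Fin.last n)) * ϕ t) x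
      = 2 * ν x t * φ (x (Fin.last n)) * ϕ t *
          (∑ i ∈ Finset.univ.erase (Fin.last n),
            (2 * p * a i (Fin.last n) t + b i t) * pd1 i (fun y => ν y t) x)
        + 2 * (deriv φ (x (Fin.last n)) / φ (x (Fin.last n)))
            * (2 * ν x t * φ (x (Fin.last n)) * ϕ t)
            * ((∑ i, a i (Fin.last n) t * pd1 i (fun y => ν y t) x)
                - a (Fin.last n) (Fin.last n) t
                  * pd1 (Fin.last n) (fun y => ν y t) x) := by
    have herase : ∑ i ∈ Finset.univ.erase (Fin.last n),
          a i (Fin.last n) t * pd1 i (fun y => ν y t) x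
        = (∑ i, a i (Fin.last n) t * pd1 i (fun y => ν y t) x)
            - a (Fin.last n) (Fin.last n) t * pd1 (Fin.last n) (fun y => ν y t) x := by
      rw [eq_sub_iff_add_eq]
      exact Finset.sum_erase_add _ _ (Finset.mem_univ _)
    rw [← herase]
    have step : ∀ i ∈ Finset.univ.erase (Fin.last n),
        (2 * p * a i (Fin.last n) t + b i t
          + 2 * a i (Fin.last n) t * (deriv φ (x (Fin.last n)) / φ (x (Fin.last n)))) *
          pd1 i (fun y => ν y t ^ 2 * φ (y (Fin.last n)) * ϕ t) x
        = 2 * ν x t * φ (x (Fin.last n)) * ϕ t *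
            ((2 * p * a i (Fin.last n) t + b i t) * pd1 i (fun y => ν y t) x)
          + 2 * (deriv φ (x (Fin.last n)) / φ (x (Fin.last n)))
              * (2 * ν x t * φ (x (Fin.last n)) * ϕ t)
              * (a i (Fin.last n) t * pd1 i (fun y => ν y t) x) := by
      intro i hi
      have hne : Fin.last n ≠ i := (Finset.ne_of_mem_erase hi).symm
      rw [key1 x hx i, if_neg hne]
      ring
    rw [Finset.sum_congr rfl step, Finset.sum_add_distrib, ← Finset.mul_sum, ← Finset.mul_sum]
  -- the main identity
  have hQ : 0 ≤ ∑ i, ∑ j, a i j t * pd1 i (fun y => ν y t) x * pd1 j (fun y => ν y t) x :=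
    ha_psd t fun i => pd1 i (fun y => ν y t) x
  have hPDE := hν_pde x hx t ht
  have hφ0 : (0:ℝ) < φ (x (Fin.last n)) := hφ_pos _
  have hψ0 : (0:ℝ) < ϕ t := hϕ_pos t
  have hmain : LOp p a b φ Φ x t
      = 2 * φ (x (Fin.last n)) * ϕ t * ν x t * transOp p a b c ν x t
        - 2 * φ (x (Fin.last n)) * ϕ t *
            (∑ i, ∑ j, a i j t * pd1 i (fun y => ν y t) x * pd1 j (fun y => ν y t) x)
        + φ (x (Fin.last n)) * ϕ t * ν x t ^ 2 *
          (deriv ϕ t / ϕ t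
            - a (Fin.last n) (Fin.last n) t *
                (deriv (deriv φ) (x (Fin.last n)) / φ (x (Fin.last n)))
            + 2 * a (Fin.last n) (Fin.last n) t *
                (deriv φ (x (Fin.last n)) / φ (x (Fin.last n))) ^ 2
            - 2 * (c t - p * b (Fin.last n) t - p ^ 2 * a (Fin.last n) (Fin.last n) t)
            + (2 * p * a (Fin.last n) (Fin.last n) t + b (Fin.last n) t) *
                (deriv φ (x (Fin.last n)) / φ (x (Fin.last n)))) := by
    unfold LOp transOp
    rw [hΦt, hΦx, hderiv_t, hS2, hS1e, key1 x hx (Fin.last n), if_pos rfl]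
    field_simp
    ring
  rw [hmain, hPDE]
  have hnn : 0 ≤ 2 * φ (x (Fin.last n)) * ϕ t *
      (∑ i, ∑ j, a i j t * pd1 i (fun y => ν y t) x * pd1 j (fun y => ν y t) x) := by
    apply mul_nonneg _ hQ
    positivity
  linarith
end

section
/- Let φ be a strictly positive C^2 function with φ'/φ and φ''/φ bounded on ℝ, and set Γ = sup_t|a_{n,n}(t)| · sup_x|φ''(x)/φ(x)| + 2 sup_t|a_{n,n}(t)| · (sup_x|φ'(x)/φ(x)|)² + 2 sup_t|c(t) − p b_n(t) − p² a_{n,n}(t)| + sup_t|2p a_{n,n}(t)+b_n(t)| · sup_x|φ'(x)/φ(x)|. Then for every strictly positive C^1 function ϕ on [0,T] with ϕ'(t)/ϕ(t) ≤ −Γ for all t ∈ [0,T], one has, for all t ∈ [0,T] and x_n ∈ ℝ, ϕ'(t)/ϕ(t) − a_{n,n}(t)φ''(x_n)/φ(x_n) + 2a_{n,n}(t)(φ'(x_n)/φ(x_n))² − 2(c(t) − p b_n(t) − p² a_{n,n}(t)) + (2p a_{n,n}(t)+b_n(t)) φ'(x_n)/φ(x_n) ≤ 0. Consequently, for any C^2-in-x,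 C^1-in-t function ν on an open set U × (0,T) with 𝒫_p ν = 0 and (a_{i,j}(t)) positive semidefinite, the function Φ = ν² φ(x_n) ϕ(t) satisfies 𝓛Φ ≤ 0 on U × (0,T). -/
open Set Filter

theorem part1_aux (p T : ℝ) (an bn c : ℝ → ℝ)
    (han : ∃ C, ∀ t, |an t| ≤ C) (hbn : ∃ C, ∀ t, |bn t| ≤ C) (hc : ∃ C, ∀ t, |c t| ≤ C)
    (φ : ℝ → ℝ)
    (hφ1 : ∃ C, ∀ x, |deriv φ x / φ x| ≤ C)
    (hφ2 : ∃ C, ∀ x, |deriv (deriv φ) x / φ x| ≤ C)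
    (Γ : ℝ)
    (hΓ : Γ = (⨆ t, |an t|) * (⨆ x, |deriv (deriv φ) x / φ x|)
          + 2 * (⨆ t, |an t|) * (⨆ x, |deriv φ x / φ x|) ^ 2
          + 2 * (⨆ t, |c t - p * bn t - p ^ 2 * an t|)
          + (⨆ t, |2 * p * an t + bn t|) * (⨆ x, |deriv φ x / φ x|))
    (ϕ : ℝ → ℝ)
    (hϕ_decay : ∀ t ∈ Icc (0:ℝ) T, deriv ϕ t / ϕ t ≤ -Γ) :
    ∀ t ∈ Icc (0:ℝ) T, ∀ xn : ℝ,
      deriv ϕ t / ϕ t - an t * (deriv (deriv φ) xn / φ xn)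
        + 2 * an t * (deriv φ xn / φ xn) ^ 2
        - 2 * (c t - p * bn t - p ^ 2 * an t)
        + (2 * p * an t + bn t) * (deriv φ xn / φ xn) ≤ 0 := by
  intro t ht xn
  obtain ⟨Ca, hCa⟩ := han; obtain ⟨Cb, hCb⟩ := hbn; obtain ⟨Cc, hCc⟩ := hc
  obtain ⟨C1, hC1⟩ := hφ1; obtain ⟨C2, hC2⟩ := hφ2
  have bddA : BddAbove (range fun t => |an t|) := ⟨Ca, by rintro _ ⟨t, rfl⟩; exact hCa t⟩
  have bdd1 : BddAbove (range fun x => |deriv φ x / φ x|) := ⟨C1, by rintro _ ⟨x, rfl⟩; exact hC1 x⟩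
  have bdd2 : BddAbove (range fun x => |deriv (deriv φ) x / φ x|) := ⟨C2, by rintro _ ⟨x, rfl⟩; exact hC2 x⟩
  have bddC : BddAbove (range fun t => |c t - p * bn t - p ^ 2 * an t|) := by
    refine ⟨Cc + |p| * Cb + p ^ 2 * Ca, ?_⟩
    rintro _ ⟨s, rfl⟩
    have m1 : |p * bn s| ≤ |p| * Cb := by
      rw [abs_mul]; exact mul_le_mul_of_nonneg_left (hCb s) (abs_nonneg p)
    have m2 : |p ^ 2 * an s| ≤ p ^ 2 * Ca := by
      rw [abs_mul, abs_pow, sq_abs]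
      exact mul_le_mul_of_nonneg_left (hCa s) (by positivity)
    have h3 : |c s + -(p * bn s) + -(p ^ 2 * an s)| ≤ |c s| + |-(p * bn s)| + |-(p ^ 2 * an s)| :=
      abs_add_three _ _ _
    rw [abs_neg, abs_neg] at h3
    have he : c s - p * bn s - p ^ 2 * an s = c s + -(p * bn s) + -(p ^ 2 * an s) := by ring
    show |c s - p * bn s - p ^ 2 * an s| ≤ _
    rw [he]
    exact h3.trans (add_le_add (add_le_add (hCc s) m1) m2)
  have bddB : BddAbove (range fun t => |2 * p * an t + bn t|) := by
    refine ⟨2 * |p| * Ca + Cb, ?_⟩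
    rintro _ ⟨s, rfl⟩
    show |2 * p * an s + bn s| ≤ _
    refine (abs_add_le _ _).trans (add_le_add ?_ (hCb s))
    rw [abs_mul, abs_mul, abs_two]
    exact mul_le_mul_of_nonneg_left (hCa s) (by positivity)
  have hA : |an t| ≤ ⨆ s, |an s| := le_ciSup bddA t
  have h1 : |deriv φ xn / φ xn| ≤ ⨆ x, |deriv φ x / φ x| := le_ciSup bdd1 xn
  have h2 : |deriv (deriv φ) xn / φ xn| ≤ ⨆ x, |deriv (deriv φ) x / φ x| := le_ciSup bdd2 xn
  have hCt : |c t - p * bn t - p ^ 2 * an t| ≤ ⨆ s, |c s - p * bn s - p ^ 2 * an s| := le_ciSup bddC t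
  have hBt : |2 * p * an t + bn t| ≤ ⨆ s, |2 * p * an s + bn s| := le_ciSup bddB t
  have hA0 : (0:ℝ) ≤ ⨆ s, |an s| := le_trans (abs_nonneg _) hA
  have h10 : (0:ℝ) ≤ ⨆ x, |deriv φ x / φ x| := le_trans (abs_nonneg _) h1
  have e1 : - (an t * (deriv (deriv φ) xn / φ xn)) ≤ (⨆ s, |an s|) * (⨆ x, |deriv (deriv φ) x / φ x|) :=
    (neg_le_abs _).trans ((abs_mul _ _).le.trans
      (mul_le_mul hA h2 (abs_nonneg _) hA0))
  have e2 : 2 * an t * (deriv φ xn / φ xn) ^ 2 ≤ 2 * (⨆ s, |an s|) * (⨆ x, |deriv φ x / φ x|) ^ 2 := by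
    have s1 : an t * (deriv φ xn / φ xn) ^ 2 ≤ |an t| * |deriv φ xn / φ xn| ^ 2 := by
      rw [sq_abs]
      exact mul_le_mul_of_nonneg_right (le_abs_self _) (sq_nonneg _)
    have s2 : |an t| * |deriv φ xn / φ xn| ^ 2 ≤ (⨆ s, |an s|) * (⨆ x, |deriv φ x / φ x|) ^ 2 :=
      mul_le_mul hA (pow_le_pow_left₀ (abs_nonneg _) h1 2) (by positivity) hA0
    nlinarith [s1.trans s2]
  have e3 : - (2 * (c t - p * bn t - p ^ 2 * an t)) ≤ 2 * (⨆ s, |c s - p * bn s - p ^ 2 * an s|) := by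
    nlinarith [neg_le_abs (c t - p * bn t - p ^ 2 * an t), hCt]
  have e4 : (2 * p * an t + bn t) * (deriv φ xn / φ xn) ≤ (⨆ s, |2 * p * an s + bn s|) * (⨆ x, |deriv φ x / φ x|) :=
    (le_abs_self _).trans ((abs_mul _ _).le.trans
      (mul_le_mul hBt h1 (abs_nonneg _) (le_trans (abs_nonneg _) hBt)))
  have hd := hϕ_decay t ht
  rw [hΓ] at hd
  linarith

theorem hasFDerivAt_phi_comp {n : ℕ} (φ : ℝ → ℝ) (hφd : Differentiable ℝ φ)
    (y : Fin (n+1) → ℝ) :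
    HasFDerivAt (fun z : Fin (n+1) → ℝ => φ (z (Fin.last n)))
      (deriv φ (y (Fin.last n)) • ContinuousLinearMap.proj (R := ℝ) (φ := fun _ : Fin (n+1) => ℝ) (Fin.last n)) y :=
  ((hφd (y (Fin.last n))).hasDerivAt).comp_hasFDerivAt y
    (hasFDerivAt_apply (Fin.last n) y)

theorem pd1_formula {n : ℕ} (φ : ℝ → ℝ) (hφd : Differentiable ℝ φ)
    (g : (Fin (n+1) → ℝ) → ℝ) (y : Fin (n+1) → ℝ) (hg : DifferentiableAt ℝ g y)
    (C : ℝ) (i : Fin (n+1)) :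
    pd1 i (fun z => g z ^ 2 * φ (z (Fin.last n)) * C) y
      = (2 * g y * pd1 i g y * φ (y (Fin.last n))
         + g y ^ 2 * (if i = Fin.last n then deriv φ (y (Fin.last n)) else 0)) * C := by
  have hfe : (fun z => g z ^ 2 * φ (z (Fin.last n)) * C)
      = fun z => g z * g z * φ (z (Fin.last n)) * C := by
    funext z; ring
  have hsq : HasFDerivAt (fun z => g z * g z)
      (g y • fderiv ℝ g y + g y • fderiv ℝ g y) y :=
    hg.hasFDerivAt.mul hg.hasFDerivAt
  have hmul : HasFDerivAt (fun z => g z * g z * φ (z (Fin.last n)) * C) _ y :=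
    (hsq.mul (hasFDerivAt_phi_comp φ hφd y)).mul_const C
  rw [pd1, hfe, hmul.fderiv]
  simp only [ContinuousLinearMap.coe_smul', Pi.smul_apply, ContinuousLinearMap.add_apply,
    ContinuousLinearMap.smul_apply, ContinuousLinearMap.proj_apply, Pi.single_apply,
    smul_eq_mul, pd1]
  rcases eq_or_ne i (Fin.last n) with h | h
  · subst h; simp; ring
  · simp [h, Ne.symm h]; ring

theorem deriv_contDiff_one {φ : ℝ → ℝ} (hφ : ContDiff ℝ 2 φ) : ContDiff ℝ 1 (deriv φ) := by
  rw [show (2 : WithTop ℕ∞) = 1 + 1 from rfl, contDiff_succ_iff_deriv] at hφ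
  exact hφ.2.2

theorem pd2_formula {n : ℕ} (φ : ℝ → ℝ) (hφ : ContDiff ℝ 2 φ)
    (U : Set (Fin (n+1) → ℝ)) (hU : IsOpen U)
    (g : (Fin (n+1) → ℝ) → ℝ) (hg : ContDiffOn ℝ 2 g U)
    (x : Fin (n+1) → ℝ) (hx : x ∈ U) (C : ℝ) (i j : Fin (n+1)) :
    pd2 i j (fun z => g z ^ 2 * φ (z (Fin.last n)) * C) x
      = (2 * pd1 i g x * pd1 j g x * φ (x (Fin.last n))
         + 2 * g x * pd2 i j g x * φ (x (Fin.last n))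
         + 2 * g x * pd1 j g x * (if i = Fin.last n then deriv φ (x (Fin.last n)) else 0)
         + 2 * g x * pd1 i g x * (if j = Fin.last n then deriv φ (x (Fin.last n)) else 0)
         + g x ^ 2 * (if i = Fin.last n then (1:ℝ) else 0) * (if j = Fin.last n then (1:ℝ) else 0)
             * deriv (deriv φ) (x (Fin.last n))) * C := by
  have hφd : Differentiable ℝ φ := hφ.differentiable (by norm_num)
  have hφ' : Differentiable ℝ (deriv φ) := (deriv_contDiff_one hφ).differentiable (by norm_num)
  have hgdiff : ∀ y ∈ U, DifferentiableAt ℝ g y := fun y hy =>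
    (hg.contDiffAt (hU.mem_nhds hy)).differentiableAt (by norm_num)
  set dj : ℝ := if j = Fin.last n then (1:ℝ) else 0 with hdj
  set F : (Fin (n+1) → ℝ) → ℝ := fun y =>
    (2 * g y * pd1 j g y * φ (y (Fin.last n))
      + g y * g y * (dj * deriv φ (y (Fin.last n)))) * C with hF
  have hev : (fun y => pd1 j (fun z => g z ^ 2 * φ (z (Fin.last n)) * C) y) =ᶠ[nhds x] F := by
    filter_upwards [hU.mem_nhds hx] with y hy
    rw [pd1_formula φ hφd g y (hgdiff y hy) C j, hF, hdj]
    rcases eq_or_ne j (Fin.last n) with h | h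
    · simp only [if_pos h]; ring
    · simp only [if_neg h]; ring
  have hstep : pd2 i j (fun z => g z ^ 2 * φ (z (Fin.last n)) * C) x = pd1 i F x := by
    show fderiv ℝ (fun y => pd1 j (fun z => g z ^ 2 * φ (z (Fin.last n)) * C) y) x (Pi.single i 1)
      = fderiv ℝ F x (Pi.single i 1)
    rw [hev.fderiv_eq]
  rw [hstep]
  have hfd : ContDiffAt ℝ 1 (fderiv ℝ g) x :=
    (hg.contDiffAt (hU.mem_nhds hx)).fderiv_right (by norm_num)
  have hDgj : DifferentiableAt ℝ (fun y => pd1 j g y) x :=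
    (hfd.differentiableAt (by norm_num)).clm_apply (differentiableAt_const (Pi.single j 1))
  set Lj := fderiv ℝ (fun y => pd1 j g y) x with hLj
  have hDgjF : HasFDerivAt (fun y => pd1 j g y) Lj x := hDgj.hasFDerivAt
  have hgx : HasFDerivAt g (fderiv ℝ g x) x := (hgdiff x hx).hasFDerivAt
  have hφc : HasFDerivAt (fun z : Fin (n+1) → ℝ => φ (z (Fin.last n)))
      (deriv φ (x (Fin.last n)) • ContinuousLinearMap.proj (R := ℝ) (φ := fun _ : Fin (n+1) => ℝ) (Fin.last n)) x :=
    hasFDerivAt_phi_comp φ hφd x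
  have hφ'c : HasFDerivAt (fun z : Fin (n+1) → ℝ => deriv φ (z (Fin.last n)))
      (deriv (deriv φ) (x (Fin.last n)) • ContinuousLinearMap.proj (R := ℝ) (φ := fun _ : Fin (n+1) => ℝ) (Fin.last n)) x :=
    hasFDerivAt_phi_comp (deriv φ) hφ' x
  have t1 : HasFDerivAt (fun y => 2 * g y) ((2:ℝ) • fderiv ℝ g x) x := hgx.const_mul 2
  have t2 := t1.mul hDgjF
  have t3 := t2.mul hφc
  have u1 := hgx.mul hgx
  have u2 := hφ'c.const_mul dj
  have u3 := u1.mul u2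
  have total : HasFDerivAt F _ x := (t3.add u3).mul_const C
  rw [pd1, total.fderiv]
  simp only [ContinuousLinearMap.coe_smul', Pi.smul_apply, ContinuousLinearMap.add_apply, Pi.mul_apply,
    ContinuousLinearMap.smul_apply, ContinuousLinearMap.proj_apply, Pi.single_apply,
    smul_eq_mul]
  have hLjapp : Lj (Pi.single i 1) = pd2 i j g x := rfl
  have hfgapp : fderiv ℝ g x (Pi.single i 1) = pd1 i g x := rfl
  rw [hLjapp, hfgapp, hdj]
  rcases eq_or_ne i (Fin.last n) with hi | hi <;> rcases eq_or_ne j (Fin.last n) with hj | hj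
  · simp only [if_pos hi, if_pos hj, if_pos hi.symm]; ring
  · simp only [if_pos hi, if_neg hj, if_pos hi.symm]; ring
  · simp only [if_neg hi, if_pos hj, if_neg (Ne.symm hi)]; ring
  · simp only [if_neg hi, if_neg hj, if_neg (Ne.symm hi)]; ring

theorem double_sum_lemma {n : ℕ} (N : Fin (n+1)) (α : Fin (n+1) → Fin (n+1) → ℝ)
    (D : Fin (n+1) → ℝ) (D2 : Fin (n+1) → Fin (n+1) → ℝ) (c1 c2 c3 c3' c4 : ℝ) :
    ∑ i, ∑ j, α i j * (c1 * D i * D j + c2 * D2 i j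
        + c3 * D j * (if i = N then (1:ℝ) else 0) + c3' * D i * (if j = N then (1:ℝ) else 0)
        + c4 * (if i = N then (1:ℝ) else 0) * (if j = N then (1:ℝ) else 0))
    = c1 * (∑ i, ∑ j, α i j * D i * D j) + c2 * (∑ i, ∑ j, α i j * D2 i j)
      + c3 * (∑ j, α N j * D j) + c3' * (∑ i, α i N * D i) + c4 * α N N := by
  have key : ∀ i, ∑ j, α i j * (c1 * D i * D j + c2 * D2 i j
        + c3 * D j * (if i = N then (1:ℝ) else 0) + c3' * D i * (if j = N then (1:ℝ) else 0)
        + c4 * (if i = N then (1:ℝ) else 0) * (if j = N then (1:ℝ) else 0))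
      = c1 * D i * (∑ j, α i j * D j) + c2 * (∑ j, α i j * D2 i j)
        + (if i = N then (1:ℝ) else 0) * c3 * (∑ j, α i j * D j)
        + c3' * D i * α i N + c4 * (if i = N then (1:ℝ) else 0) * α i N := by
    intro i
    have hpt : ∀ j, α i j * (c1 * D i * D j + c2 * D2 i j
        + c3 * D j * (if i = N then (1:ℝ) else 0) + c3' * D i * (if j = N then (1:ℝ) else 0)
        + c4 * (if i = N then (1:ℝ) else 0) * (if j = N then (1:ℝ) else 0))
      = c1 * D i * (α i j * D j) + c2 * (α i j * D2 i j)
        + (if i = N then (1:ℝ) else 0) * c3 * (α i j * D j)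
        + (if j = N then c3' * D i * α i j else 0)
        + (if j = N then c4 * (if i = N then (1:ℝ) else 0) * α i j else 0) := by
      intro j
      rcases eq_or_ne j N with h | h
      · simp only [if_pos h]; ring
      · simp only [if_neg h]; ring
    rw [Finset.sum_congr rfl fun j _ => hpt j]
    rw [Finset.sum_add_distrib, Finset.sum_add_distrib, Finset.sum_add_distrib,
      Finset.sum_add_distrib]
    rw [Finset.sum_ite_eq' Finset.univ N (fun j => c3' * D i * α i j),
      Finset.sum_ite_eq' Finset.univ N (fun j => c4 * (if i = N then (1:ℝ) else 0) * α i j)]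
    rw [← Finset.mul_sum, ← Finset.mul_sum, ← Finset.mul_sum]
    simp
  rw [Finset.sum_congr rfl fun i _ => key i]
  rw [Finset.sum_add_distrib, Finset.sum_add_distrib, Finset.sum_add_distrib,
    Finset.sum_add_distrib]
  have e3 : ∑ i, (if i = N then (1:ℝ) else 0) * c3 * (∑ j, α i j * D j)
      = c3 * (∑ j, α N j * D j) := by
    have hpt : ∀ i, (if i = N then (1:ℝ) else 0) * c3 * (∑ j, α i j * D j)
        = (if i = N then c3 * (∑ j, α i j * D j) else 0) := fun i => by
      rcases eq_or_ne i N with h | h <;> simp [h]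
    rw [Finset.sum_congr rfl fun i _ => hpt i,
      Finset.sum_ite_eq' Finset.univ N (fun i => c3 * (∑ j, α i j * D j))]
    simp
  have e4 : ∑ i, c4 * (if i = N then (1:ℝ) else 0) * α i N = c4 * α N N := by
    have hpt : ∀ i, c4 * (if i = N then (1:ℝ) else 0) * α i N
        = (if i = N then c4 * α i N else 0) := fun i => by
      rcases eq_or_ne i N with h | h <;> simp [h]
    rw [Finset.sum_congr rfl fun i _ => hpt i,
      Finset.sum_ite_eq' Finset.univ N (fun i => c4 * α i N)]
    simp
  rw [e3, e4]
  have e5 : ∑ i, c1 * D i * ∑ j, α i j * D j = c1 * ∑ i, ∑ j, α i j * D i * D j := by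
    rw [Finset.mul_sum]
    refine Finset.sum_congr rfl fun i _ => ?_
    rw [Finset.mul_sum, Finset.mul_sum]
    exact Finset.sum_congr rfl fun j _ => by ring
  have e6 : ∑ i, c2 * ∑ j, α i j * D2 i j = c2 * ∑ i, ∑ j, α i j * D2 i j := by
    rw [Finset.mul_sum]
  have e7 : ∑ i, c3' * D i * α i N = c3' * ∑ i, α i N * D i := by
    rw [Finset.mul_sum]
    exact Finset.sum_congr rfl fun i _ => by ring
  rw [e5, e6, e7]

theorem deriv_t_formula (f ϕ : ℝ → ℝ) (t T : ℝ) (ht : t ∈ Set.Ioo (0:ℝ) T)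
    (hf : ContDiffOn ℝ 1 f (Set.Ioo 0 T)) (hϕ : ContDiff ℝ 1 ϕ) (K : ℝ) :
    deriv (fun s => f s ^ 2 * K * ϕ s) t
      = 2 * f t * deriv f t * K * ϕ t + f t ^ 2 * K * deriv ϕ t := by
  have hfd : DifferentiableAt ℝ f t :=
    (hf.contDiffAt (isOpen_Ioo.mem_nhds ht)).differentiableAt (by norm_num)
  have hft : HasDerivAt f (deriv f t) t := hfd.hasDerivAt
  have hϕt : HasDerivAt ϕ (deriv ϕ t) t := (hϕ.differentiable (by norm_num) t).hasDerivAt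
  have hfe : (fun s => f s ^ 2 * K * ϕ s) = fun s => f s * f s * K * ϕ s := by
    funext s; ring
  have h : HasDerivAt (fun s => f s * f s * K * ϕ s)
      ((deriv f t * f t + f t * deriv f t) * K * ϕ t + f t * f t * K * deriv ϕ t) t :=
    (((hft.mul hft).mul_const K).mul hϕt)
  rw [hfe, h.deriv]
  ring

theorem final_algebra (G νt DN Q S2 A W R Fφ Fφ' Fφ'' Pt Pt' aNN bN ct p : ℝ)
    (hFφ : 0 < Fφ) (hPt : 0 < Pt) (hQ : 0 ≤ Q)
    (hW : W + aNN * DN = A)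
    (hpde : νt - S2 + R + (2*p*aNN + bN)*DN + (ct - p*bN - p^2*aNN)*G = 0)
    (hB : Pt'/Pt - aNN*(Fφ''/Fφ) + 2*aNN*(Fφ'/Fφ)^2 - 2*(ct - p*bN - p^2*aNN)
          + (2*p*aNN + bN)*(Fφ'/Fφ) ≤ 0) :
    (2*G*νt*Fφ*Pt + G^2*Fφ*Pt')
    - ((2*Fφ*Pt)*Q + (2*G*Fφ*Pt)*S2 + (2*G*Fφ'*Pt)*A + (2*G*Fφ'*Pt)*A + (G^2*Fφ''*Pt)*aNN)
    + ((2*G*Fφ*Pt)*R + (4*G*Pt*(Fφ'/Fφ)*Fφ)*W)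
    + (2*p*aNN + bN + 2*aNN*(Fφ'/Fφ)) * ((2*G*DN*Fφ + G^2*Fφ')*Pt) ≤ 0 := by
  have hνt : νt = S2 - R - (2*p*aNN+bN)*DN - (ct-p*bN-p^2*aNN)*G := by linarith
  have hWA : W = A - aNN*DN := by linarith
  have key : (2*G*νt*Fφ*Pt + G^2*Fφ*Pt')
    - ((2*Fφ*Pt)*Q + (2*G*Fφ*Pt)*S2 + (2*G*Fφ'*Pt)*A + (2*G*Fφ'*Pt)*A + (G^2*Fφ''*Pt)*aNN)
    + ((2*G*Fφ*Pt)*R + (4*G*Pt*(Fφ'/Fφ)*Fφ)*W)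
    + (2*p*aNN + bN + 2*aNN*(Fφ'/Fφ)) * ((2*G*DN*Fφ + G^2*Fφ')*Pt)
      = -(2*Fφ*Pt*Q) + G^2*Fφ*Pt*(Pt'/Pt - aNN*(Fφ''/Fφ) + 2*aNN*(Fφ'/Fφ)^2
          - 2*(ct - p*bN - p^2*aNN) + (2*p*aNN + bN)*(Fφ'/Fφ)) := by
    rw [hνt, hWA]
    field_simp
    ring
  rw [key]
  have h1 : 0 ≤ 2*Fφ*Pt*Q := by positivity
  have h2 : G^2*Fφ*Pt*(Pt'/Pt - aNN*(Fφ''/Fφ) + 2*aNN*(Fφ'/Fφ)^2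
      - 2*(ct - p*bN - p^2*aNN) + (2*p*aNN + bN)*(Fφ'/Fφ)) ≤ 0 :=
    mul_nonpos_of_nonneg_of_nonpos (by positivity) hB
  linarith
theorem part2_aux {n : ℕ} (T p : ℝ)
    (a : Fin (n+1) → Fin (n+1) → ℝ → ℝ) (b : Fin (n+1) → ℝ → ℝ) (c : ℝ → ℝ)
    (ha_symm : ∀ i j t, a i j t = a j i t)
    (φ : ℝ → ℝ) (hφ : ContDiff ℝ 2 φ) (hφ_pos : ∀ x, 0 < φ x)
    (ϕ : ℝ → ℝ) (hϕ : ContDiff ℝ 1 ϕ) (hϕ_pos : ∀ t ∈ Icc (0:ℝ) T, 0 < ϕ t)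
    (hbracket : ∀ t ∈ Icc (0:ℝ) T, ∀ xn : ℝ,
      deriv ϕ t / ϕ t - a (Fin.last n) (Fin.last n) t * (deriv (deriv φ) xn / φ xn)
        + 2 * a (Fin.last n) (Fin.last n) t * (deriv φ xn / φ xn) ^ 2
        - 2 * (c t - p * b (Fin.last n) t - p ^ 2 * a (Fin.last n) (Fin.last n) t)
        + (2 * p * a (Fin.last n) (Fin.last n) t + b (Fin.last n) t) * (deriv φ xn / φ xn) ≤ 0)
    (ha_psd : ∀ t, ∀ ξ : Fin (n+1) → ℝ, 0 ≤ ∑ i, ∑ j, a i j t * ξ i * ξ j)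
    (U : Set (Fin (n+1) → ℝ)) (hU : IsOpen U)
    (ν : (Fin (n+1) → ℝ) → ℝ → ℝ)
    (hν_x : ∀ t ∈ Ioo (0:ℝ) T, ContDiffOn ℝ 2 (fun x => ν x t) U)
    (hν_t : ∀ x ∈ U, ContDiffOn ℝ 1 (fun s => ν x s) (Ioo 0 T))
    (hν_pde : ∀ x ∈ U, ∀ t ∈ Ioo (0:ℝ) T, transOp p a b c ν x t = 0)
    (Φ : (Fin (n+1) → ℝ) → ℝ → ℝ)
    (hΦ : ∀ x t, Φ x t = ν x t ^ 2 * φ (x (Fin.last n)) * ϕ t) :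
    ∀ x ∈ U, ∀ t ∈ Ioo (0:ℝ) T, LOp p a b φ Φ x t ≤ 0 := by
  intro x hx t ht
  have htI : t ∈ Icc (0:ℝ) T := ⟨ht.1.le, ht.2.le⟩
  have hφd : Differentiable ℝ φ := hφ.differentiable (by norm_num)
  have hg : ContDiffOn ℝ 2 (fun z => ν z t) U := hν_x t ht
  have hgdiff : DifferentiableAt ℝ (fun z => ν z t) x :=
    (hg.contDiffAt (hU.mem_nhds hx)).differentiableAt (by norm_num)
  have hΦx' : (fun y => Φ y t) = fun y => ν y t ^ 2 * φ (y (Fin.last n)) * ϕ t :=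
    funext fun y => hΦ y t
  have hΦt' : (fun s => Φ x s) = fun s => ν x s ^ 2 * φ (x (Fin.last n)) * ϕ s :=
    funext fun s => hΦ x s
  have hpd1 : ∀ i, pd1 i (fun y => Φ y t) x
      = (2 * ν x t * pd1 i (fun y => ν y t) x * φ (x (Fin.last n))
         + ν x t ^ 2 * (if i = Fin.last n then deriv φ (x (Fin.last n)) else 0)) * ϕ t := by
    intro i
    rw [hΦx']
    exact pd1_formula φ hφd (fun z => ν z t) x hgdiff (ϕ t) i
  have hpd2 : ∀ i j, pd2 i j (fun y => Φ y t) x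
      = (2 * pd1 i (fun y => ν y t) x * pd1 j (fun y => ν y t) x * φ (x (Fin.last n))
         + 2 * ν x t * pd2 i j (fun y => ν y t) x * φ (x (Fin.last n))
         + 2 * ν x t * pd1 j (fun y => ν y t) x * (if i = Fin.last n then deriv φ (x (Fin.last n)) else 0)
         + 2 * ν x t * pd1 i (fun y => ν y t) x * (if j = Fin.last n then deriv φ (x (Fin.last n)) else 0)
         + ν x t ^ 2 * (if i = Fin.last n then (1:ℝ) else 0) * (if j = Fin.last n then (1:ℝ) else 0)
             * deriv (deriv φ) (x (Fin.last n))) * ϕ t := by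
    intro i j
    rw [hΦx']
    exact pd2_formula φ hφ U hU (fun z => ν z t) hg x hx (ϕ t) i j
  have hdt : deriv (fun s => Φ x s) t
      = 2 * ν x t * deriv (fun s => ν x s) t * φ (x (Fin.last n)) * ϕ t
        + ν x t ^ 2 * φ (x (Fin.last n)) * deriv ϕ t := by
    rw [hΦt']
    exact deriv_t_formula (fun s => ν x s) ϕ t T ht (hν_t x hx) hϕ (φ (x (Fin.last n)))
  -- double sum
  have hform : ∀ i j, a i j t * pd2 i j (fun y => Φ y t) x
      = a i j t * ((2 * φ (x (Fin.last n)) * ϕ t) * pd1 i (fun y => ν y t) x * pd1 j (fun y => ν y t) x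
          + (2 * ν x t * φ (x (Fin.last n)) * ϕ t) * pd2 i j (fun y => ν y t) x
          + (2 * ν x t * deriv φ (x (Fin.last n)) * ϕ t) * pd1 j (fun y => ν y t) x * (if i = Fin.last n then (1:ℝ) else 0)
          + (2 * ν x t * deriv φ (x (Fin.last n)) * ϕ t) * pd1 i (fun y => ν y t) x * (if j = Fin.last n then (1:ℝ) else 0)
          + (ν x t ^ 2 * deriv (deriv φ) (x (Fin.last n)) * ϕ t) * (if i = Fin.last n then (1:ℝ) else 0) * (if j = Fin.last n then (1:ℝ) else 0)) := by
    intro i j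
    rw [hpd2 i j]
    rcases eq_or_ne i (Fin.last n) with hi | hi <;> rcases eq_or_ne j (Fin.last n) with hj | hj <;>
      simp only [if_pos, if_neg, hi, hj] <;> ring_nf <;>
      simp [hi, hj] <;> ring
  have hsum2 : ∑ i, ∑ j, a i j t * pd2 i j (fun y => Φ y t) x
      = (2 * φ (x (Fin.last n)) * ϕ t) * (∑ i, ∑ j, a i j t * pd1 i (fun y => ν y t) x * pd1 j (fun y => ν y t) x)
        + (2 * ν x t * φ (x (Fin.last n)) * ϕ t) * (∑ i, ∑ j, a i j t * pd2 i j (fun y => ν y t) x)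
        + (2 * ν x t * deriv φ (x (Fin.last n)) * ϕ t) * (∑ j, a (Fin.last n) j t * pd1 j (fun y => ν y t) x)
        + (2 * ν x t * deriv φ (x (Fin.last n)) * ϕ t) * (∑ i, a i (Fin.last n) t * pd1 i (fun y => ν y t) x)
        + (ν x t ^ 2 * deriv (deriv φ) (x (Fin.last n)) * ϕ t) * a (Fin.last n) (Fin.last n) t := by
    rw [Finset.sum_congr rfl fun i _ => Finset.sum_congr rfl fun j _ => hform i j]
    exact double_sum_lemma (Fin.last n) (fun i j => a i j t)
      (fun i => pd1 i (fun y => ν y t) x) (fun i j => pd2 i j (fun y => ν y t) x)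
      (2 * φ (x (Fin.last n)) * ϕ t) (2 * ν x t * φ (x (Fin.last n)) * ϕ t)
      (2 * ν x t * deriv φ (x (Fin.last n)) * ϕ t) (2 * ν x t * deriv φ (x (Fin.last n)) * ϕ t)
      (ν x t ^ 2 * deriv (deriv φ) (x (Fin.last n)) * ϕ t)
  have hAA : (∑ j, a (Fin.last n) j t * pd1 j (fun y => ν y t) x)
      = ∑ i, a i (Fin.last n) t * pd1 i (fun y => ν y t) x :=
    Finset.sum_congr rfl fun j _ => by rw [ha_symm (Fin.last n) j t]
  -- erase sum
  have hesum : ∑ i ∈ Finset.univ.erase (Fin.last n),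
      (2 * p * a i (Fin.last n) t + b i t
        + 2 * a i (Fin.last n) t * (deriv φ (x (Fin.last n)) / φ (x (Fin.last n)))) *
        pd1 i (fun y => Φ y t) x
      = (2 * ν x t * φ (x (Fin.last n)) * ϕ t) *
          (∑ i ∈ Finset.univ.erase (Fin.last n), (2 * p * a i (Fin.last n) t + b i t) * pd1 i (fun y => ν y t) x)
        + (4 * ν x t * ϕ t * (deriv φ (x (Fin.last n)) / φ (x (Fin.last n))) * φ (x (Fin.last n))) *
          (∑ i ∈ Finset.univ.erase (Fin.last n), a i (Fin.last n) t * pd1 i (fun y => ν y t) x) := by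
    have hpt : ∀ i ∈ Finset.univ.erase (Fin.last n),
        (2 * p * a i (Fin.last n) t + b i t
          + 2 * a i (Fin.last n) t * (deriv φ (x (Fin.last n)) / φ (x (Fin.last n)))) *
          pd1 i (fun y => Φ y t) x
        = (2 * ν x t * φ (x (Fin.last n)) * ϕ t) * ((2 * p * a i (Fin.last n) t + b i t) * pd1 i (fun y => ν y t) x)
          + (4 * ν x t * ϕ t * (deriv φ (x (Fin.last n)) / φ (x (Fin.last n))) * φ (x (Fin.last n))) *
            (a i (Fin.last n) t * pd1 i (fun y => ν y t) x) := by
      intro i hi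
      have hiN : i ≠ Fin.last n := (Finset.mem_erase.mp hi).1
      rw [hpd1 i, if_neg hiN]
      ring
    rw [Finset.sum_congr rfl hpt, Finset.sum_add_distrib, ← Finset.mul_sum, ← Finset.mul_sum]
  -- pde
  have hpde0 := hν_pde x hx t ht
  unfold transOp at hpde0
  -- Q and W
  have hQ : 0 ≤ ∑ i, ∑ j, a i j t * pd1 i (fun y => ν y t) x * pd1 j (fun y => ν y t) x :=
    ha_psd t _
  have hW : (∑ i ∈ Finset.univ.erase (Fin.last n), a i (Fin.last n) t * pd1 i (fun y => ν y t) x)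
      + a (Fin.last n) (Fin.last n) t * pd1 (Fin.last n) (fun y => ν y t) x
      = ∑ i, a i (Fin.last n) t * pd1 i (fun y => ν y t) x :=
    Finset.sum_erase_add _ _ (Finset.mem_univ _)
  have hB := hbracket t htI (x (Fin.last n))
  have hFφ : 0 < φ (x (Fin.last n)) := hφ_pos _
  have hPt : 0 < ϕ t := hϕ_pos t htI
  have hpde' : deriv (fun s => ν x s) t
      - (∑ i, ∑ j, a i j t * pd2 i j (fun y => ν y t) x)
      + (∑ i ∈ Finset.univ.erase (Fin.last n), (2 * p * a i (Fin.last n) t + b i t) * pd1 i (fun y => ν y t) x)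
      + (2 * p * a (Fin.last n) (Fin.last n) t + b (Fin.last n) t) * pd1 (Fin.last n) (fun y => ν y t) x
      + (c t - p * b (Fin.last n) t - p ^ 2 * a (Fin.last n) (Fin.last n) t) * ν x t = 0 := hpde0
  -- assemble
  have hfin := final_algebra (ν x t) (deriv (fun s => ν x s) t)
    (pd1 (Fin.last n) (fun y => ν y t) x)
    (∑ i, ∑ j, a i j t * pd1 i (fun y => ν y t) x * pd1 j (fun y => ν y t) x)
    (∑ i, ∑ j, a i j t * pd2 i j (fun y => ν y t) x)
    (∑ i, a i (Fin.last n) t * pd1 i (fun y => ν y t) x)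
    (∑ i ∈ Finset.univ.erase (Fin.last n), a i (Fin.last n) t * pd1 i (fun y => ν y t) x)
    (∑ i ∈ Finset.univ.erase (Fin.last n), (2 * p * a i (Fin.last n) t + b i t) * pd1 i (fun y => ν y t) x)
    (φ (x (Fin.last n))) (deriv φ (x (Fin.last n))) (deriv (deriv φ) (x (Fin.last n)))
    (ϕ t) (deriv ϕ t)
    (a (Fin.last n) (Fin.last n) t) (b (Fin.last n) t) (c t) p
    hFφ hPt hQ hW (by linarith [hpde']) hB
  unfold LOp
  rw [hdt, hsum2, hAA, hesum, hpd1 (Fin.last n), if_pos rfl]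
  linarith [hfin]

/-- with `Γ` built from the sup-norms of the coefficients and of
`φ'/φ, φ''/φ`, any strictly positive C¹ weight `ϕ` with `ϕ'/ϕ ≤ −Γ` on `[0,T]`
makes the zeroth-order bracket nonpositive; consequently `𝓛Φ ≤ 0` for
`Φ = ν² φ(xₙ) ϕ(t)` whenever `𝒫ₚν = 0` and `(aᵢⱼ)` is positive semidefinite. -/
theorem bracket_nonpos_and_LOp_nonpos
    {n : ℕ} (T p : ℝ) (hT : 0 < T)
    (a : Fin (n+1) → Fin (n+1) → ℝ → ℝ) (b : Fin (n+1) → ℝ → ℝ) (c : ℝ → ℝ)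
    (ha_symm : ∀ i j t, a i j t = a j i t)
    (ha_smooth : ∀ i j, ContDiff ℝ (⊤ : ℕ∞) (a i j))
    (ha_bdd : ∀ i j, ∃ C, ∀ t, |a i j t| ≤ C)
    (hb_smooth : ∀ i, ContDiff ℝ (⊤ : ℕ∞) (b i))
    (hb_bdd : ∀ i, ∃ C, ∀ t, |b i t| ≤ C)
    (hc_smooth : ContDiff ℝ (⊤ : ℕ∞) c)
    (hc_bdd : ∃ C, ∀ t, |c t| ≤ C)
    (φ : ℝ → ℝ) (hφ : ContDiff ℝ 2 φ) (hφ_pos : ∀ x, 0 < φ x)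
    (hφ1 : ∃ C, ∀ x, |deriv φ x / φ x| ≤ C)
    (hφ2 : ∃ C, ∀ x, |deriv (deriv φ) x / φ x| ≤ C)
    (Γ : ℝ)
    (hΓ : Γ = (⨆ t, |a (Fin.last n) (Fin.last n) t|) *
            (⨆ x, |deriv (deriv φ) x / φ x|)
          + 2 * (⨆ t, |a (Fin.last n) (Fin.last n) t|) * (⨆ x, |deriv φ x / φ x|) ^ 2
          + 2 * (⨆ t, |c t - p * b (Fin.last n) t
                        - p ^ 2 * a (Fin.last n) (Fin.last n) t|)
          + (⨆ t, |2 * p * a (Fin.last n) (Fin.last n) t + b (Fin.last n) t|) *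
            (⨆ x, |deriv φ x / φ x|))
    (ϕ : ℝ → ℝ) (hϕ : ContDiff ℝ 1 ϕ)
    (hϕ_pos : ∀ t ∈ Icc (0:ℝ) T, 0 < ϕ t)
    (hϕ_decay : ∀ t ∈ Icc (0:ℝ) T, deriv ϕ t / ϕ t ≤ -Γ) :
    (∀ t ∈ Icc (0:ℝ) T, ∀ xn : ℝ,
      deriv ϕ t / ϕ t
        - a (Fin.last n) (Fin.last n) t * (deriv (deriv φ) xn / φ xn)
        + 2 * a (Fin.last n) (Fin.last n) t * (deriv φ xn / φ xn) ^ 2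
        - 2 * (c t - p * b (Fin.last n) t - p ^ 2 * a (Fin.last n) (Fin.last n) t)
        + (2 * p * a (Fin.last n) (Fin.last n) t + b (Fin.last n) t) *
            (deriv φ xn / φ xn) ≤ 0)
    ∧ (∀ (ha_psd : ∀ t, ∀ ξ : Fin (n+1) → ℝ, 0 ≤ ∑ i, ∑ j, a i j t * ξ i * ξ j)
        (U : Set (Fin (n+1) → ℝ)) (hU : IsOpen U)
        (ν : (Fin (n+1) → ℝ) → ℝ → ℝ)
        (hν_x : ∀ t ∈ Ioo (0:ℝ) T, ContDiffOn ℝ 2 (fun x => ν x t) U)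
        (hν_t : ∀ x ∈ U, ContDiffOn ℝ 1 (fun s => ν x s) (Ioo 0 T))
        (hν_pde : ∀ x ∈ U, ∀ t ∈ Ioo (0:ℝ) T, transOp p a b c ν x t = 0)
        (Φ : (Fin (n+1) → ℝ) → ℝ → ℝ)
        (hΦ : ∀ x t, Φ x t = ν x t ^ 2 * φ (x (Fin.last n)) * ϕ t),
        ∀ x ∈ U, ∀ t ∈ Ioo (0:ℝ) T, LOp p a b φ Φ x t ≤ 0) := by
  refine ⟨part1_aux p T (a (Fin.last n) (Fin.last n)) (b (Fin.last n)) c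
    (ha_bdd _ _) (hb_bdd _) hc_bdd φ hφ1 hφ2 Γ hΓ ϕ hϕ_decay, ?_⟩
  intro ha_psd U hU ν hν_x hν_t hν_pde Φ hΦ
  exact part2_aux T p a b c ha_symm φ hφ hφ_pos ϕ hϕ hϕ_pos
    (part1_aux p T (a (Fin.last n) (Fin.last n)) (b (Fin.last n)) c
      (ha_bdd _ _) (hb_bdd _) hc_bdd φ hφ1 hφ2 Γ hΓ ϕ hϕ_decay)
    ha_psd U hU ν hν_x hν_t hν_pde Φ hΦ
end

section
/- (Estimate 1.) Let l ∈ {1,…,I} and let ν be continuous on cl(Ω_l × (0,T)), C^2 in x and C^1 in t in Ω_l × (0,T), satisfying: 𝒫_p ν = 0 in Ω_l × (0,T); ν = 0 on (∂D × [a_l,b_l]) × [0,T]; and ν(·,·,0) = 0 on Ω_l. Let φ be a strictly positive C^2 function with φ'/φ and φ''/φ bounded, and let ϕ be a strictly positive C^1 function on [0,T] with ϕ'(t)/ϕ(t) ≤ −Γ for all t, where Γ = sup_t|a_{n,n}| · sup|φ''/φ| + 2 sup_t|a_{n,n}| · (sup|φ'/φ|)² + 2 sup_t|c − p b_n − p²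 a_{n,n}| + sup_t|2p a_{n,n}+b_n| · sup|φ'/φ|. Then for every (X, x_n, t) ∈ cl(D) × [a_l,b_l] × [0,T]: ν(X,x_n,t)² φ(x_n) ϕ(t) ≤ max( sup_{cl(D)×[0,T]} ν(·,a_l,·)² φ(a_l) ϕ(·), sup_{cl(D)×[0,T]} ν(·,b_l,·)² φ(b_l) ϕ(·) ). -/
open Set Filter

section Helpers
open Topology

/-- At a right-endpoint maximum, the derivative is nonnegative. -/
lemma deriv_nonneg_right_max {g : ℝ → ℝ} {g' b : ℝ} (hb : 0 < b)
    (hd : HasDerivAt g g' b) (hmax : ∀ t ∈ Icc 0 b, g t ≤ g b) : 0 ≤ g' := by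
  have h1 : HasDerivWithinAt g g' (Iio b) b := hd.hasDerivWithinAt
  rw [hasDerivWithinAt_iff_tendsto_slope] at h1
  have hmem : Ioo 0 b ∈ 𝓝[Iio b \ {b}] b := by
    apply mem_nhdsWithin.2
    exact ⟨Ioi 0, isOpen_Ioi, hb, by intro t ht; exact ⟨ht.1, ht.2.1⟩⟩
  have hne : (𝓝[Iio b \ {b}] b).NeBot := by
    have h2 : Iio b \ {b} = Iio b := by
      ext t; simp only [mem_diff, mem_singleton_iff, mem_Iio]
      exact ⟨fun h => h.1, fun h => ⟨h, h.ne⟩⟩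
    rw [h2]
    exact nhdsLT_neBot b
  refine ge_of_tendsto h1 ?_
  filter_upwards [hmem] with t ht
  rw [slope_def_field]
  rw [div_nonneg_iff]
  right
  constructor
  · have := hmax t ⟨ht.1.le, ht.2.le⟩; linarith
  · linarith [ht.2]

/-- Second derivative test at a local max. -/
lemma second_deriv_nonpos {h h' : ℝ → ℝ} {q : ℝ} (hmax : IsLocalMax h 0)
    (hd : ∀ᶠ s in 𝓝 (0:ℝ), HasDerivAt h (h' s) s) (hq : HasDerivAt h' q 0) : q ≤ 0 := by
  by_contra hq'
  push_neg at hq'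
  have h0 : h' 0 = 0 := by
    have := hmax.deriv_eq_zero
    rwa [hd.self_of_nhds.deriv] at this
  have hs : ∀ᶠ s in 𝓝[>] (0:ℝ), 0 < h' s := by
    have h1 : HasDerivWithinAt h' q (Ioi 0) 0 := hq.hasDerivWithinAt
    rw [hasDerivWithinAt_iff_tendsto_slope] at h1
    have hIoi : Ioi (0:ℝ) \ {0} = Ioi 0 := by
      ext t; simp only [mem_diff, mem_singleton_iff, mem_Ioi]
      exact ⟨fun h => h.1, fun h => ⟨h, h.ne'⟩⟩
    rw [hIoi] at h1
    have h2 : ∀ᶠ s in 𝓝[>] (0:ℝ), 0 < slope h' 0 s :=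
      h1.eventually (eventually_gt_nhds hq')
    filter_upwards [h2, self_mem_nhdsWithin] with s h3 h4
    rw [slope_def_field, h0, sub_zero, sub_zero] at h3
    have hs0 : (0:ℝ) < s := h4
    calc (0:ℝ) < (h' s / s) * s := by positivity
    _ = h' s := div_mul_cancel₀ _ hs0.ne'
  rw [Metric.eventually_nhds_iff] at hd
  obtain ⟨ε1, hε1, hd⟩ := hd
  have hmax' := hmax
  rw [IsLocalMax, IsMaxFilter, Metric.eventually_nhds_iff] at hmax'
  obtain ⟨ε2, hε2, hm⟩ := hmax'
  rw [eventually_nhdsWithin_iff, Metric.eventually_nhds_iff] at hs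
  obtain ⟨ε3, hε3, hs⟩ := hs
  set δ := min (min ε1 ε2) ε3 / 2 with hδdef
  have hδ : 0 < δ := by positivity
  have hδ1 : δ < ε1 := by
    have : min (min ε1 ε2) ε3 ≤ ε1 := le_trans (min_le_left _ _) (min_le_left _ _)
    linarith
  have hδ2 : δ < ε2 := by
    have : min (min ε1 ε2) ε3 ≤ ε2 := le_trans (min_le_left _ _) (min_le_right _ _)
    linarith
  have hδ3 : δ < ε3 := by
    have : min (min ε1 ε2) ε3 ≤ ε3 := min_le_right _ _
    linarith
  have hdist : ∀ s ∈ Icc (0:ℝ) δ, dist s 0 < ε1 := by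
    intro s hsm
    rw [Real.dist_eq, sub_zero, abs_of_nonneg hsm.1]
    exact lt_of_le_of_lt hsm.2 hδ1
  have hmono : StrictMonoOn h (Icc 0 δ) := by
    apply strictMonoOn_of_deriv_pos (convex_Icc _ _)
    · intro s hsm
      exact (hd (hdist s hsm)).continuousAt.continuousWithinAt
    · intro s hsm
      rw [interior_Icc] at hsm
      rw [(hd (hdist s ⟨hsm.1.le, hsm.2.le⟩)).deriv]
      apply hs
      · rw [Real.dist_eq, sub_zero, abs_of_nonneg hsm.1.le]
        exact lt_trans hsm.2 hδ3
      · exact hsm.1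
  have hlt : h 0 < h δ := hmono (by constructor <;> simp [hδ.le]) (by constructor <;> simp [hδ.le]) hδ
  have := hm (y := δ) (by rw [Real.dist_eq, sub_zero, abs_of_nonneg hδ.le]; exact hδ2)
  linarith
end Helpers

section Calc
open Topology

variable {m : ℕ} {u v : (Fin m → ℝ) → ℝ} {x : Fin m → ℝ}

lemma single_decomp (ξ : Fin m → ℝ) : ξ = ∑ i, ξ i • (Pi.single i 1 : Fin m → ℝ) := by
  ext j
  simp [Pi.single_apply]

lemma D_mul (hu : DifferentiableAt ℝ u x) (hv : DifferentiableAt ℝ v x) (ξ : Fin m → ℝ) :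
    fderiv ℝ (fun y => u y * v y) x ξ = fderiv ℝ u x ξ * v x + u x * fderiv ℝ v x ξ := by
  rw [fderiv_fun_mul hu hv]
  simp only [ContinuousLinearMap.add_apply, ContinuousLinearMap.smul_apply, smul_eq_mul]
  ring

lemma D_eval {φ : ℝ → ℝ} {i0 : Fin m} (hφ : DifferentiableAt ℝ φ (x i0)) (ξ : Fin m → ℝ) :
    fderiv ℝ (fun y => φ (y i0)) x ξ = deriv φ (x i0) * ξ i0 := by
  have hπd : DifferentiableAt ℝ (fun y : Fin m → ℝ => y i0) x :=
    differentiableAt_apply (𝕜 := ℝ) i0 x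
  have hcomp : (fun y : Fin m → ℝ => φ (y i0)) = φ ∘ (fun y : Fin m → ℝ => y i0) := rfl
  rw [hcomp, fderiv_comp x hφ hπd]
  simp only [ContinuousLinearMap.coe_comp', Function.comp_apply]
  have hπ : fderiv ℝ (fun y : Fin m → ℝ => y i0) x ξ = ξ i0 := by
    have h5 : (fun y : Fin m → ℝ => y i0) =
      (ContinuousLinearMap.proj i0 : (Fin m → ℝ) →L[ℝ] ℝ) := rfl
    rw [h5, ContinuousLinearMap.fderiv]
    rfl
  rw [hπ, show ξ i0 = (ξ i0) • (1:ℝ) by simp, map_smul, fderiv_apply_one_eq_deriv]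
  simp [mul_comm]

lemma Diff_eval {φ : ℝ → ℝ} {i0 : Fin m} (hφ : DifferentiableAt ℝ φ (x i0)) :
    DifferentiableAt ℝ (fun y : Fin m → ℝ => φ (y i0)) x :=
  hφ.comp x (differentiableAt_apply (𝕜 := ℝ) i0 x)

lemma hasFDerivAt_fderiv_apply (hdiff : DifferentiableAt ℝ (fderiv ℝ u) x) (ξ : Fin m → ℝ) :
    HasFDerivAt (fun y => fderiv ℝ u y ξ)
      ((ContinuousLinearMap.apply ℝ ℝ ξ).comp (fderiv ℝ (fderiv ℝ u) x)) x :=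
  (ContinuousLinearMap.apply ℝ ℝ ξ).hasFDerivAt.comp x hdiff.hasFDerivAt

lemma fderiv_fderiv_apply (hdiff : DifferentiableAt ℝ (fderiv ℝ u) x) (ξ η : Fin m → ℝ) :
    fderiv ℝ (fun y => fderiv ℝ u y ξ) x η = fderiv ℝ (fderiv ℝ u) x η ξ := by
  rw [(hasFDerivAt_fderiv_apply hdiff ξ).fderiv]
  rfl

lemma pd2_eq_fderiv2 (hdiff : DifferentiableAt ℝ (fderiv ℝ u) x) (i j : Fin m) :
    pd2 i j u x = fderiv ℝ (fderiv ℝ u) x (Pi.single i 1) (Pi.single j 1) := by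
  rw [pd2, pd1]
  exact fderiv_fderiv_apply hdiff _ _

lemma quadform_eq_sum (hdiff : DifferentiableAt ℝ (fderiv ℝ u) x) (ξ : Fin m → ℝ) :
    fderiv ℝ (fderiv ℝ u) x ξ ξ = ∑ i, ∑ j, ξ i * ξ j * pd2 i j u x := by
  have hξ := single_decomp ξ
  calc fderiv ℝ (fderiv ℝ u) x ξ ξ
      = fderiv ℝ (fderiv ℝ u) x (∑ i, ξ i • (Pi.single i 1 : Fin m → ℝ))
          (∑ j, ξ j • (Pi.single j 1 : Fin m → ℝ)) := by rw [← hξ]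
    _ = ∑ i, ∑ j, ξ i * ξ j * pd2 i j u x := by
        simp only [map_sum, map_smul, ContinuousLinearMap.sum_apply,
          ContinuousLinearMap.smul_apply, ContinuousLinearMap.coe_sum', Finset.sum_apply,
          smul_eq_mul, Finset.mul_sum, Finset.sum_mul]
        rw [Finset.sum_comm]
        refine Finset.sum_congr rfl fun i _ => Finset.sum_congr rfl fun j _ => ?_
        rw [pd2_eq_fderiv2 hdiff]
        ring

variable {U : Set (Fin m → ℝ)}

/-- At an interior local max of a C² function, the Hessian quadratic form is ≤ 0. -/
lemma quadform_nonpos_at_max (hU : IsOpen U) (hu : ContDiffOn ℝ 2 u U) (hx : x ∈ U)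
    (hmax : IsLocalMax u x) (ξ : Fin m → ℝ) :
    ∑ i, ∑ j, ξ i * ξ j * pd2 i j u x ≤ 0 := by
  have hfd : ContDiffOn ℝ 1 (fderiv ℝ u) U := hu.fderiv_of_isOpen hU (by norm_num)
  have hdiff : DifferentiableAt ℝ (fderiv ℝ u) x :=
    ((hfd.differentiableOn one_ne_zero).differentiableAt (hU.mem_nhds hx))
  rw [← quadform_eq_sum hdiff ξ]
  set L : ℝ → (Fin m → ℝ) := fun s => x + s • ξ with hL
  have hLd : ∀ s : ℝ, HasDerivAt L ξ s := by
    intro s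
    simpa [hL] using ((hasDerivAt_id s).smul_const ξ).const_add x
  have hLcont : Continuous L := by
    continuity
  have hL0 : L 0 = x := by simp [hL]
  have hLten : Tendsto L (𝓝 0) (𝓝 x) := by
    rw [← hL0]; exact hLcont.continuousAt
  have hLU : ∀ᶠ s in 𝓝 (0:ℝ), L s ∈ U := hLten.eventually (hU.mem_nhds hx)
  have hmax' : IsLocalMax (u ∘ L) 0 := by
    have := hLten.eventually hmax
    simpa [IsLocalMax, IsMaxFilter, hL0] using this
  have hd : ∀ᶠ s in 𝓝 (0:ℝ), HasDerivAt (u ∘ L) (fderiv ℝ u (L s) ξ) s := by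
    filter_upwards [hLU] with s hsU
    have hdu : DifferentiableAt ℝ u (L s) :=
      (hu.differentiableOn (by norm_num)).differentiableAt (hU.mem_nhds hsU)
    exact hdu.hasFDerivAt.comp_hasDerivAt s (hLd s)
  have hq : HasDerivAt (fun s => fderiv ℝ u (L s) ξ) (fderiv ℝ (fderiv ℝ u) x ξ ξ) 0 := by
    have h1 := hasFDerivAt_fderiv_apply hdiff ξ
    have h1' : HasFDerivAt (fun y => fderiv ℝ u y ξ)
        ((ContinuousLinearMap.apply ℝ ℝ ξ).comp (fderiv ℝ (fderiv ℝ u) x)) (L 0) := by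
      rw [hL0]; exact h1
    have h3 := h1'.comp_hasDerivAt 0 (hLd 0)
    exact h3
  exact second_deriv_nonpos hmax' hd hq

open scoped MatrixOrder in
/-- Trace inequality: A psd, H with nonpositive quadratic form ⇒ Σ A_ij H_ij ≤ 0. -/
lemma trace_nonpos {k : ℕ} {A : Matrix (Fin k) (Fin k) ℝ} (hA : A.PosSemidef)
    (H : Fin k → Fin k → ℝ)
    (hH : ∀ ξ : Fin k → ℝ, ∑ i, ∑ j, ξ i * ξ j * H i j ≤ 0) :
    ∑ i, ∑ j, A i j * H i j ≤ 0 := by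
  set S := CFC.sqrt A with hS
  have hSS : S * S = A := CFC.sqrt_mul_sqrt_self A hA.nonneg
  have hSsymm : ∀ i j, S i j = S j i := by
    intro i j
    have hh := (Matrix.nonneg_iff_posSemidef.mp (CFC.sqrt_nonneg A)).1
    calc S i j = S.conjTranspose i j := by rw [hh]
    _ = S j i := by simp [Matrix.conjTranspose_apply]
  have key : ∑ i, ∑ j, A i j * H i j = ∑ l, ∑ i, ∑ j, (S i l) * (S j l) * H i j := by
    calc ∑ i, ∑ j, A i j * H i j
        = ∑ i, ∑ j, ∑ l, (S i l) * (S j l) * H i j := by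
          refine Finset.sum_congr rfl fun i _ => Finset.sum_congr rfl fun j _ => ?_
          rw [← hSS, Matrix.mul_apply, Finset.sum_mul]
          exact Finset.sum_congr rfl fun l _ => by rw [hSsymm l j]
      _ = ∑ i, ∑ l, ∑ j, (S i l) * (S j l) * H i j :=
          Finset.sum_congr rfl fun i _ => Finset.sum_comm
      _ = ∑ l, ∑ i, ∑ j, (S i l) * (S j l) * H i j := Finset.sum_comm
  rw [key]
  apply Finset.sum_nonpos
  intro l _
  exact hH (fun i => S i l)
end Calc

section WCalc
open Topology
variable {n : ℕ} {U : Set (Fin (n+1) → ℝ)} {f : (Fin (n+1) → ℝ) → ℝ} {φ : ℝ → ℝ}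
  {x₀ : Fin (n+1) → ℝ}

/-- first derivative of `wσ = f·f·φ(y_last)` -/
lemma pd1_wσ (hU : IsOpen U) (hf : ContDiffOn ℝ 2 f U) (hφ : ContDiff ℝ 2 φ)
    (hy : x₀ ∈ U) (j : Fin (n+1)) :
    pd1 j (fun y => f y * f y * φ (y (Fin.last n))) x₀ =
      2 * f x₀ * pd1 j f x₀ * φ (x₀ (Fin.last n))
      + f x₀ * f x₀ * (deriv φ (x₀ (Fin.last n)) * (Pi.single j 1 : Fin (n+1) → ℝ) (Fin.last n)) := by
  have hfd : DifferentiableAt ℝ f x₀ :=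
    (hf.differentiableOn (by norm_num)).differentiableAt (hU.mem_nhds hy)
  have hgd : DifferentiableAt ℝ (fun y : Fin (n+1) → ℝ => φ (y (Fin.last n))) x₀ :=
    Diff_eval ((hφ.differentiable (by norm_num)).differentiableAt)
  rw [pd1, D_mul (hfd.fun_mul hfd) hgd, D_mul hfd hfd,
    D_eval ((hφ.differentiable (by norm_num)).differentiableAt)]
  show (fderiv ℝ f x₀ (Pi.single j 1) * f x₀ + f x₀ * fderiv ℝ f x₀ (Pi.single j 1)) *
      φ (x₀ (Fin.last n)) + _ = _
  rw [show fderiv ℝ f x₀ (Pi.single j 1) = pd1 j f x₀ from rfl]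
  ring

/-- second derivative of `wσ` -/
lemma pd2_wσ (hU : IsOpen U) (hf : ContDiffOn ℝ 2 f U) (hφ : ContDiff ℝ 2 φ)
    (hx₀ : x₀ ∈ U) (i j : Fin (n+1)) :
    pd2 i j (fun y => f y * f y * φ (y (Fin.last n))) x₀ =
      2 * pd1 i f x₀ * pd1 j f x₀ * φ (x₀ (Fin.last n))
      + 2 * f x₀ * pd2 i j f x₀ * φ (x₀ (Fin.last n))
      + 2 * f x₀ * pd1 j f x₀ * deriv φ (x₀ (Fin.last n)) * (Pi.single i 1 : Fin (n+1) → ℝ) (Fin.last n)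
      + 2 * f x₀ * pd1 i f x₀ * deriv φ (x₀ (Fin.last n)) * (Pi.single j 1 : Fin (n+1) → ℝ) (Fin.last n)
      + f x₀ * f x₀ * deriv (deriv φ) (x₀ (Fin.last n)) * (Pi.single i 1 : Fin (n+1) → ℝ) (Fin.last n)
          * (Pi.single j 1 : Fin (n+1) → ℝ) (Fin.last n) := by
  have hφ1 : Differentiable ℝ φ := hφ.differentiable (by norm_num)
  have hφ' : ContDiff ℝ 1 (deriv φ) := (contDiff_succ_iff_deriv.mp (by norm_num [hφ] : ContDiff ℝ (1+1) φ)).2.2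
  have hφ'd : Differentiable ℝ (deriv φ) := hφ'.differentiable (by norm_num)
  have hcong : (fun y => pd1 j (fun z => f z * f z * φ (z (Fin.last n))) y) =ᶠ[𝓝 x₀]
      (fun y => 2 * f y * (fun z => fderiv ℝ f z (Pi.single j 1)) y * φ (y (Fin.last n))
        + f y * f y * ((fun z => deriv φ (z (Fin.last n))) y * (Pi.single j 1 : Fin (n+1) → ℝ) (Fin.last n))) := by
    filter_upwards [hU.mem_nhds hx₀] with y hy
    exact pd1_wσ hU hf hφ hy j
  rw [pd2, pd1, hcong.fderiv_eq]
  have hfd : DifferentiableAt ℝ f x₀ :=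
    (hf.differentiableOn (by norm_num)).differentiableAt (hU.mem_nhds hx₀)
  have hdiff2 : DifferentiableAt ℝ (fderiv ℝ f) x₀ :=
    (((hf.fderiv_of_isOpen (m := 1) hU (by norm_num)).differentiableOn one_ne_zero).differentiableAt
      (hU.mem_nhds hx₀))
  have hFj : DifferentiableAt ℝ (fun z => fderiv ℝ f z (Pi.single j (1:ℝ))) x₀ :=
    (hasFDerivAt_fderiv_apply hdiff2 (Pi.single j 1)).differentiableAt
  have hgd : DifferentiableAt ℝ (fun y : Fin (n+1) → ℝ => φ (y (Fin.last n))) x₀ :=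
    Diff_eval hφ1.differentiableAt
  have hg'd : DifferentiableAt ℝ (fun y : Fin (n+1) → ℝ => deriv φ (y (Fin.last n))) x₀ :=
    Diff_eval hφ'd.differentiableAt
  have h2f : DifferentiableAt ℝ (fun y => 2 * f y) x₀ := hfd.const_mul 2
  rw [fderiv_fun_add (((h2f.fun_mul hFj)).fun_mul hgd) ((hfd.fun_mul hfd).fun_mul (hg'd.mul_const _))]
  show (fderiv ℝ (fun y => 2 * f y * (fderiv ℝ f y (Pi.single j 1)) * φ (y (Fin.last n))) x₀
      + fderiv ℝ (fun y => f y * f y * (deriv φ (y (Fin.last n)) * (Pi.single j 1 : Fin (n+1) → ℝ) (Fin.last n))) x₀)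
      (Pi.single i 1) = _
  rw [ContinuousLinearMap.add_apply]
  rw [D_mul (h2f.fun_mul hFj) hgd (Pi.single i 1), D_mul h2f hFj (Pi.single i 1),
    D_mul (hfd.fun_mul hfd) (hg'd.mul_const _) (Pi.single i 1), D_mul hfd hfd (Pi.single i 1)]
  rw [fderiv_const_mul hfd (2:ℝ), fderiv_mul_const hg'd]
  rw [D_eval hφ1.differentiableAt]
  simp only [ContinuousLinearMap.smul_apply, smul_eq_mul]
  rw [D_eval hφ'd.differentiableAt]
  have e1 : fderiv ℝ (fun z => fderiv ℝ f z (Pi.single j (1:ℝ))) x₀ (Pi.single i 1)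
      = pd2 i j f x₀ := by
    rw [(hasFDerivAt_fderiv_apply hdiff2 (Pi.single j 1)).fderiv, pd2_eq_fderiv2 hdiff2]
    rfl
  rw [e1]
  rw [show fderiv ℝ f x₀ (Pi.single i 1) = pd1 i f x₀ from rfl,
    show fderiv ℝ f x₀ (Pi.single j 1) = pd1 j f x₀ from rfl]
  ring
end WCalc

section Geom
open Topology
variable {n : ℕ}

lemma continuous_snoc' : Continuous (fun p : (Fin n → ℝ) × ℝ => (Fin.snoc p.1 p.2 : Fin (n+1) → ℝ)) := by
  apply continuous_pi
  intro i
  induction i using Fin.lastCases with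
  | last => simpa [Fin.snoc_last] using continuous_snd
  | cast j => simp only [Fin.snoc_castSucc]; exact (continuous_apply j).comp continuous_fst

lemma continuous_init' : Continuous (fun x : Fin (n+1) → ℝ => Fin.init x) := by
  apply continuous_pi
  intro j
  exact continuous_apply _

lemma closure_omega {D : Set (Fin n → ℝ)} {al bl : ℝ} (hab : al < bl) :
    closure {x : Fin (n+1) → ℝ | Fin.init x ∈ D ∧ x (Fin.last n) ∈ Ioo al bl}
      = {x : Fin (n+1) → ℝ | Fin.init x ∈ closure D ∧ x (Fin.last n) ∈ Icc al bl} := by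
  set Ω : Set (Fin (n+1) → ℝ) := {x | Fin.init x ∈ D ∧ x (Fin.last n) ∈ Ioo al bl}
  apply Subset.antisymm
  · apply closure_minimal
    · intro x hx
      exact ⟨subset_closure hx.1, Ioo_subset_Icc_self hx.2⟩
    · exact (isClosed_closure.preimage continuous_init').inter
        (isClosed_Icc.preimage (continuous_apply _))
  · intro x hx
    have h1 : (Fin.init x, x (Fin.last n)) ∈ closure (D ×ˢ Ioo al bl) := by
      rw [closure_prod_eq, closure_Ioo hab.ne]
      exact ⟨hx.1, hx.2⟩
    have h2 : (fun p : (Fin n → ℝ) × ℝ => (Fin.snoc p.1 p.2 : Fin (n+1) → ℝ)) ''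
        closure (D ×ˢ Ioo al bl) ⊆ closure ((fun p : (Fin n → ℝ) × ℝ =>
          (Fin.snoc p.1 p.2 : Fin (n+1) → ℝ)) '' (D ×ˢ Ioo al bl)) :=
      image_closure_subset_closure_image continuous_snoc'
    have h3 : (fun p : (Fin n → ℝ) × ℝ => (Fin.snoc p.1 p.2 : Fin (n+1) → ℝ)) ''
        (D ×ˢ Ioo al bl) ⊆ Ω := by
      rintro _ ⟨⟨X, y⟩, ⟨hX, hy⟩, rfl⟩
      refine ⟨?_, ?_⟩
      · show Fin.init (Fin.snoc X y : Fin (n+1) → ℝ) ∈ D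
        rwa [Fin.init_snoc]
      · show (Fin.snoc X y : Fin (n+1) → ℝ) (Fin.last n) ∈ Ioo al bl
        rwa [Fin.snoc_last]
    have h4 : x ∈ closure ((fun p : (Fin n → ℝ) × ℝ =>
        (Fin.snoc p.1 p.2 : Fin (n+1) → ℝ)) '' (D ×ˢ Ioo al bl)) := by
      have h5 : (Fin.snoc (Fin.init x) (x (Fin.last n)) : Fin (n+1) → ℝ) = x := Fin.snoc_init_self x
      rw [← h5]
      exact h2 ⟨_, h1, rfl⟩
    exact closure_mono h3 h4

lemma omega_bounded {D : Set (Fin n → ℝ)} (hD : Bornology.IsBounded D) {al bl : ℝ} :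
    Bornology.IsBounded {x : Fin (n+1) → ℝ | Fin.init x ∈ D ∧ x (Fin.last n) ∈ Ioo al bl} := by
  rw [Metric.isBounded_iff_subset_closedBall 0] at hD ⊢
  obtain ⟨C, hC⟩ := hD
  refine ⟨max C (max |al| |bl|), fun x hx => ?_⟩
  simp only [Metric.mem_closedBall, dist_zero_right] at hC ⊢
  have hC0 : (0:ℝ) ≤ max C (max |al| |bl|) := le_trans (abs_nonneg al)
    (le_trans (le_max_left _ _) (le_max_right _ _))
  rw [pi_norm_le_iff_of_nonneg hC0]
  intro i
  induction i using Fin.lastCases with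
  | last =>
      rw [Real.norm_eq_abs, abs_le]
      constructor
      · calc -(max C (max |al| |bl|)) ≤ -|al| := by
              simp only [neg_le_neg_iff]
              exact le_trans (le_max_left _ _) (le_max_right _ _)
        _ ≤ al := neg_abs_le al
        _ ≤ x (Fin.last n) := hx.2.1.le
      · calc x (Fin.last n) ≤ bl := hx.2.2.le
        _ ≤ |bl| := le_abs_self bl
        _ ≤ max C (max |al| |bl|) := le_trans (le_max_right _ _) (le_max_right _ _)
  | cast j =>
      calc ‖x j.castSucc‖ = ‖Fin.init x j‖ := rfl
      _ ≤ ‖Fin.init x‖ := norm_le_pi_norm _ j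
      _ ≤ C := by simpa using hC hx.1
      _ ≤ max C (max |al| |bl|) := le_max_left _ _
end Geom

set_option maxHeartbeats 2000000 in
/-- Estimate 1: maximum principle estimate on a generic subdomain
`Ω_l = D × (a_l, b_l)`: the weighted squared error `ν² φ(xₙ) ϕ(t)` is bounded by its
maximum over the two interface faces `xₙ = a_l` and `xₙ = b_l`. -/
theorem estimate_1_interior_subdomain
    {n : ℕ} (T p ν₀ : ℝ) (hT : 0 < T) (hν₀ : 0 < ν₀)
    (a : Fin (n+1) → Fin (n+1) → ℝ → ℝ) (b : Fin (n+1) → ℝ → ℝ) (c : ℝ → ℝ)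
    (ha_symm : ∀ i j t, a i j t = a j i t)
    (ha_smooth : ∀ i j, ContDiff ℝ (⊤ : ℕ∞) (a i j))
    (ha_bdd : ∀ i j, ∃ C, ∀ t, |a i j t| ≤ C)
    (hb_smooth : ∀ i, ContDiff ℝ (⊤ : ℕ∞) (b i))
    (hb_bdd : ∀ i, ∃ C, ∀ t, |b i t| ≤ C)
    (hc_smooth : ContDiff ℝ (⊤ : ℕ∞) c)
    (hc_bdd : ∃ C, ∀ t, |c t| ≤ C)
    (hell : ∀ t ∈ Ioo (0:ℝ) T, ∀ ξ : Fin (n+1) → ℝ,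
      ν₀ * ∑ i, ξ i ^ 2 ≤ ∑ i, ∑ j, a i j t * ξ i * ξ j)
    (D : Set (Fin n → ℝ)) (hD_open : IsOpen D) (hD_bdd : Bornology.IsBounded D)
    (al bl : ℝ) (hab : al < bl)
    (Ωl : Set (Fin (n+1) → ℝ))
    (hΩl : Ωl = {x : Fin (n+1) → ℝ | Fin.init x ∈ D ∧ x (Fin.last n) ∈ Ioo al bl})
    (ν : (Fin (n+1) → ℝ) → ℝ → ℝ)
    (hν_cont : ContinuousOn (fun q : (Fin (n+1) → ℝ) × ℝ => ν q.1 q.2)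
      (closure Ωl ×ˢ Icc 0 T))
    (hν_x : ∀ t ∈ Ioo (0:ℝ) T, ContDiffOn ℝ 2 (fun x => ν x t) Ωl)
    (hν_t : ∀ x ∈ Ωl, ContDiffOn ℝ 1 (fun s => ν x s) (Ioo 0 T))
    (hν_pde : ∀ x ∈ Ωl, ∀ t ∈ Ioo (0:ℝ) T, transOp p a b c ν x t = 0)
    (hν_lat : ∀ X ∈ frontier D, ∀ xn ∈ Icc al bl, ∀ t ∈ Icc (0:ℝ) T,
      ν (Fin.snoc X xn) t = 0)
    (hν_ic : ∀ x ∈ Ωl, ν x 0 = 0)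
    (φ : ℝ → ℝ) (hφ : ContDiff ℝ 2 φ) (hφ_pos : ∀ x, 0 < φ x)
    (hφ1 : ∃ C, ∀ x, |deriv φ x / φ x| ≤ C)
    (hφ2 : ∃ C, ∀ x, |deriv (deriv φ) x / φ x| ≤ C)
    (Γ : ℝ)
    (hΓ : Γ = (⨆ t, |a (Fin.last n) (Fin.last n) t|) *
            (⨆ x, |deriv (deriv φ) x / φ x|)
          + 2 * (⨆ t, |a (Fin.last n) (Fin.last n) t|) * (⨆ x, |deriv φ x / φ x|) ^ 2
          + 2 * (⨆ t, |c t - p * b (Fin.last n) t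
                        - p ^ 2 * a (Fin.last n) (Fin.last n) t|)
          + (⨆ t, |2 * p * a (Fin.last n) (Fin.last n) t + b (Fin.last n) t|) *
            (⨆ x, |deriv φ x / φ x|))
    (ϕ : ℝ → ℝ) (hϕ : ContDiff ℝ 1 ϕ)
    (hϕ_pos : ∀ t ∈ Icc (0:ℝ) T, 0 < ϕ t)
    (hϕ_decay : ∀ t ∈ Icc (0:ℝ) T, deriv ϕ t / ϕ t ≤ -Γ) :
    ∀ X ∈ closure D, ∀ xn ∈ Icc al bl, ∀ t ∈ Icc (0:ℝ) T,
      ν (Fin.snoc X xn) t ^ 2 * φ xn * ϕ t ≤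
        max
          (sSup {y : ℝ | ∃ X' ∈ closure D, ∃ s ∈ Icc (0:ℝ) T,
            y = ν (Fin.snoc X' al) s ^ 2 * φ al * ϕ s})
          (sSup {y : ℝ | ∃ X' ∈ closure D, ∃ s ∈ Icc (0:ℝ) T,
            y = ν (Fin.snoc X' bl) s ^ 2 * φ bl * ϕ s}) := by
  intro X hX xn hxn t ht
  subst hΩl
  set Ω : Set (Fin (n+1) → ℝ) := {x : Fin (n+1) → ℝ | Fin.init x ∈ D ∧ x (Fin.last n) ∈ Ioo al bl} with hΩdef
  -- bounds and suprema
  obtain ⟨CA, hCA⟩ := ha_bdd (Fin.last n) (Fin.last n)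
  obtain ⟨CB, hCB⟩ := hb_bdd (Fin.last n)
  obtain ⟨CC, hCC⟩ := hc_bdd
  obtain ⟨CR, hCR⟩ := hφ1
  obtain ⟨CQ, hCQ⟩ := hφ2
  have tri : ∀ x y z : ℝ, |x - y - z| ≤ |x| + |y| + |z| := fun x y z =>
    abs_le.2 ⟨by linarith [neg_abs_le x, le_abs_self y, le_abs_self z],
      by linarith [le_abs_self x, neg_abs_le y, neg_abs_le z]⟩
  set MA := ⨆ s, |a (Fin.last n) (Fin.last n) s| with hMAdef
  set MR := ⨆ x, |deriv φ x / φ x| with hMRdef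
  set MQ := ⨆ x, |deriv (deriv φ) x / φ x| with hMQdef
  set MC := ⨆ s, |c s - p * b (Fin.last n) s - p ^ 2 * a (Fin.last n) (Fin.last n) s| with hMCdef
  set MB := ⨆ s, |2 * p * a (Fin.last n) (Fin.last n) s + b (Fin.last n) s| with hMBdef
  have bddMA : BddAbove (range fun s => |a (Fin.last n) (Fin.last n) s|) :=
    ⟨CA, by rintro y ⟨s, rfl⟩; exact hCA s⟩
  have hMA : ∀ s, |a (Fin.last n) (Fin.last n) s| ≤ MA := fun s => le_ciSup bddMA s
  have hMA0 : 0 ≤ MA := (abs_nonneg _).trans (hMA 0)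
  have bddMR : BddAbove (range fun x => |deriv φ x / φ x|) :=
    ⟨CR, by rintro y ⟨s, rfl⟩; exact hCR s⟩
  have hMR : ∀ s, |deriv φ s / φ s| ≤ MR := fun s => le_ciSup bddMR s
  have hMR0 : 0 ≤ MR := (abs_nonneg _).trans (hMR 0)
  have bddMQ : BddAbove (range fun x => |deriv (deriv φ) x / φ x|) :=
    ⟨CQ, by rintro y ⟨s, rfl⟩; exact hCQ s⟩
  have hMQ : ∀ s, |deriv (deriv φ) s / φ s| ≤ MQ := fun s => le_ciSup bddMQ s
  have bddMC : BddAbove (range fun s =>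
      |c s - p * b (Fin.last n) s - p ^ 2 * a (Fin.last n) (Fin.last n) s|) := by
    refine ⟨CC + |p| * CB + p ^ 2 * CA, ?_⟩
    rintro y ⟨s, rfl⟩
    refine (tri _ _ _).trans ?_
    have h1 : |p * b (Fin.last n) s| ≤ |p| * CB := by
      rw [abs_mul]; exact mul_le_mul_of_nonneg_left (hCB s) (abs_nonneg p)
    have h2 : |p ^ 2 * a (Fin.last n) (Fin.last n) s| ≤ p ^ 2 * CA := by
      rw [abs_mul, abs_of_nonneg (sq_nonneg p)]
      exact mul_le_mul_of_nonneg_left (hCA s) (sq_nonneg p)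
    linarith [hCC s]
  have hMC : ∀ s, |c s - p * b (Fin.last n) s - p ^ 2 * a (Fin.last n) (Fin.last n) s| ≤ MC :=
    fun s => le_ciSup bddMC s
  have bddMB : BddAbove (range fun s =>
      |2 * p * a (Fin.last n) (Fin.last n) s + b (Fin.last n) s|) := by
    refine ⟨2 * |p| * CA + CB, ?_⟩
    rintro y ⟨s, rfl⟩
    refine (abs_add_le _ _).trans ?_
    have h1 : |2 * p * a (Fin.last n) (Fin.last n) s| ≤ 2 * |p| * CA := by
      rw [abs_mul, abs_mul]
      have : |(2:ℝ)| = 2 := by norm_num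
      rw [this]
      exact mul_le_mul_of_nonneg_left (hCA s) (by positivity)
    linarith [hCB s]
  have hMB : ∀ s, |2 * p * a (Fin.last n) (Fin.last n) s + b (Fin.last n) s| ≤ MB :=
    fun s => le_ciSup bddMB s
  -- topology
  have hΩopen : IsOpen Ω := by
    rw [hΩdef]
    exact (hD_open.preimage continuous_init').inter (isOpen_Ioo.preimage (continuous_apply _))
  have hclo : closure Ω = {x : Fin (n+1) → ℝ | Fin.init x ∈ closure D ∧ x (Fin.last n) ∈ Icc al bl} := by
    rw [hΩdef]; exact closure_omega hab
  have hΩbdd : Bornology.IsBounded Ω := by rw [hΩdef]; exact omega_bounded hD_bdd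
  have hcomp : IsCompact (closure Ω) := hΩbdd.isCompact_closure
  have hDcl : IsCompact (closure D) := hD_bdd.isCompact_closure
  have hxstar : (Fin.snoc X xn : Fin (n+1) → ℝ) ∈ closure Ω := by
    rw [hclo]
    refine ⟨?_, ?_⟩
    · show Fin.init (Fin.snoc X xn : Fin (n+1) → ℝ) ∈ closure D
      rwa [Fin.init_snoc]
    · show (Fin.snoc X xn : Fin (n+1) → ℝ) (Fin.last n) ∈ Icc al bl
      rwa [Fin.snoc_last]
  -- initial data vanishes on the closure
  have hν0cl : ∀ x ∈ closure Ω, ν x 0 = 0 := by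
    intro x hx
    have hmap : MapsTo (fun x' : Fin (n+1) → ℝ => (x', (0:ℝ))) (closure Ω)
        (closure Ω ×ˢ Icc 0 T) := fun y hy => ⟨hy, le_rfl, hT.le⟩
    have hcont : ContinuousOn (fun x' => ν x' 0) (closure Ω) :=
      hν_cont.comp (Continuous.continuousOn (continuous_id.prodMk continuous_const)) hmap
    have hne : (nhdsWithin x Ω).NeBot := mem_closure_iff_nhdsWithin_neBot.mp hx
    have h1 : Tendsto (fun x' => ν x' 0) (nhdsWithin x Ω) (nhds (ν x 0)) :=
      ((hcont x hx).mono subset_closure).tendsto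
    have h2 : Tendsto (fun x' => ν x' 0) (nhdsWithin x Ω) (nhds 0) := by
      apply Tendsto.congr' _ tendsto_const_nhds
      filter_upwards [self_mem_nhdsWithin] with y hy
      exact (hν_ic y hy).symm
    exact tendsto_nhds_unique h1 h2
  -- the two face sets
  set S1 := {y : ℝ | ∃ X' ∈ closure D, ∃ s ∈ Icc (0:ℝ) T,
    y = ν (Fin.snoc X' al) s ^ 2 * φ al * ϕ s} with hS1def
  set S2 := {y : ℝ | ∃ X' ∈ closure D, ∃ s ∈ Icc (0:ℝ) T,
    y = ν (Fin.snoc X' bl) s ^ 2 * φ bl * ϕ s} with hS2def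
  have hfaceto : ∀ e : ℝ, e ∈ Icc al bl →
      MapsTo (fun q : (Fin n → ℝ) × ℝ => ((Fin.snoc q.1 e : Fin (n+1) → ℝ), q.2))
        (closure D ×ˢ Icc 0 T) (closure Ω ×ˢ Icc 0 T) := by
    intro e he q hq
    refine ⟨?_, hq.2⟩
    rw [hclo]
    refine ⟨?_, ?_⟩
    · show Fin.init (Fin.snoc q.1 e : Fin (n+1) → ℝ) ∈ closure D
      rw [Fin.init_snoc]; exact hq.1
    · show (Fin.snoc q.1 e : Fin (n+1) → ℝ) (Fin.last n) ∈ Icc al bl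
      rwa [Fin.snoc_last]
  have hfacecont : ∀ e ∈ Icc al bl, ContinuousOn
      (fun q : (Fin n → ℝ) × ℝ => ν (Fin.snoc q.1 e) q.2 ^ 2 * φ e * ϕ q.2)
      (closure D ×ˢ Icc 0 T) := by
    intro e he
    have hc1 : Continuous (fun q : (Fin n → ℝ) × ℝ => ((Fin.snoc q.1 e : Fin (n+1) → ℝ), q.2)) :=
      (continuous_snoc'.comp (continuous_fst.prodMk continuous_const)).prodMk continuous_snd
    have hc2 : ContinuousOn (fun q : (Fin n → ℝ) × ℝ => ν (Fin.snoc q.1 e) q.2)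
        (closure D ×ˢ Icc 0 T) := hν_cont.comp hc1.continuousOn (hfaceto e he)
    exact ((hc2.pow 2).mul continuousOn_const).mul ((hϕ.continuous.comp continuous_snd).continuousOn)
  have hS1bdd : BddAbove S1 := by
    have himg : S1 = (fun q : (Fin n → ℝ) × ℝ => ν (Fin.snoc q.1 al) q.2 ^ 2 * φ al * ϕ q.2) ''
        (closure D ×ˢ Icc 0 T) := by
      rw [hS1def]; ext y
      constructor
      · rintro ⟨X', hX', s, hs, rfl⟩; exact ⟨(X', s), ⟨hX', hs⟩, rfl⟩
      · rintro ⟨⟨X', s⟩, ⟨hX', hs⟩, rfl⟩; exact ⟨X', hX', s, hs, rfl⟩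
    rw [himg]
    exact ((hDcl.prod isCompact_Icc).image_of_continuousOn
      (hfacecont al ⟨le_rfl, hab.le⟩)).bddAbove
  have hS2bdd : BddAbove S2 := by
    have himg : S2 = (fun q : (Fin n → ℝ) × ℝ => ν (Fin.snoc q.1 bl) q.2 ^ 2 * φ bl * ϕ q.2) ''
        (closure D ×ˢ Icc 0 T) := by
      rw [hS2def]; ext y
      constructor
      · rintro ⟨X', hX', s, hs, rfl⟩; exact ⟨(X', s), ⟨hX', hs⟩, rfl⟩
      · rintro ⟨⟨X', s⟩, ⟨hX', hs⟩, rfl⟩; exact ⟨X', hX', s, hs, rfl⟩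
    rw [himg]
    exact ((hDcl.prod isCompact_Icc).image_of_continuousOn
      (hfacecont bl ⟨hab.le, le_rfl⟩)).bddAbove
  have hS1mem : ∀ X' ∈ closure D, ∀ s ∈ Icc (0:ℝ) T,
      ν (Fin.snoc X' al) s ^ 2 * φ al * ϕ s ≤ sSup S1 :=
    fun X' hX' s hs => le_csSup hS1bdd ⟨X', hX', s, hs, rfl⟩
  have hS2mem : ∀ X' ∈ closure D, ∀ s ∈ Icc (0:ℝ) T,
      ν (Fin.snoc X' bl) s ^ 2 * φ bl * ϕ s ≤ sSup S2 :=
    fun X' hX' s hs => le_csSup hS2bdd ⟨X', hX', s, hs, rfl⟩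
  set RHS := max (sSup S1) (sSup S2) with hRHSdef
  have hRHS0 : (0:ℝ) ≤ RHS := by
    have hφal := hφ_pos al
    have hϕ0 := hϕ_pos 0 ⟨le_rfl, hT.le⟩
    have h0 : (0:ℝ) ≤ ν (Fin.snoc X al) 0 ^ 2 * φ al * ϕ 0 := by positivity
    exact le_max_of_le_left (h0.trans (hS1mem X hX 0 ⟨le_rfl, hT.le⟩))
  -- main claim: bound at all times < T
  have key : ∀ t' ∈ Icc (0:ℝ) T, t' < T →
      ν (Fin.snoc X xn) t' ^ 2 * φ xn * ϕ t' ≤ RHS := by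
    intro t' ht'mem ht'T
    refine le_of_forall_pos_le_add ?_
    intro ε hε
    set εs := ε / (T + 1) with hεsdef
    have hεs : 0 < εs := by positivity
    have hεsT : εs * t' ≤ ε := by
      have h1 : εs * t' ≤ εs * (T + 1) := by
        apply mul_le_mul_of_nonneg_left _ hεs.le
        linarith [ht'mem.2]
      have h2 : εs * (T + 1) = ε := by
        rw [hεsdef]; field_simp
      linarith
    set W : (Fin (n+1) → ℝ) × ℝ → ℝ :=
      fun q => ν q.1 q.2 ^ 2 * φ (q.1 (Fin.last n)) * ϕ q.2 - εs * q.2 with hWdef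
    set K := closure Ω ×ˢ Icc 0 t' with hKdef
    have hKsub : K ⊆ closure Ω ×ˢ Icc 0 T := by
      rw [hKdef]
      exact Set.prod_mono_right (Icc_subset_Icc_right ht'T.le)
    have hKcomp : IsCompact K := hcomp.prod isCompact_Icc
    have hKne : K.Nonempty := ⟨(Fin.snoc X xn, t'), hxstar, ⟨ht'mem.1, le_rfl⟩⟩
    have hWcont : ContinuousOn W K := by
      have h1 : ContinuousOn (fun q : (Fin (n+1) → ℝ) × ℝ => ν q.1 q.2) K := hν_cont.mono hKsub
      have h2 : Continuous (fun q : (Fin (n+1) → ℝ) × ℝ => φ (q.1 (Fin.last n))) :=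
        hφ.continuous.comp ((continuous_apply _).comp continuous_fst)
      have h3 : Continuous (fun q : (Fin (n+1) → ℝ) × ℝ => ϕ q.2) :=
        hϕ.continuous.comp continuous_snd
      exact (((h1.pow 2).mul h2.continuousOn).mul h3.continuousOn).sub
        ((continuous_const.mul continuous_snd).continuousOn)
    obtain ⟨⟨x₀, t₀⟩, hq₀K, hq₀max⟩ := hKcomp.exists_isMaxOn hKne hWcont
    rw [isMaxOn_iff] at hq₀max
    have hx₀cl : x₀ ∈ closure Ω := hq₀K.1
    have ht₀mem : t₀ ∈ Icc 0 t' := hq₀K.2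
    have ht₀T : t₀ ∈ Icc (0:ℝ) T := ⟨ht₀mem.1, ht₀mem.2.trans ht'T.le⟩
    have hx₀pair := hx₀cl
    rw [hclo] at hx₀pair
    obtain ⟨hx₀init, hx₀last⟩ := hx₀pair
    have hcompare := hq₀max (Fin.snoc X xn, t') ⟨hxstar, ⟨ht'mem.1, le_rfl⟩⟩
    have hWval : W (Fin.snoc X xn, t') =
        ν (Fin.snoc X xn) t' ^ 2 * φ ((Fin.snoc X xn : Fin (n+1) → ℝ) (Fin.last n)) * ϕ t'
          - εs * t' := rfl
    have hsnocl : ((Fin.snoc X xn : Fin (n+1) → ℝ) (Fin.last n)) = xn := Fin.snoc_last _ _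
    suffices hM : W (x₀, t₀) ≤ RHS by
      rw [hsnocl] at hWval
      have h6 : ν (Fin.snoc X xn) t' ^ 2 * φ xn * ϕ t' - εs * t' ≤ RHS := by
        rw [← hWval]; exact le_trans hcompare hM
      linarith
    have hWeq : W (x₀, t₀) = ν x₀ t₀ ^ 2 * φ (x₀ (Fin.last n)) * ϕ t₀ - εs * t₀ := rfl
    have hεst₀ : 0 ≤ εs * t₀ := mul_nonneg hεs.le ht₀mem.1
    by_cases hzero : ν x₀ t₀ = 0
    · rw [hWeq, hzero]
      have : (0:ℝ) ^ 2 * φ (x₀ (Fin.last n)) * ϕ t₀ - εs * t₀ = -(εs * t₀) := by ring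
      rw [this]
      linarith
    by_cases hlat : Fin.init x₀ ∈ D
    swap
    · exfalso
      apply hzero
      have hfr : Fin.init x₀ ∈ frontier D := by
        rw [frontier, hD_open.interior_eq]
        exact ⟨hx₀init, hlat⟩
      have h7 := hν_lat (Fin.init x₀) hfr (x₀ (Fin.last n)) hx₀last t₀ ht₀T
      rwa [Fin.snoc_init_self] at h7
    by_cases ht₀0 : t₀ = 0
    · exfalso; exact hzero (ht₀0 ▸ hν0cl x₀ hx₀cl)
    by_cases hal : x₀ (Fin.last n) = al
    · rw [hWeq]
      have hx₀eq : (Fin.snoc (Fin.init x₀) al : Fin (n+1) → ℝ) = x₀ := by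
        rw [← hal]; exact Fin.snoc_init_self x₀
      calc ν x₀ t₀ ^ 2 * φ (x₀ (Fin.last n)) * ϕ t₀ - εs * t₀
          ≤ ν x₀ t₀ ^ 2 * φ (x₀ (Fin.last n)) * ϕ t₀ := by linarith
        _ = ν (Fin.snoc (Fin.init x₀) al) t₀ ^ 2 * φ al * ϕ t₀ := by rw [hx₀eq, hal]
        _ ≤ sSup S1 := hS1mem _ hx₀init t₀ ht₀T
        _ ≤ RHS := le_max_left _ _
    by_cases hbl : x₀ (Fin.last n) = bl
    · rw [hWeq]
      have hx₀eq : (Fin.snoc (Fin.init x₀) bl : Fin (n+1) → ℝ) = x₀ := by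
        rw [← hbl]; exact Fin.snoc_init_self x₀
      calc ν x₀ t₀ ^ 2 * φ (x₀ (Fin.last n)) * ϕ t₀ - εs * t₀
          ≤ ν x₀ t₀ ^ 2 * φ (x₀ (Fin.last n)) * ϕ t₀ := by linarith
        _ = ν (Fin.snoc (Fin.init x₀) bl) t₀ ^ 2 * φ bl * ϕ t₀ := by rw [hx₀eq, hbl]
        _ ≤ sSup S2 := hS2mem _ hx₀init t₀ ht₀T
        _ ≤ RHS := le_max_right _ _
    -- interior case: contradiction
    exfalso
    have hx₀Ω : x₀ ∈ Ω := by
      rw [hΩdef]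
      exact ⟨hlat, lt_of_le_of_ne hx₀last.1 (Ne.symm hal), lt_of_le_of_ne hx₀last.2 hbl⟩
    have ht₀Ioo : t₀ ∈ Ioo (0:ℝ) T :=
      ⟨lt_of_le_of_ne ht₀mem.1 (Ne.symm ht₀0), lt_of_le_of_lt ht₀mem.2 ht'T⟩
    set f : (Fin (n+1) → ℝ) → ℝ := fun y => ν y t₀ with hfdef
    have hfx₀ : f x₀ = ν x₀ t₀ := rfl
    have hfC2 : ContDiffOn ℝ 2 f Ω := hν_x t₀ ht₀Ioo
    have hG : 0 < φ (x₀ (Fin.last n)) := hφ_pos _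
    have hϕt : 0 < ϕ t₀ := hϕ_pos t₀ ht₀T
    set wσ : (Fin (n+1) → ℝ) → ℝ := fun y => f y * f y * φ (y (Fin.last n)) with hwσdef
    -- spatial local max of wσ at x₀
    have hmaxσ : IsLocalMax wσ x₀ := by
      have hev : ∀ᶠ y in nhds x₀, y ∈ Ω := hΩopen.mem_nhds hx₀Ω
      filter_upwards [hev] with y hy
      have hWy := hq₀max (y, t₀) ⟨subset_closure hy, ht₀mem⟩
      have e1 : W (y, t₀) = ν y t₀ ^ 2 * φ (y (Fin.last n)) * ϕ t₀ - εs * t₀ := rfl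
      have e2 : W (x₀, t₀) = ν x₀ t₀ ^ 2 * φ (x₀ (Fin.last n)) * ϕ t₀ - εs * t₀ := rfl
      rw [e1, e2] at hWy
      have h8 : wσ y * ϕ t₀ ≤ wσ x₀ * ϕ t₀ := by
        have e3 : wσ y * ϕ t₀ = ν y t₀ ^ 2 * φ (y (Fin.last n)) * ϕ t₀ := by
          simp only [hwσdef, hfdef]; ring
        have e4 : wσ x₀ * ϕ t₀ = ν x₀ t₀ ^ 2 * φ (x₀ (Fin.last n)) * ϕ t₀ := by
          simp only [hwσdef, hfdef]; ring
        rw [e3, e4]; linarith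
      exact le_of_mul_le_mul_right h8 hϕt
    -- first-order conditions
    have hpd1σ : ∀ j, pd1 j wσ x₀ = 0 := by
      intro j
      rw [pd1, hmaxσ.fderiv_eq_zero]
      rfl
    have hpd1_id : ∀ j, 2 * f x₀ * pd1 j f x₀ * φ (x₀ (Fin.last n))
        + f x₀ * f x₀ * (deriv φ (x₀ (Fin.last n)) *
          (Pi.single j 1 : Fin (n+1) → ℝ) (Fin.last n)) = 0 := by
      intro j
      have h := pd1_wσ hΩopen hfC2 hφ hx₀Ω j
      rw [← hwσdef] at h
      rw [← h]
      exact hpd1σ j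
    have hzero' : f x₀ ≠ 0 := hzero
    have hPoff : ∀ j, j ≠ Fin.last n → pd1 j f x₀ = 0 := by
      intro j hj
      have h := hpd1_id j
      rw [Pi.single_eq_of_ne (Ne.symm hj)] at h
      rw [mul_zero, mul_zero, add_zero] at h
      by_contra hP
      have hne : 2 * f x₀ * pd1 j f x₀ * φ (x₀ (Fin.last n)) ≠ 0 :=
        mul_ne_zero (mul_ne_zero (mul_ne_zero two_ne_zero hzero') hP) hG.ne'
      exact hne h
    have hFneq : 2 * f x₀ * pd1 (Fin.last n) f x₀ * φ (x₀ (Fin.last n))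
        + f x₀ * f x₀ * deriv φ (x₀ (Fin.last n)) = 0 := by
      have h := hpd1_id (Fin.last n)
      rw [Pi.single_eq_same, mul_one] at h
      exact h
    -- PDE
    have hpde := hν_pde x₀ hx₀Ω t₀ ht₀Ioo
    simp only [transOp] at hpde
    rw [← hfdef] at hpde
    have herase : ∑ i ∈ Finset.univ.erase (Fin.last n),
        (2 * p * a i (Fin.last n) t₀ + b i t₀) * pd1 i f x₀ = 0 :=
      Finset.sum_eq_zero fun i hi => by
        rw [hPoff i (Finset.mem_erase.mp hi).1, mul_zero]
    have hSH : ∑ i, ∑ j, a i j t₀ * pd2 i j f x₀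
        = deriv (fun s => ν x₀ s) t₀
          + (2 * p * a (Fin.last n) (Fin.last n) t₀ + b (Fin.last n) t₀)
              * pd1 (Fin.last n) f x₀
          + (c t₀ - p * b (Fin.last n) t₀ - p ^ 2 * a (Fin.last n) (Fin.last n) t₀)
              * ν x₀ t₀ := by
      linarith only [hpde, herase]
    -- Hessian and trace inequality
    have hφcomp : ContDiff ℝ 2 (fun y : Fin (n+1) → ℝ => φ (y (Fin.last n))) :=
      hφ.comp (ContinuousLinearMap.proj (Fin.last n) :
        (Fin (n+1) → ℝ) →L[ℝ] ℝ).contDiff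
    have hwσC2 : ContDiffOn ℝ 2 wσ Ω := by
      rw [hwσdef]
      exact (hfC2.mul hfC2).mul hφcomp.contDiffOn
    have hquad : ∀ ξ : Fin (n+1) → ℝ, ∑ i, ∑ j, ξ i * ξ j * pd2 i j wσ x₀ ≤ 0 :=
      fun ξ => quadform_nonpos_at_max hΩopen hwσC2 hx₀Ω hmaxσ ξ
    have hApsd : (Matrix.of (fun i j => a i j t₀)).PosSemidef := by
      apply Matrix.PosSemidef.of_dotProduct_mulVec_nonneg
      · show (Matrix.of (fun i j => a i j t₀)).conjTranspose = _
        ext i j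
        simp only [Matrix.conjTranspose_apply, Matrix.of_apply, star_trivial]
        exact ha_symm j i t₀
      · intro ξ
        have hql := hell t₀ ht₀Ioo ξ
        have hsum : dotProduct (star ξ) ((Matrix.of (fun i j => a i j t₀)).mulVec ξ)
            = ∑ i, ∑ j, a i j t₀ * ξ i * ξ j := by
          simp only [dotProduct, Matrix.mulVec, Matrix.of_apply, Pi.star_apply,
            star_trivial, Finset.mul_sum]
          exact Finset.sum_congr rfl fun i _ => Finset.sum_congr rfl fun j _ => by ring
        rw [hsum]
        refine le_trans ?_ hql
        exact mul_nonneg hν₀.le (Finset.sum_nonneg fun i _ => sq_nonneg _)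
    have htrace : ∑ i, ∑ j, a i j t₀ * pd2 i j wσ x₀ ≤ 0 := by
      have h := trace_nonpos hApsd (fun i j => pd2 i j wσ x₀) hquad
      simpa using h
    -- expand the trace sum
    have hexp : ∀ i j, pd2 i j wσ x₀ =
        2 * pd1 i f x₀ * pd1 j f x₀ * φ (x₀ (Fin.last n))
        + 2 * f x₀ * pd2 i j f x₀ * φ (x₀ (Fin.last n))
        + 2 * f x₀ * pd1 j f x₀ * deriv φ (x₀ (Fin.last n))
            * (Pi.single i 1 : Fin (n+1) → ℝ) (Fin.last n)
        + 2 * f x₀ * pd1 i f x₀ * deriv φ (x₀ (Fin.last n))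
            * (Pi.single j 1 : Fin (n+1) → ℝ) (Fin.last n)
        + f x₀ * f x₀ * deriv (deriv φ) (x₀ (Fin.last n))
            * (Pi.single i 1 : Fin (n+1) → ℝ) (Fin.last n)
            * (Pi.single j 1 : Fin (n+1) → ℝ) (Fin.last n) := by
      intro i j
      have h := pd2_wσ hΩopen hfC2 hφ hx₀Ω i j
      rw [← hwσdef] at h
      exact h
    have hcollapse : ∀ g : Fin (n+1) → ℝ,
        ∑ i, g i * (Pi.single i 1 : Fin (n+1) → ℝ) (Fin.last n) = g (Fin.last n) := by
      intro g
      rw [Finset.sum_eq_single (Fin.last n)]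
      · rw [Pi.single_eq_same, mul_one]
      · intro i _ hi
        rw [Pi.single_eq_of_ne (Ne.symm hi), mul_zero]
      · intro h; exact absurd (Finset.mem_univ _) h
    have hs1 : ∑ i, ∑ j, a i j t₀ *
        (2 * pd1 i f x₀ * pd1 j f x₀ * φ (x₀ (Fin.last n)))
        = a (Fin.last n) (Fin.last n) t₀ * (2 * pd1 (Fin.last n) f x₀
            * pd1 (Fin.last n) f x₀ * φ (x₀ (Fin.last n))) := by
      rw [Finset.sum_eq_single (Fin.last n)]
      · rw [Finset.sum_eq_single (Fin.last n)]
        · intro j _ hj; rw [hPoff j hj]; ring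
        · intro h; exact absurd (Finset.mem_univ _) h
      · intro i _ hi
        apply Finset.sum_eq_zero; intro j _
        rw [hPoff i hi]; ring
      · intro h; exact absurd (Finset.mem_univ _) h
    have hs2 : ∑ i, ∑ j, a i j t₀ * (2 * f x₀ * pd2 i j f x₀ * φ (x₀ (Fin.last n)))
        = 2 * f x₀ * φ (x₀ (Fin.last n)) * ∑ i, ∑ j, a i j t₀ * pd2 i j f x₀ := by
      rw [Finset.mul_sum]
      refine Finset.sum_congr rfl fun i _ => ?_
      rw [Finset.mul_sum]
      exact Finset.sum_congr rfl fun j _ => by ring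
    have hs3 : ∑ i, ∑ j, a i j t₀ * (2 * f x₀ * pd1 j f x₀ * deriv φ (x₀ (Fin.last n))
          * (Pi.single i 1 : Fin (n+1) → ℝ) (Fin.last n))
        = a (Fin.last n) (Fin.last n) t₀ * (2 * f x₀ * pd1 (Fin.last n) f x₀
            * deriv φ (x₀ (Fin.last n))) := by
      have inner : ∀ i, ∑ j, a i j t₀ * (2 * f x₀ * pd1 j f x₀ * deriv φ (x₀ (Fin.last n))
            * (Pi.single i 1 : Fin (n+1) → ℝ) (Fin.last n))
          = a i (Fin.last n) t₀ * (2 * f x₀ * pd1 (Fin.last n) f x₀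
            * deriv φ (x₀ (Fin.last n)) * (Pi.single i 1 : Fin (n+1) → ℝ) (Fin.last n)) := by
        intro i
        rw [Finset.sum_eq_single (Fin.last n)]
        · intro j _ hj; rw [hPoff j hj]; ring
        · intro h; exact absurd (Finset.mem_univ _) h
      rw [Finset.sum_congr rfl fun i _ => inner i]
      rw [Finset.sum_eq_single (Fin.last n)]
      · rw [Pi.single_eq_same]; ring
      · intro i _ hi
        rw [Pi.single_eq_of_ne (Ne.symm hi)]; ring
      · intro h; exact absurd (Finset.mem_univ _) h
    have hs4 : ∑ i, ∑ j, a i j t₀ * (2 * f x₀ * pd1 i f x₀ * deriv φ (x₀ (Fin.last n))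
          * (Pi.single j 1 : Fin (n+1) → ℝ) (Fin.last n))
        = a (Fin.last n) (Fin.last n) t₀ * (2 * f x₀ * pd1 (Fin.last n) f x₀
            * deriv φ (x₀ (Fin.last n))) := by
      have inner : ∀ i, ∑ j, a i j t₀ * (2 * f x₀ * pd1 i f x₀ * deriv φ (x₀ (Fin.last n))
            * (Pi.single j 1 : Fin (n+1) → ℝ) (Fin.last n))
          = a i (Fin.last n) t₀ * (2 * f x₀ * pd1 i f x₀ * deriv φ (x₀ (Fin.last n))) := by
        intro i
        rw [Finset.sum_eq_single (Fin.last n)]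
        · rw [Pi.single_eq_same]; ring
        · intro j _ hj
          rw [Pi.single_eq_of_ne (Ne.symm hj)]; ring
        · intro h; exact absurd (Finset.mem_univ _) h
      rw [Finset.sum_congr rfl fun i _ => inner i]
      rw [Finset.sum_eq_single (Fin.last n)]
      · intro i _ hi; rw [hPoff i hi]; ring
      · intro h; exact absurd (Finset.mem_univ _) h
    have hs5 : ∑ i, ∑ j, a i j t₀ * (f x₀ * f x₀ * deriv (deriv φ) (x₀ (Fin.last n))
          * (Pi.single i 1 : Fin (n+1) → ℝ) (Fin.last n)
          * (Pi.single j 1 : Fin (n+1) → ℝ) (Fin.last n))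
        = a (Fin.last n) (Fin.last n) t₀
            * (f x₀ * f x₀ * deriv (deriv φ) (x₀ (Fin.last n))) := by
      have inner : ∀ i, ∑ j, a i j t₀ * (f x₀ * f x₀ * deriv (deriv φ) (x₀ (Fin.last n))
            * (Pi.single i 1 : Fin (n+1) → ℝ) (Fin.last n)
            * (Pi.single j 1 : Fin (n+1) → ℝ) (Fin.last n))
          = a i (Fin.last n) t₀ * (f x₀ * f x₀ * deriv (deriv φ) (x₀ (Fin.last n))
            * (Pi.single i 1 : Fin (n+1) → ℝ) (Fin.last n)) := by
        intro i
        rw [Finset.sum_eq_single (Fin.last n)]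
        · rw [Pi.single_eq_same]; ring
        · intro j _ hj
          rw [Pi.single_eq_of_ne (Ne.symm hj)]; ring
        · intro h; exact absurd (Finset.mem_univ _) h
      rw [Finset.sum_congr rfl fun i _ => inner i]
      rw [Finset.sum_eq_single (Fin.last n)]
      · rw [Pi.single_eq_same]; ring
      · intro i _ hi
        rw [Pi.single_eq_of_ne (Ne.symm hi)]; ring
      · intro h; exact absurd (Finset.mem_univ _) h
    have htr_exp : ∑ i, ∑ j, a i j t₀ * pd2 i j wσ x₀
        = a (Fin.last n) (Fin.last n) t₀ * (2 * pd1 (Fin.last n) f x₀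
            * pd1 (Fin.last n) f x₀ * φ (x₀ (Fin.last n)))
          + 2 * f x₀ * φ (x₀ (Fin.last n)) * (∑ i, ∑ j, a i j t₀ * pd2 i j f x₀)
          + 2 * (a (Fin.last n) (Fin.last n) t₀ * (2 * f x₀ * pd1 (Fin.last n) f x₀
              * deriv φ (x₀ (Fin.last n))))
          + a (Fin.last n) (Fin.last n) t₀
              * (f x₀ * f x₀ * deriv (deriv φ) (x₀ (Fin.last n))) := by
      calc ∑ i, ∑ j, a i j t₀ * pd2 i j wσ x₀
          = ∑ i, ∑ j, (a i j t₀ *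
              (2 * pd1 i f x₀ * pd1 j f x₀ * φ (x₀ (Fin.last n)))
            + a i j t₀ * (2 * f x₀ * pd2 i j f x₀ * φ (x₀ (Fin.last n)))
            + a i j t₀ * (2 * f x₀ * pd1 j f x₀ * deriv φ (x₀ (Fin.last n))
                * (Pi.single i 1 : Fin (n+1) → ℝ) (Fin.last n))
            + a i j t₀ * (2 * f x₀ * pd1 i f x₀ * deriv φ (x₀ (Fin.last n))
                * (Pi.single j 1 : Fin (n+1) → ℝ) (Fin.last n))
            + a i j t₀ * (f x₀ * f x₀ * deriv (deriv φ) (x₀ (Fin.last n))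
                * (Pi.single i 1 : Fin (n+1) → ℝ) (Fin.last n)
                * (Pi.single j 1 : Fin (n+1) → ℝ) (Fin.last n))) := by
            refine Finset.sum_congr rfl fun i _ => Finset.sum_congr rfl fun j _ => ?_
            rw [hexp i j]; ring
        _ = _ := by
            simp only [Finset.sum_add_distrib]
            rw [hs1, hs2, hs3, hs4, hs5]
            ring
    -- time derivative at the max
    have hνtd : DifferentiableAt ℝ (fun s => ν x₀ s) t₀ :=
      ((hν_t x₀ hx₀Ω).differentiableOn one_ne_zero).differentiableAt
        (isOpen_Ioo.mem_nhds ht₀Ioo)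
    have hνtHD : HasDerivAt (fun s => ν x₀ s) (deriv (fun s => ν x₀ s) t₀) t₀ :=
      hνtd.hasDerivAt
    have hϕHD : HasDerivAt ϕ (deriv ϕ t₀) t₀ :=
      ((hϕ.differentiable one_ne_zero) t₀).hasDerivAt
    have htfun : HasDerivAt (fun s => ν x₀ s ^ 2 * φ (x₀ (Fin.last n)) * ϕ s - εs * s)
        (2 * ν x₀ t₀ * deriv (fun s => ν x₀ s) t₀ * φ (x₀ (Fin.last n)) * ϕ t₀
          + ν x₀ t₀ ^ 2 * φ (x₀ (Fin.last n)) * deriv ϕ t₀ - εs) t₀ := by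
      have h1 : HasDerivAt (fun s => ν x₀ s ^ 2)
          (2 * ν x₀ t₀ * deriv (fun s => ν x₀ s) t₀) t₀ := by
        have h0 := hνtHD.fun_pow 2
        refine h0.congr_deriv ?_
        push_cast
        ring
      have h2 := (h1.mul_const (φ (x₀ (Fin.last n)))).fun_mul hϕHD
      have h3 := h2.fun_sub ((hasDerivAt_id t₀).const_mul εs)
      refine h3.congr_deriv ?_
      ring
    have htmax : ∀ s ∈ Icc (0:ℝ) t₀,
        ν x₀ s ^ 2 * φ (x₀ (Fin.last n)) * ϕ s - εs * s
          ≤ ν x₀ t₀ ^ 2 * φ (x₀ (Fin.last n)) * ϕ t₀ - εs * t₀ := by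
      intro s hs
      exact hq₀max (x₀, s) ⟨hx₀cl, ⟨hs.1, hs.2.trans ht₀mem.2⟩⟩
    have htime := deriv_nonneg_right_max ht₀Ioo.1 htfun htmax
    -- decay of ϕ
    have hϕd : deriv ϕ t₀ ≤ -Γ * ϕ t₀ := by
      have h := hϕ_decay t₀ ht₀T
      rw [div_le_iff₀ hϕt] at h
      linarith
    -- ratios
    set r := deriv φ (x₀ (Fin.last n)) / φ (x₀ (Fin.last n)) with hrdef
    set qv := deriv (deriv φ) (x₀ (Fin.last n)) / φ (x₀ (Fin.last n)) with hqvdef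
    have hr : deriv φ (x₀ (Fin.last n)) = r * φ (x₀ (Fin.last n)) :=
      (div_mul_cancel₀ _ hG.ne').symm
    have hq : deriv (deriv φ) (x₀ (Fin.last n)) = qv * φ (x₀ (Fin.last n)) :=
      (div_mul_cancel₀ _ hG.ne').symm
    have hrb : |r| ≤ MR := hMR (x₀ (Fin.last n))
    have hqb : |qv| ≤ MQ := hMQ (x₀ (Fin.last n))
    -- Fn value
    have hFnval : pd1 (Fin.last n) f x₀ = -(f x₀ * r) / 2 := by
      have hstep : f x₀ * ((2 * pd1 (Fin.last n) f x₀ + f x₀ * r)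
          * φ (x₀ (Fin.last n))) = 0 := by
        linear_combination hFneq - f x₀ * f x₀ * hr
      have h1 : (2 * pd1 (Fin.last n) f x₀ + f x₀ * r) * φ (x₀ (Fin.last n)) = 0 :=
        (mul_eq_zero.mp hstep).resolve_left hzero'
      have h2 : 2 * pd1 (Fin.last n) f x₀ + f x₀ * r = 0 :=
        (mul_eq_zero.mp h1).resolve_right hG.ne'
      linarith
    -- substitute in the trace bound
    rw [htr_exp, hSH, hFnval, hr, hq, hfx₀] at htrace
    -- bound the bracket by Γ
    have hAnnb := hMA t₀
    have hBnb := hMB t₀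
    have hCvb := hMC t₀
    have hr2 : r ^ 2 ≤ MR ^ 2 := by
      calc r ^ 2 = |r| ^ 2 := (sq_abs r).symm
      _ ≤ MR ^ 2 := pow_le_pow_left₀ (abs_nonneg r) hrb 2
    have h1 : a (Fin.last n) (Fin.last n) t₀ * r ^ 2 ≤ MA * MR ^ 2 := by
      calc a (Fin.last n) (Fin.last n) t₀ * r ^ 2
          ≤ |a (Fin.last n) (Fin.last n) t₀| * r ^ 2 :=
            mul_le_mul_of_nonneg_right (le_abs_self _) (sq_nonneg _)
        _ ≤ MA * r ^ 2 := mul_le_mul_of_nonneg_right hAnnb (sq_nonneg _)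
        _ ≤ MA * MR ^ 2 := mul_le_mul_of_nonneg_left hr2 hMA0
    have h2 : (2 * p * a (Fin.last n) (Fin.last n) t₀ + b (Fin.last n) t₀) * r
        ≤ MB * MR := by
      calc (2 * p * a (Fin.last n) (Fin.last n) t₀ + b (Fin.last n) t₀) * r
          ≤ |(2 * p * a (Fin.last n) (Fin.last n) t₀ + b (Fin.last n) t₀) * r| :=
            le_abs_self _
        _ = |2 * p * a (Fin.last n) (Fin.last n) t₀ + b (Fin.last n) t₀| * |r| :=
            abs_mul _ _
        _ ≤ MB * MR := mul_le_mul hBnb hrb (abs_nonneg _) ((abs_nonneg _).trans hBnb)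
    have h3 : -(c t₀ - p * b (Fin.last n) t₀
        - p ^ 2 * a (Fin.last n) (Fin.last n) t₀) ≤ MC :=
      (neg_le_abs _).trans hCvb
    have h4 : -(a (Fin.last n) (Fin.last n) t₀ * qv) ≤ MA * MQ := by
      calc -(a (Fin.last n) (Fin.last n) t₀ * qv)
          ≤ |a (Fin.last n) (Fin.last n) t₀ * qv| := neg_le_abs _
        _ = |a (Fin.last n) (Fin.last n) t₀| * |qv| := abs_mul _ _
        _ ≤ MA * MQ := mul_le_mul hAnnb hqb (abs_nonneg _) hMA0
    have h5 : 0 ≤ MA * MR ^ 2 := mul_nonneg hMA0 (sq_nonneg _)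
    have hBr : 3/2 * (a (Fin.last n) (Fin.last n) t₀) * r ^ 2
        + (2 * p * a (Fin.last n) (Fin.last n) t₀ + b (Fin.last n) t₀) * r
        - 2 * (c t₀ - p * b (Fin.last n) t₀
            - p ^ 2 * a (Fin.last n) (Fin.last n) t₀)
        - a (Fin.last n) (Fin.last n) t₀ * qv ≤ Γ := by
      rw [hΓ]
      linarith only [h1, h2, h3, h4, h5]
    -- combine everything
    have htr2 : 2 * ν x₀ t₀ * deriv (fun s => ν x₀ s) t₀ * φ (x₀ (Fin.last n))
        ≤ ν x₀ t₀ ^ 2 * φ (x₀ (Fin.last n)) *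
          (3/2 * (a (Fin.last n) (Fin.last n) t₀) * r ^ 2
            + (2 * p * a (Fin.last n) (Fin.last n) t₀ + b (Fin.last n) t₀) * r
            - 2 * (c t₀ - p * b (Fin.last n) t₀
                - p ^ 2 * a (Fin.last n) (Fin.last n) t₀)
            - a (Fin.last n) (Fin.last n) t₀ * qv) := by
      linarith only [htrace]
    have hmul1 := mul_le_mul_of_nonneg_right htr2 hϕt.le
    have hmul2 := mul_le_mul_of_nonneg_left hϕd
      (mul_nonneg (sq_nonneg (ν x₀ t₀)) hG.le)
    have hB2 : 3/2 * (a (Fin.last n) (Fin.last n) t₀) * r ^ 2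
        + (2 * p * a (Fin.last n) (Fin.last n) t₀ + b (Fin.last n) t₀) * r
        - 2 * (c t₀ - p * b (Fin.last n) t₀
            - p ^ 2 * a (Fin.last n) (Fin.last n) t₀)
        - a (Fin.last n) (Fin.last n) t₀ * qv - Γ ≤ 0 := by linarith only [hBr]
    have hend : ν x₀ t₀ ^ 2 * φ (x₀ (Fin.last n)) * ϕ t₀ *
        (3/2 * (a (Fin.last n) (Fin.last n) t₀) * r ^ 2
          + (2 * p * a (Fin.last n) (Fin.last n) t₀ + b (Fin.last n) t₀) * r
          - 2 * (c t₀ - p * b (Fin.last n) t₀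
              - p ^ 2 * a (Fin.last n) (Fin.last n) t₀)
          - a (Fin.last n) (Fin.last n) t₀ * qv - Γ) ≤ 0 :=
      mul_nonpos_of_nonneg_of_nonpos
        (by positivity) hB2
    linarith only [htime, hmul1, hmul2, hend, hεs]
  -- conclude
  rcases lt_or_eq_of_le ht.2 with htT | htT
  · exact key t ht htT
  · -- t = T : limit argument
    rw [htT]
    have hmap : MapsTo (fun s : ℝ => ((Fin.snoc X xn : Fin (n+1) → ℝ), s)) (Icc (0:ℝ) T)
        (closure Ω ×ˢ Icc 0 T) := fun s hs => ⟨hxstar, hs⟩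
    have h1 : ContinuousOn (fun s => ν (Fin.snoc X xn) s) (Icc (0:ℝ) T) :=
      hν_cont.comp (Continuous.continuousOn (continuous_const.prodMk continuous_id)) hmap
    have hcont : ContinuousWithinAt
        (fun s => ν (Fin.snoc X xn) s ^ 2 * φ xn * ϕ s) (Icc (0:ℝ) T) T :=
      (((h1.pow 2).mul continuousOn_const).mul hϕ.continuous.continuousOn).continuousWithinAt
        ⟨hT.le, le_rfl⟩
    have hneT : (nhdsWithin T (Ico (0:ℝ) T)).NeBot := by
      apply mem_closure_iff_nhdsWithin_neBot.mp
      rw [closure_Ico hT.ne]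
      exact ⟨hT.le, le_rfl⟩
    have htend : Filter.Tendsto (fun s => ν (Fin.snoc X xn) s ^ 2 * φ xn * ϕ s)
        (nhdsWithin T (Ico (0:ℝ) T))
        (nhds (ν (Fin.snoc X xn) T ^ 2 * φ xn * ϕ T)) :=
      hcont.mono Ico_subset_Icc_self
    refine le_of_tendsto htend ?_
    filter_upwards [self_mem_nhdsWithin] with s hs
    exact key s ⟨hs.1, hs.2.le⟩ hs.2
end

section
/- (Normal derivative formula on a flat face.) Let U = D × (a, b) with D ⊂ ℝ^{n−1} open, and let ε be C^∞ on a neighbourhood (in cl(U) × (0,T)) of the face D × {a} × (0,T), satisfying 𝒫_p ε = 0 there and ε(X, a, t) = 0 for all (X,t) ∈ D × (0,T). Set ν = ∂_{x_n}ε, let φ be a strictly positive C^2 function, ϕ a strictly positive C^1 function, and Φ = ν² φ(x_n) ϕ(t). Then at any point (X₀, a, t₀) with X₀ ∈ D, t₀ ∈ (0,T), at which ν ∂_{x_i}ν = 0 for every i ∈ {1,…,n−1} (for instance at an interior maximum point of Φ restricted to the face), one has ∂_{x_n}Φ(X₀,a,t₀) = φ(a) ϕ(t₀) ν(X₀,a,t₀)²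 [ 4p + 2 b_n(t₀)/a_{n,n}(t₀) + φ'(a)/φ(a) ]; equivalently, the outward normal derivative of Φ at this face equals −φ(a) ϕ(t₀) ν² [ 4p + 2 b_n(t₀)/a_{n,n}(t₀) + φ'(a)/φ(a) ]. -/
open Set Filter

noncomputable def snocL (n : ℕ) : (Fin n → ℝ) →L[ℝ] (Fin (n+1) → ℝ) :=
  ContinuousLinearMap.pi (fun j => Fin.lastCases 0 (fun k => ContinuousLinearMap.proj k) j)

lemma hasFDerivAt_snoc {n : ℕ} (aL : ℝ) (X : Fin n → ℝ) :
    HasFDerivAt (fun Y : Fin n → ℝ => (Fin.snoc Y aL : Fin (n+1) → ℝ)) (snocL n) X := by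
  have h : (fun Y : Fin n → ℝ => (Fin.snoc Y aL : Fin (n+1) → ℝ))
      = fun Y => snocL n Y + Pi.single (Fin.last n) aL := by
    funext Y j
    refine Fin.lastCases ?_ (fun k => ?_) j
    · simp [snocL, Fin.snoc_last, Pi.single_eq_same]
    · simp [snocL, Fin.snoc_castSucc,
        Pi.single_eq_of_ne (Fin.castSucc_lt_last k).ne]
  rw [h]
  exact (snocL n).hasFDerivAt.add_const _

lemma snocL_single {n : ℕ} (k : Fin n) :
    snocL n (Pi.single k 1) = Pi.single (Fin.castSucc k) (1:ℝ) := by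
  funext j
  refine Fin.lastCases ?_ (fun l => ?_) j
  · simp [snocL, Pi.single_eq_of_ne (Fin.castSucc_lt_last k).ne']
  · simp [snocL, Pi.single_apply, Fin.castSucc_inj]



lemma tangential_deriv_zero {n : ℕ} {D : Set (Fin n → ℝ)} (hD : IsOpen D)
    {aL : ℝ} {f : (Fin (n+1) → ℝ) → ℝ}
    (hf0 : ∀ X ∈ D, f (Fin.snoc X aL) = 0)
    {X : Fin n → ℝ} (hX : X ∈ D)
    (hdiff : DifferentiableAt ℝ f (Fin.snoc X aL))
    {i : Fin (n+1)} (hi : i ≠ Fin.last n) :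
    pd1 i f (Fin.snoc X aL) = 0 := by
  obtain ⟨k, rfl⟩ := Fin.exists_castSucc_eq.mpr hi
  have hm := hasFDerivAt_snoc aL X
  have hcomp : HasFDerivAt (fun Y : Fin n → ℝ => f (Fin.snoc Y aL))
      ((fderiv ℝ f (Fin.snoc X aL)).comp (snocL n)) X :=
    hdiff.hasFDerivAt.comp X hm
  have hev : (fun Y : Fin n → ℝ => f (Fin.snoc Y aL)) =ᶠ[nhds X] fun _ => (0:ℝ) :=
    Filter.eventuallyEq_of_mem (hD.mem_nhds hX) (fun Y hY => hf0 Y hY)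
  have hz : fderiv ℝ (fun Y : Fin n → ℝ => f (Fin.snoc Y aL)) X = 0 := by
    rw [hev.fderiv_eq, fderiv_fun_const]
    rfl
  calc pd1 (Fin.castSucc k) f (Fin.snoc X aL)
      = fderiv ℝ f (Fin.snoc X aL) (snocL n (Pi.single k 1)) := by
        rw [pd1, snocL_single]
    _ = ((fderiv ℝ f (Fin.snoc X aL)).comp (snocL n)) (Pi.single k 1) := rfl
    _ = fderiv ℝ (fun Y => f (Fin.snoc Y aL)) X (Pi.single k 1) := by rw [hcomp.fderiv]
    _ = 0 := by rw [hz]; rfl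
/-- normal derivative formula on a flat face: at a point of the face
`xₙ = a` where `ν ∂ᵢν = 0` for all tangential directions `i`, one has
`∂ₙΦ = φ(a)ϕ(t₀)ν² (4p + 2bₙ/aₙₙ + φ'(a)/φ(a))`, and the outward normal
derivative of `Φ` equals its negative. -/
theorem normal_derivative_formula_on_face
    {n : ℕ} (T p : ℝ) (hT : 0 < T)
    (a : Fin (n+1) → Fin (n+1) → ℝ → ℝ) (b : Fin (n+1) → ℝ → ℝ) (c : ℝ → ℝ)
    (ha_symm : ∀ i j t, a i j t = a j i t)
    (ha_smooth : ∀ i j, ContDiff ℝ (⊤ : ℕ∞) (a i j))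
    (ha_bdd : ∀ i j, ∃ C, ∀ t, |a i j t| ≤ C)
    (hb_smooth : ∀ i, ContDiff ℝ (⊤ : ℕ∞) (b i))
    (hb_bdd : ∀ i, ∃ C, ∀ t, |b i t| ≤ C)
    (hc_smooth : ContDiff ℝ (⊤ : ℕ∞) c)
    (hc_bdd : ∃ C, ∀ t, |c t| ≤ C)
    (ha_nn_pos : ∀ t, 0 < a (Fin.last n) (Fin.last n) t)
    (D : Set (Fin n → ℝ)) (hD_open : IsOpen D)
    (aL : ℝ)
    (V : Set (Fin (n+1) → ℝ)) (hV_open : IsOpen V)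
    (hV_face : ∀ X ∈ D, Fin.snoc X aL ∈ V)
    (ε : (Fin (n+1) → ℝ) → ℝ → ℝ)
    (hε_smooth : ContDiffOn ℝ (⊤ : ℕ∞)
      (fun q : (Fin (n+1) → ℝ) × ℝ => ε q.1 q.2) (V ×ˢ Ioo 0 T))
    (hε_pde : ∀ x ∈ V, ∀ t ∈ Ioo (0:ℝ) T, transOp p a b c ε x t = 0)
    (hε_face : ∀ X ∈ D, ∀ t ∈ Ioo (0:ℝ) T, ε (Fin.snoc X aL) t = 0)
    (ν : (Fin (n+1) → ℝ) → ℝ → ℝ)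
    (hν : ∀ x t, ν x t = pd1 (Fin.last n) (fun y => ε y t) x)
    (φ ϕ : ℝ → ℝ)
    (hφ : ContDiff ℝ 2 φ) (hφ_pos : ∀ x, 0 < φ x)
    (hϕ : ContDiff ℝ 1 ϕ) (hϕ_pos : ∀ t, 0 < ϕ t)
    (Φ : (Fin (n+1) → ℝ) → ℝ → ℝ)
    (hΦ : ∀ x t, Φ x t = ν x t ^ 2 * φ (x (Fin.last n)) * ϕ t)
    (X₀ : Fin n → ℝ) (hX₀ : X₀ ∈ D) (t₀ : ℝ) (ht₀ : t₀ ∈ Ioo (0:ℝ) T)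
    (hcrit : ∀ i : Fin (n+1), i ≠ Fin.last n →
      ν (Fin.snoc X₀ aL) t₀ * pd1 i (fun y => ν y t₀) (Fin.snoc X₀ aL) = 0) :
    pd1 (Fin.last n) (fun y => Φ y t₀) (Fin.snoc X₀ aL)
      = φ aL * ϕ t₀ * ν (Fin.snoc X₀ aL) t₀ ^ 2 *
          (4 * p + 2 * b (Fin.last n) t₀ / a (Fin.last n) (Fin.last n) t₀
            + deriv φ aL / φ aL)
    ∧ fderiv ℝ (fun y => Φ y t₀) (Fin.snoc X₀ aL) (Pi.single (Fin.last n) (-1))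
      = -(φ aL * ϕ t₀ * ν (Fin.snoc X₀ aL) t₀ ^ 2 *
          (4 * p + 2 * b (Fin.last n) t₀ / a (Fin.last n) (Fin.last n) t₀
            + deriv φ aL / φ aL)) := by
  set x₀ : Fin (n+1) → ℝ := Fin.snoc X₀ aL with hx₀def
  have hx₀V : x₀ ∈ V := hV_face X₀ hX₀
  have hVT : IsOpen (V ×ˢ Ioo (0:ℝ) T) := hV_open.prod isOpen_Ioo
  -- smoothness of the time slice u = ε(·, t₀)
  have huAt : ∀ x ∈ V, ContDiffAt ℝ (⊤ : ℕ∞) (fun y => ε y t₀) x := by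
    intro x hx
    have h1 : ContDiffAt ℝ (⊤ : ℕ∞) (fun q : (Fin (n+1) → ℝ) × ℝ => ε q.1 q.2) (x, t₀) :=
      hε_smooth.contDiffAt (hVT.mem_nhds ⟨hx, ht₀⟩)
    exact h1.comp x (contDiffAt_id.prodMk contDiffAt_const)
  have huD : ∀ x ∈ V, DifferentiableAt ℝ (fun y => ε y t₀) x :=
    fun x hx => (huAt x hx).differentiableAt (by simp)
  have hfdAt : ∀ x ∈ V, ContDiffAt ℝ (⊤ : ℕ∞) (fderiv ℝ (fun y => ε y t₀)) x :=
    fun x hx => (huAt x hx).fderiv_right (by simp)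
  have hfdD : ∀ x ∈ V, DifferentiableAt ℝ (fderiv ℝ (fun y => ε y t₀)) x :=
    fun x hx => (hfdAt x hx).differentiableAt (by simp)
  -- pd1 j u as a function and its differentiability
  have hpd1D : ∀ j, ∀ x ∈ V, DifferentiableAt ℝ (fun y => pd1 j (fun z => ε z t₀) y) x := by
    intro j x hx
    exact (hfdD x hx).clm_apply (differentiableAt_const _)
  -- second derivative formula
  have hpd2f : ∀ i j : Fin (n+1), ∀ x ∈ V, pd2 i j (fun y => ε y t₀) x
      = fderiv ℝ (fderiv ℝ (fun y => ε y t₀)) x (Pi.single i 1) (Pi.single j 1) := by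
    intro i j x hx
    show fderiv ℝ (fun y => fderiv ℝ (fun z => ε z t₀) y (Pi.single j 1)) x (Pi.single i 1) = _
    rw [fderiv_clm_apply (hfdD x hx) (differentiableAt_const _)]
    simp
  -- Schwarz symmetry at x₀
  have hsymm : IsSymmSndFDerivAt ℝ (fun y => ε y t₀) x₀ :=
    (huAt x₀ hx₀V).isSymmSndFDerivAt (by rw [minSmoothness_of_isRCLikeNormedField]; exact WithTop.coe_le_coe.mpr le_top)
  have hswap : ∀ j, pd2 (Fin.last n) j (fun y => ε y t₀) x₀
      = pd2 j (Fin.last n) (fun y => ε y t₀) x₀ := by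
    intro j
    rw [hpd2f _ _ x₀ hx₀V, hpd2f _ _ x₀ hx₀V]
    exact hsymm _ _
  -- first tangential derivatives vanish on the face
  have hu0 : ∀ X ∈ D, (fun y => ε y t₀) (Fin.snoc X aL) = 0 :=
    fun X hX => hε_face X hX t₀ ht₀
  have h1tan : ∀ X ∈ D, ∀ i : Fin (n+1), i ≠ Fin.last n →
      pd1 i (fun y => ε y t₀) (Fin.snoc X aL) = 0 := by
    intro X hX i hi
    exact tangential_deriv_zero hD_open hu0 hX (huD _ (hV_face X hX)) hi
  -- pure tangential second derivatives vanish at x₀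
  have h2tan : ∀ i j : Fin (n+1), i ≠ Fin.last n → j ≠ Fin.last n →
      pd2 i j (fun y => ε y t₀) x₀ = 0 := by
    intro i j hi hj
    exact tangential_deriv_zero hD_open
      (fun X hX => h1tan X hX j hj) hX₀ (hpd1D j x₀ hx₀V) hi
  -- time derivative vanishes at (x₀, t₀)
  have hdt : deriv (fun s => ε x₀ s) t₀ = 0 := by
    have hev : (fun s => ε x₀ s) =ᶠ[nhds t₀] fun _ => (0:ℝ) :=
      Filter.eventuallyEq_of_mem (isOpen_Ioo.mem_nhds ht₀)
        (fun s hs => hε_face X₀ hX₀ s hs)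
    rw [hev.deriv_eq, deriv_const]
  -- relation between ν and pd's
  have hνf : (fun y => ν y t₀) = fun y => pd1 (Fin.last n) (fun z => ε z t₀) y :=
    funext fun y => hν y t₀
  set ν₀ : ℝ := ν x₀ t₀ with hν₀def
  have hν₀ : ν₀ = pd1 (Fin.last n) (fun z => ε z t₀) x₀ := hν x₀ t₀
  have hcrit' : ∀ i : Fin (n+1), i ≠ Fin.last n →
      ν₀ * pd2 i (Fin.last n) (fun y => ε y t₀) x₀ = 0 := by
    intro i hi
    have := hcrit i hi
    rwa [hνf] at this
  -- the PDE at (x₀, t₀), simplified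
  have hpde := hε_pde x₀ hx₀V t₀ ht₀
  unfold transOp at hpde
  rw [hdt] at hpde
  have h1tan0 : ∀ i : Fin (n+1), i ≠ Fin.last n →
      pd1 i (fun y => ε y t₀) x₀ = 0 := fun i hi => h1tan X₀ hX₀ i hi
  have hT1 : ∑ i ∈ Finset.univ.erase (Fin.last n),
      (2 * p * a i (Fin.last n) t₀ + b i t₀) * pd1 i (fun y => ε y t₀) x₀ = 0 :=
    Finset.sum_eq_zero (fun i hi => by
      rw [h1tan0 i (Finset.ne_of_mem_erase hi), mul_zero])
  have heps0 : ε x₀ t₀ = 0 := hε_face X₀ hX₀ t₀ ht₀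
  rw [hT1, heps0, mul_zero] at hpde
  -- multiply the double sum by ν₀ : only the (last, last) term survives
  have hterm : ∀ i j : Fin (n+1), ¬(i = Fin.last n ∧ j = Fin.last n) →
      ν₀ * (a i j t₀ * pd2 i j (fun y => ε y t₀) x₀) = 0 := by
    intro i j hij
    by_cases hi : i = Fin.last n
    · subst hi
      have hj : j ≠ Fin.last n := fun h => hij ⟨rfl, h⟩
      rw [hswap j, mul_comm (a _ j t₀), ← mul_assoc, hcrit' j hj, zero_mul]
    · by_cases hj : j = Fin.last n
      · subst hj
        rw [mul_comm (a i _ t₀), ← mul_assoc, hcrit' i hi, zero_mul]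
      · rw [h2tan i j hi hj, mul_zero, mul_zero]
  have hSν : ν₀ * (∑ i, ∑ j, a i j t₀ * pd2 i j (fun y => ε y t₀) x₀)
      = ν₀ * (a (Fin.last n) (Fin.last n) t₀
          * pd2 (Fin.last n) (Fin.last n) (fun y => ε y t₀) x₀) := by
    rw [Finset.mul_sum]
    rw [Finset.sum_eq_single (Fin.last n)]
    · rw [Finset.mul_sum, Finset.sum_eq_single (Fin.last n)]
      · intro j _ hj
        exact hterm _ j (fun h => hj h.2)
      · intro h; exact absurd (Finset.mem_univ _) h
    · intro i _ hi
      rw [Finset.mul_sum]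
      exact Finset.sum_eq_zero (fun j _ => hterm i j (fun h => hi h.1))
    · intro h; exact absurd (Finset.mem_univ _) h
  -- the key identity
  have hkey : a (Fin.last n) (Fin.last n) t₀
        * (ν₀ * pd2 (Fin.last n) (Fin.last n) (fun y => ε y t₀) x₀)
      = (2 * p * a (Fin.last n) (Fin.last n) t₀ + b (Fin.last n) t₀) * ν₀ ^ 2 := by
    have hS : (∑ i, ∑ j, a i j t₀ * pd2 i j (fun y => ε y t₀) x₀)
        = (2 * p * a (Fin.last n) (Fin.last n) t₀ + b (Fin.last n) t₀)
            * pd1 (Fin.last n) (fun y => ε y t₀) x₀ := by linarith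
    have h2 := congrArg (fun z => ν₀ * z) hS
    rw [hSν] at h2
    rw [← hν₀] at h2
    linear_combination h2
  -- differentiability of w := ν(·,t₀) at x₀
  have hwD : DifferentiableAt ℝ (fun y => ν y t₀) x₀ := by
    rw [hνf]; exact hpd1D _ x₀ hx₀V
  have hwHas : HasFDerivAt (fun y => ν y t₀) (fderiv ℝ (fun y => ν y t₀) x₀) x₀ :=
    hwD.hasFDerivAt
  have hWlast : fderiv ℝ (fun y => ν y t₀) x₀ (Pi.single (Fin.last n) 1)
      = pd2 (Fin.last n) (Fin.last n) (fun y => ε y t₀) x₀ := by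
    rw [hνf]; rfl
  -- derivative of y ↦ φ (y last)
  have hx₀last : x₀ (Fin.last n) = aL := Fin.snoc_last _ _
  have hφd : HasDerivAt φ (deriv φ aL) (x₀ (Fin.last n)) := by
    rw [hx₀last]
    exact ((hφ.differentiable (by norm_num)) aL).hasDerivAt
  have hproj : HasFDerivAt (fun y : Fin (n+1) → ℝ => y (Fin.last n))
      (ContinuousLinearMap.proj (R := ℝ) (φ := fun _ : Fin (n+1) => ℝ)
        (Fin.last n)) x₀ :=
    (ContinuousLinearMap.proj (R := ℝ) (φ := fun _ : Fin (n+1) => ℝ)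
      (Fin.last n)).hasFDerivAt
  have hφcomp : HasFDerivAt (fun y : Fin (n+1) → ℝ => φ (y (Fin.last n)))
      (deriv φ aL • ContinuousLinearMap.proj (R := ℝ)
        (φ := fun _ : Fin (n+1) => ℝ) (Fin.last n)) x₀ :=
    hφd.comp_hasFDerivAt x₀ hproj
  -- derivative of Φ(·, t₀)
  have hΦfun : (fun y => Φ y t₀)
      = fun y => (ν y t₀ * ν y t₀) * φ (y (Fin.last n)) * ϕ t₀ := by
    funext y; rw [hΦ]; ring
  have hΦHas := ((hwHas.fun_mul hwHas).fun_mul hφcomp).mul_const (ϕ t₀)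
  rw [← hΦfun] at hΦHas
  have hval : pd1 (Fin.last n) (fun y => Φ y t₀) x₀
      = (2 * (ν₀ * pd2 (Fin.last n) (Fin.last n) (fun y => ε y t₀) x₀))
          * φ aL * ϕ t₀ + ν₀ ^ 2 * deriv φ aL * ϕ t₀ := by
    show fderiv ℝ (fun y => Φ y t₀) x₀ (Pi.single (Fin.last n) 1) = _
    rw [hΦHas.fderiv]
    simp only [ContinuousLinearMap.add_apply, ContinuousLinearMap.smul_apply,
      ContinuousLinearMap.coe_smul', Pi.smul_apply, ContinuousLinearMap.proj_apply,
      Pi.single_eq_same, smul_eq_mul, hWlast, hx₀last, ← hν₀def]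
    ring
  have hann : a (Fin.last n) (Fin.last n) t₀ ≠ 0 := (ha_nn_pos t₀).ne'
  have hφa : φ aL ≠ 0 := (hφ_pos aL).ne'
  have hmain : pd1 (Fin.last n) (fun y => Φ y t₀) x₀
      = φ aL * ϕ t₀ * ν₀ ^ 2 *
          (4 * p + 2 * b (Fin.last n) t₀ / a (Fin.last n) (Fin.last n) t₀
            + deriv φ aL / φ aL) := by
    rw [hval]
    field_simp
    linear_combination (2 * φ aL * ϕ t₀) * hkey
  refine ⟨hmain, ?_⟩
  have hsingle : (Pi.single (Fin.last n) (-1:ℝ) : Fin (n+1) → ℝ)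
      = -Pi.single (Fin.last n) 1 := Pi.single_neg _ _
  rw [hsingle, (fderiv ℝ (fun y => Φ y t₀) x₀).map_neg]
  exact congrArg Neg.neg hmain
end

section
/- (Right-boundary chain estimate.) Let I ≥ 2 and real numbers a_1 < a_2 < b_1 < a_3 < b_2 < ⋯ < a_I < b_{I−1} < b_I (i.e. a_l < a_{l+1} < b_l < b_{l+1}). For k ∈ ℕ and 1 ≤ l ≤ I let M_l^k : [a_l, b_l] → [0,∞) be bounded functions, and set E_k = max_{1≤l≤I} sup_{[a_l,b_l]} M_l^k. Assume the transmission relations M_l^{k+1}(b_l) ≤ M_{l+1}^k(b_l) for 1 ≤ l ≤ I−1 and M_l^{k+1}(a_l) ≤ M_{l−1}^k(a_l) for 2 ≤ l ≤ I, for all k. Assume there are ρ ∈ (0,1) and strictly positive functions ψ_l : [a_l,b_l] → (0,∞) for 2 ≤ l ≤ I with ψ_l(a_l) ≤ ρ ψ_l(b_{l−1}) for 2 ≤ l ≤ I and ψ_l(b_l) ≤ ψ_l(b_{l−1}) for 2 ≤ l ≤ I−1, such that for all k and all x ∈ [a_l,b_l]: M_l^k(x) ψ_l(x) ≤ max( M_l^k(a_l)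 ψ_l(a_l), M_l^k(b_l) ψ_l(b_l) ) for 2 ≤ l ≤ I−1, and M_I^k(x) ψ_I(x) ≤ M_I^k(a_I) ψ_I(a_I). Then for every k ≥ 0 and every j ∈ {1,…,I−1}: M_{I−j}^{k+j}(b_{I−j}) ≤ ρ · max{E_k, E_{k+1}, …, E_{k+j−1}}. -/
open Set Filter

/-- Right-boundary chain estimate. -/
theorem right_boundary_chain_estimate
    (I : ℕ) (hI : 2 ≤ I)
    (a b : ℕ → ℝ)
    (horder : ∀ l, 1 ≤ l → l + 1 ≤ I →
      a l < a (l + 1) ∧ a (l + 1) < b l ∧ b l < b (l + 1))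
    (M : ℕ → ℕ → ℝ → ℝ)
    (hM_nonneg : ∀ k l, 1 ≤ l → l ≤ I → ∀ x ∈ Icc (a l) (b l), 0 ≤ M k l x)
    (hM_bdd : ∀ k l, 1 ≤ l → l ≤ I → ∃ C, ∀ x ∈ Icc (a l) (b l), M k l x ≤ C)
    (E : ℕ → ℝ)
    (hE : ∀ k, E k =
      sSup {y : ℝ | ∃ l, 1 ≤ l ∧ l ≤ I ∧ ∃ x ∈ Icc (a l) (b l), y = M k l x})
    (htrans_b : ∀ k l, 1 ≤ l → l + 1 ≤ I → M (k + 1) l (b l) ≤ M k (l + 1) (b l))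
    (htrans_a : ∀ k l, 2 ≤ l → l ≤ I → M (k + 1) l (a l) ≤ M k (l - 1) (a l))
    (ρ : ℝ) (hρ0 : 0 < ρ) (hρ1 : ρ < 1)
    (ψ : ℕ → ℝ → ℝ)
    (hψ_pos : ∀ l, 2 ≤ l → l ≤ I → ∀ x ∈ Icc (a l) (b l), 0 < ψ l x)
    (hψ_contr : ∀ l, 2 ≤ l → l ≤ I → ψ l (a l) ≤ ρ * ψ l (b (l - 1)))
    (hψ_mono : ∀ l, 2 ≤ l → l + 1 ≤ I → ψ l (b l) ≤ ψ l (b (l - 1)))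
    (hmax_mid : ∀ k l, 2 ≤ l → l + 1 ≤ I → ∀ x ∈ Icc (a l) (b l),
      M k l x * ψ l x ≤ max (M k l (a l) * ψ l (a l)) (M k l (b l) * ψ l (b l)))
    (hmax_last : ∀ k, ∀ x ∈ Icc (a I) (b I),
      M k I x * ψ I x ≤ M k I (a I) * ψ I (a I)) :
    ∀ k, ∀ j, ∀ (hj : 1 ≤ j), j + 1 ≤ I →
      M (k + j) (I - j) (b (I - j)) ≤
        ρ * (Finset.range j).sup' (Finset.nonempty_range_iff.mpr (by omega))
          (fun m => E (k + m)) := by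
  have hE_ub : ∀ k l, 1 ≤ l → l ≤ I → ∀ x ∈ Icc (a l) (b l), M k l x ≤ E k := by
    intro k l h1 h2 x hx
    rw [hE k]
    have h' : ∀ l, ∃ C, ∀ x ∈ Icc (a l) (b l), 1 ≤ l → l ≤ I → M k l x ≤ C := by
      intro l
      by_cases hl : 1 ≤ l ∧ l ≤ I
      · obtain ⟨C, hC⟩ := hM_bdd k l hl.1 hl.2
        exact ⟨C, fun x hx _ _ => hC x hx⟩
      · exact ⟨0, fun x hx h1 h2 => absurd ⟨h1, h2⟩ hl⟩
    choose C hC using h'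
    refine le_csSup ⟨(Finset.Icc 1 I).sup' ⟨1, by simp; omega⟩ C, ?_⟩ ⟨l, h1, h2, x, hx, rfl⟩
    rintro y ⟨l', hl1, hl2, x', hx', rfl⟩
    exact (hC l' x' hx' hl1 hl2).trans (Finset.le_sup' C (by simp [Finset.mem_Icc]; omega))
  intro k j
  induction j with
  | zero => intro hj; omega
  | succ j ih =>
    intro _ hle
    set l' := I - j with hl'def
    have hl'I : l' ≤ I := by omega
    have hl'2 : 2 ≤ l' := by omega
    have he : l' - 1 + 1 = l' := by omega
    have hord := horder (l' - 1) (by omega) (by omega)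
    rw [he] at hord
    have hblmem : b (l' - 1) ∈ Icc (a l') (b l') := ⟨le_of_lt hord.2.1, le_of_lt hord.2.2⟩
    have hamem : a l' ∈ Icc (a l') (b l') := ⟨le_rfl, le_of_lt (hord.2.1.trans hord.2.2)⟩
    have hbmem : b l' ∈ Icc (a l') (b l') := ⟨le_of_lt (hord.2.1.trans hord.2.2), le_rfl⟩
    have hψb := hψ_pos l' hl'2 hl'I (b (l' - 1)) hblmem
    have hψa := hψ_pos l' hl'2 hl'I (a l') hamem
    have hψc := hψ_contr l' hl'2 hl'I
    have hidx : I - (j + 1) = l' - 1 := by omega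
    have hS : (0:ℝ) ≤ (Finset.range (j+1)).sup'
        (Finset.nonempty_range_iff.mpr (by omega)) (fun m => E (k + m)) := by
      refine le_trans (hM_nonneg (k + j) l' (by omega) hl'I _ hamem) ?_
      refine le_trans (hE_ub (k + j) l' (by omega) hl'I _ hamem) ?_
      exact Finset.le_sup' (fun m => E (k + m)) (Finset.self_mem_range_succ j)
    set S := (Finset.range (j+1)).sup'
        (Finset.nonempty_range_iff.mpr (by omega)) (fun m => E (k + m)) with hSdef
    have step1 : M (k + (j + 1)) (I - (j + 1)) (b (I - (j + 1)))
        ≤ M (k + j) l' (b (l' - 1)) := by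
      have h := htrans_b (k + j) (l' - 1) (by omega) (by omega)
      rw [he] at h
      rw [hidx, show k + (j + 1) = k + j + 1 by omega]
      exact h
    have key : M (k + j) l' (b (l' - 1)) * ψ l' (b (l' - 1)) ≤ (ρ * S) * ψ l' (b (l' - 1)) := by
      rcases Nat.eq_zero_or_pos j with hj0 | hjpos
      · have hlI : l' = I := by omega
        have hblmem' : b (l' - 1) ∈ Icc (a I) (b I) := hlI ▸ hblmem
        have h1 := hmax_last (k + j) (b (l' - 1)) hblmem'
        rw [← hlI] at h1
        refine h1.trans ?_
        have hME : M (k + j) l' (a l') ≤ S := by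
          refine le_trans (hE_ub (k + j) l' (by omega) hl'I _ hamem) ?_
          exact Finset.le_sup' (fun m => E (k + m)) (Finset.self_mem_range_succ j)
        calc M (k + j) l' (a l') * ψ l' (a l')
            ≤ S * (ρ * ψ l' (b (l' - 1))) :=
              mul_le_mul hME hψc (le_of_lt hψa) hS
          _ = (ρ * S) * ψ l' (b (l' - 1)) := by ring
      · have hl'lt : l' + 1 ≤ I := by omega
        have h1 := hmax_mid (k + j) l' hl'2 hl'lt (b (l' - 1)) hblmem
        refine h1.trans (max_le ?_ ?_)
        · have hME : M (k + j) l' (a l') ≤ S := by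
            refine le_trans (hE_ub (k + j) l' (by omega) hl'I _ hamem) ?_
            exact Finset.le_sup' (fun m => E (k + m)) (Finset.self_mem_range_succ j)
          calc M (k + j) l' (a l') * ψ l' (a l')
              ≤ S * (ρ * ψ l' (b (l' - 1))) := mul_le_mul hME hψc (le_of_lt hψa) hS
            _ = (ρ * S) * ψ l' (b (l' - 1)) := by ring
        · have hih := ih (by omega) (by omega)
          have hS'S : (Finset.range j).sup' (Finset.nonempty_range_iff.mpr (by omega))
              (fun m => E (k + m)) ≤ S := by
            refine Finset.sup'_le _ _ fun m hm => ?_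
            exact Finset.le_sup' (fun m => E (k + m))
              (Finset.mem_range.mpr (by simp at hm; omega))
          have hψm := hψ_mono l' hl'2 hl'lt
          have hψbl := hψ_pos l' hl'2 hl'I (b l') hbmem
          have hMb : M (k + j) l' (b l') ≤ ρ * S := by
            refine hih.trans ?_
            exact mul_le_mul_of_nonneg_left hS'S (le_of_lt hρ0)
          have hρS : 0 ≤ ρ * S := mul_nonneg (le_of_lt hρ0) hS
          exact mul_le_mul hMb hψm (le_of_lt hψbl) hρS
    have step2 : M (k + j) l' (b (l' - 1)) ≤ ρ * S :=
      (mul_le_mul_iff_of_pos_right hψb).mp key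
    exact step1.trans step2
end

section
/- (Geometric decay of the boundary errors.) Let I ≥ 2 and real numbers a_1 < a_2 < b_1 < a_3 < b_2 < ⋯ < a_I < b_{I−1} < b_I (i.e. a_l < a_{l+1} < b_l < b_{l+1}). For k ∈ ℕ and 1 ≤ l ≤ I let M_l^k : [a_l, b_l] → [0,∞) be bounded functions, and set E_k = max_{1≤l≤I} sup_{[a_l,b_l]} M_l^k. Assume for all k: (i) transmission: M_l^{k+1}(b_l) ≤ M_{l+1}^k(b_l) for 1 ≤ l ≤ I−1 and M_l^{k+1}(a_l) ≤ M_{l−1}^k(a_l) for 2 ≤ l ≤ I; (ii) unweighted maximum estimate: M_l^k(x) ≤ max( M_l^k(a_l), M_l^k(b_l) ) for all 1 ≤ l ≤ I and x ∈ [a_l,b_l]; (iii) there is ρ ∈ (0,1) and strictly positive weights ψ̄_l (2 ≤ l ≤ I), ψ̃_l (1 ≤ l ≤ I−1), ψ_♯ on [a_I,b_I], ψ_♭ on [a_1,b_1], with ψ̄_l(a_l) ≤ ρ ψ̄_l(b_{l−1}) (2 ≤ l ≤ I), ψ̄_l(b_l) ≤ ψ̄_l(b_{l−1}) (2 ≤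 l ≤ I−1), ψ̃_l(b_l) ≤ ρ ψ̃_l(a_{l+1}) (1 ≤ l ≤ I−1), ψ̃_l(a_l) ≤ ψ̃_l(a_{l+1}) (2 ≤ l ≤ I−1), ψ_♯(a_I) ≤ ρ ψ_♯(b_I), and ψ_♭(b_1) ≤ ρ ψ_♭(a_1), such that the weighted maximum estimates hold for all k and x: M_l^k(x) ψ(x) ≤ max( M_l^k(a_l) ψ(a_l), M_l^k(b_l) ψ(b_l) ) for 2 ≤ l ≤ I−1 with ψ ∈ {ψ̄_l, ψ̃_l}; M_I^k(x) ψ(x) ≤ M_I^k(a_I) ψ(a_I) for ψ ∈ {ψ̄_I, ψ_♯}; and M_1^k(x) ψ(x) ≤ M_1^k(b_1) ψ(b_1) for ψ ∈ {ψ̃_1, ψ_♭}. Then for all k ≥ 1: E_{k+I} ≤ ρ · max{E_k, E_{k+1}, …, E_{k+I−1}}. -/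
open Set Filter

/-- Geometric decay of the boundary errors. -/
theorem geometric_decay_of_boundary_errors
    (I : ℕ) (hI : 2 ≤ I)
    (a b : ℕ → ℝ)
    (horder : ∀ l, 1 ≤ l → l + 1 ≤ I →
      a l < a (l + 1) ∧ a (l + 1) < b l ∧ b l < b (l + 1))
    (M : ℕ → ℕ → ℝ → ℝ)
    (hM_nonneg : ∀ k l, 1 ≤ l → l ≤ I → ∀ x ∈ Icc (a l) (b l), 0 ≤ M k l x)
    (hM_bdd : ∀ k l, 1 ≤ l → l ≤ I → ∃ C, ∀ x ∈ Icc (a l) (b l), M k l x ≤ C)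
    (E : ℕ → ℝ)
    (hE : ∀ k, E k =
      sSup {y : ℝ | ∃ l, 1 ≤ l ∧ l ≤ I ∧ ∃ x ∈ Icc (a l) (b l), y = M k l x})
    -- (i) transmission
    (htrans_b : ∀ k l, 1 ≤ l → l + 1 ≤ I → M (k + 1) l (b l) ≤ M k (l + 1) (b l))
    (htrans_a : ∀ k l, 2 ≤ l → l ≤ I → M (k + 1) l (a l) ≤ M k (l - 1) (a l))
    -- (ii) unweighted maximum estimate
    (hmax_unw : ∀ k l, 1 ≤ l → l ≤ I → ∀ x ∈ Icc (a l) (b l),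
      M k l x ≤ max (M k l (a l)) (M k l (b l)))
    -- (iii) weights
    (ρ : ℝ) (hρ0 : 0 < ρ) (hρ1 : ρ < 1)
    (ψbar ψtil : ℕ → ℝ → ℝ) (ψsharp ψflat : ℝ → ℝ)
    (hψbar_pos : ∀ l, 2 ≤ l → l ≤ I → ∀ x ∈ Icc (a l) (b l), 0 < ψbar l x)
    (hψtil_pos : ∀ l, 1 ≤ l → l + 1 ≤ I → ∀ x ∈ Icc (a l) (b l), 0 < ψtil l x)
    (hψsharp_pos : ∀ x ∈ Icc (a I) (b I), 0 < ψsharp x)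
    (hψflat_pos : ∀ x ∈ Icc (a 1) (b 1), 0 < ψflat x)
    (hψbar_contr : ∀ l, 2 ≤ l → l ≤ I → ψbar l (a l) ≤ ρ * ψbar l (b (l - 1)))
    (hψbar_mono : ∀ l, 2 ≤ l → l + 1 ≤ I → ψbar l (b l) ≤ ψbar l (b (l - 1)))
    (hψtil_contr : ∀ l, 1 ≤ l → l + 1 ≤ I → ψtil l (b l) ≤ ρ * ψtil l (a (l + 1)))
    (hψtil_mono : ∀ l, 2 ≤ l → l + 1 ≤ I → ψtil l (a l) ≤ ψtil l (a (l + 1)))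
    (hψsharp_contr : ψsharp (a I) ≤ ρ * ψsharp (b I))
    (hψflat_contr : ψflat (b 1) ≤ ρ * ψflat (a 1))
    -- weighted maximum estimates
    (hmax_mid_bar : ∀ k l, 2 ≤ l → l + 1 ≤ I → ∀ x ∈ Icc (a l) (b l),
      M k l x * ψbar l x ≤
        max (M k l (a l) * ψbar l (a l)) (M k l (b l) * ψbar l (b l)))
    (hmax_mid_til : ∀ k l, 2 ≤ l → l + 1 ≤ I → ∀ x ∈ Icc (a l) (b l),
      M k l x * ψtil l x ≤
        max (M k l (a l) * ψtil l (a l)) (M k l (b l) * ψtil l (b l)))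
    (hmax_last_bar : ∀ k, ∀ x ∈ Icc (a I) (b I),
      M k I x * ψbar I x ≤ M k I (a I) * ψbar I (a I))
    (hmax_last_sharp : ∀ k, ∀ x ∈ Icc (a I) (b I),
      M k I x * ψsharp x ≤ M k I (a I) * ψsharp (a I))
    (hmax_first_til : ∀ k, ∀ x ∈ Icc (a 1) (b 1),
      M k 1 x * ψtil 1 x ≤ M k 1 (b 1) * ψtil 1 (b 1))
    (hmax_first_flat : ∀ k, ∀ x ∈ Icc (a 1) (b 1),
      M k 1 x * ψflat x ≤ M k 1 (b 1) * ψflat (b 1)) :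
    ∀ k, 1 ≤ k →
      E (k + I) ≤
        ρ * (Finset.range I).sup' (Finset.nonempty_range_iff.mpr (by omega))
          (fun m => E (k + m)) := by
  -- interval nonemptiness
  have hab : ∀ l, 1 ≤ l → l ≤ I → a l ≤ b l := by
    intro l h1 h2
    rcases eq_or_lt_of_le h2 with h | h
    · obtain ⟨l', rfl⟩ : ∃ l', l = l' + 1 := ⟨l - 1, by omega⟩
      obtain ⟨o1, o2, o3⟩ := horder l' (by omega) (by omega)
      linarith
    · obtain ⟨o1, o2, o3⟩ := horder l h1 (by omega)
      linarith
  have hmem_a : ∀ l, 1 ≤ l → l ≤ I → a l ∈ Icc (a l) (b l) := fun l h1 h2 =>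
    ⟨le_refl _, hab l h1 h2⟩
  have hmem_b : ∀ l, 1 ≤ l → l ≤ I → b l ∈ Icc (a l) (b l) := fun l h1 h2 =>
    ⟨hab l h1 h2, le_refl _⟩
  have hmem_an : ∀ l, 1 ≤ l → l + 1 ≤ I → a (l + 1) ∈ Icc (a l) (b l) := by
    intro l h1 h2
    obtain ⟨o1, o2, o3⟩ := horder l h1 h2
    exact ⟨le_of_lt o1, le_of_lt o2⟩
  have hmem_bp : ∀ l, 1 ≤ l → l + 1 ≤ I → b l ∈ Icc (a (l + 1)) (b (l + 1)) := by
    intro l h1 h2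
    obtain ⟨o1, o2, o3⟩ := horder l h1 h2
    exact ⟨le_of_lt o2, le_of_lt o3⟩
  -- sSup facts
  have hSbdd : ∀ k, BddAbove
      {y : ℝ | ∃ l, 1 ≤ l ∧ l ≤ I ∧ ∃ x ∈ Icc (a l) (b l), y = M k l x} := by
    intro k
    have hsub : {y : ℝ | ∃ l, 1 ≤ l ∧ l ≤ I ∧ ∃ x ∈ Icc (a l) (b l), y = M k l x} ⊆
        ⋃ l ∈ Set.Icc 1 I, M k l '' Icc (a l) (b l) := by
      rintro y ⟨l, h1, h2, x, hx, rfl⟩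
      exact Set.mem_biUnion ⟨h1, h2⟩ ⟨x, hx, rfl⟩
    refine BddAbove.mono hsub ?_
    rw [Set.Finite.bddAbove_biUnion (Set.finite_Icc 1 I)]
    rintro l ⟨h1, h2⟩
    obtain ⟨C, hC⟩ := hM_bdd k l h1 h2
    exact ⟨C, by rintro y ⟨x, hx, rfl⟩; exact hC x hx⟩
  have hle : ∀ k l, 1 ≤ l → l ≤ I → ∀ x ∈ Icc (a l) (b l), M k l x ≤ E k := by
    intro k l h1 h2 x hx
    rw [hE k]
    exact le_csSup (hSbdd k) ⟨l, h1, h2, x, hx, rfl⟩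
  have hE_le : ∀ k c, (∀ l, 1 ≤ l → l ≤ I →
      M k l (a l) ≤ c ∧ M k l (b l) ≤ c) → E k ≤ c := by
    intro k c hc
    rw [hE k]
    refine csSup_le ⟨M k 1 (a 1), 1, le_refl 1, by omega, a 1,
      hmem_a 1 (le_refl 1) (by omega), rfl⟩ ?_
    rintro y ⟨l, h1, h2, x, hx, rfl⟩
    exact le_trans (hmax_unw k l h1 h2 x hx) (max_le (hc l h1 h2).1 (hc l h1 h2).2)
  have hEpos : ∀ k, 0 ≤ E k := fun k =>
    le_trans (hM_nonneg k 1 (le_refl 1) (by omega) (a 1) (hmem_a 1 (le_refl 1) (by omega)))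
      (hle k 1 (le_refl 1) (by omega) (a 1) (hmem_a 1 (le_refl 1) (by omega)))
  -- L1 : first interval, flat weight
  have L1 : ∀ m, M m 1 (a 1) ≤ ρ * M m 1 (b 1) := by
    intro m
    have hpos := hψflat_pos (a 1) (hmem_a 1 (le_refl 1) (by omega))
    have h1 := hmax_first_flat m (a 1) (hmem_a 1 (le_refl 1) (by omega))
    have hB0 : 0 ≤ M m 1 (b 1) :=
      hM_nonneg m 1 (le_refl 1) (by omega) (b 1) (hmem_b 1 (le_refl 1) (by omega))
    have h2 : M m 1 (b 1) * ψflat (b 1) ≤ (ρ * M m 1 (b 1)) * ψflat (a 1) := by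
      nlinarith [mul_le_mul_of_nonneg_left hψflat_contr hB0]
    exact le_of_mul_le_mul_right (le_trans h1 h2) hpos
  -- L2 : last interval, sharp weight
  have L2 : ∀ m, M m I (b I) ≤ ρ * M m I (a I) := by
    intro m
    have hpos := hψsharp_pos (b I) (hmem_b I (by omega) (le_refl I))
    have h1 := hmax_last_sharp m (b I) (hmem_b I (by omega) (le_refl I))
    have hA0 : 0 ≤ M m I (a I) :=
      hM_nonneg m I (by omega) (le_refl I) (a I) (hmem_a I (by omega) (le_refl I))
    have h2 : M m I (a I) * ψsharp (a I) ≤ (ρ * M m I (a I)) * ψsharp (b I) := by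
      nlinarith [mul_le_mul_of_nonneg_left hψsharp_contr hA0]
    exact le_of_mul_le_mul_right (le_trans h1 h2) hpos
  -- L3 : middle, bar weight, moving right
  have L3 : ∀ m l, 1 ≤ l → l + 2 ≤ I → M (m + 1) l (b l) ≤
      max (ρ * M m (l + 1) (a (l + 1))) (M m (l + 1) (b (l + 1))) := by
    intro m l h1 h2
    have hmem : b l ∈ Icc (a (l + 1)) (b (l + 1)) := hmem_bp l h1 (by omega)
    have hpos := hψbar_pos (l + 1) (by omega) (by omega) (b l) hmem
    have ht := htrans_b m l h1 (by omega)
    have hw := hmax_mid_bar m (l + 1) (by omega) (by omega) (b l) hmem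
    have hc := hψbar_contr (l + 1) (by omega) (by omega)
    have hmono := hψbar_mono (l + 1) (by omega) (by omega)
    simp only [Nat.add_sub_cancel] at hc hmono
    have hA0 : 0 ≤ M m (l + 1) (a (l + 1)) :=
      hM_nonneg m (l + 1) (by omega) (by omega) _ (hmem_a (l + 1) (by omega) (by omega))
    have hB0 : 0 ≤ M m (l + 1) (b (l + 1)) :=
      hM_nonneg m (l + 1) (by omega) (by omega) _ (hmem_b (l + 1) (by omega) (by omega))
    have key : M m (l + 1) (b l) ≤
        max (ρ * M m (l + 1) (a (l + 1))) (M m (l + 1) (b (l + 1))) := by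
      refine le_of_mul_le_mul_right ?_ hpos
      rw [max_mul_of_nonneg _ _ (le_of_lt hpos)]
      refine le_trans hw (max_le ?_ ?_)
      · refine le_trans ?_ (le_max_left _ _)
        nlinarith [mul_le_mul_of_nonneg_left hc hA0]
      · refine le_trans ?_ (le_max_right _ _)
        nlinarith [mul_le_mul_of_nonneg_left hmono hB0]
    exact le_trans ht key
  -- L4 : next-to-last interval, bar weight on last interval
  have L4 : ∀ m l, 1 ≤ l → l + 1 = I → M (m + 1) l (b l) ≤ ρ * M m I (a I) := by
    intro m l h1 h2
    subst h2
    have hmem : b l ∈ Icc (a (l + 1)) (b (l + 1)) := hmem_bp l h1 (le_refl _)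
    have hpos := hψbar_pos (l + 1) (by omega) (le_refl _) (b l) hmem
    have ht := htrans_b m l h1 (le_refl _)
    have hw := hmax_last_bar m (b l) hmem
    have hc := hψbar_contr (l + 1) (by omega) (le_refl _)
    simp only [Nat.add_sub_cancel] at hc
    have hA0 : 0 ≤ M m (l + 1) (a (l + 1)) :=
      hM_nonneg m (l + 1) (by omega) (le_refl _) _ (hmem_a (l + 1) (by omega) (le_refl _))
    have key : M m (l + 1) (b l) ≤ ρ * M m (l + 1) (a (l + 1)) := by
      refine le_of_mul_le_mul_right ?_ hpos
      refine le_trans hw ?_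
      nlinarith [mul_le_mul_of_nonneg_left hc hA0]
    exact le_trans ht key
  -- L5 : middle, til weight, moving left
  have L5 : ∀ m l, 2 ≤ l → l + 1 ≤ I → M (m + 1) (l + 1) (a (l + 1)) ≤
      max (M m l (a l)) (ρ * M m l (b l)) := by
    intro m l h1 h2
    have hmem : a (l + 1) ∈ Icc (a l) (b l) := hmem_an l (by omega) h2
    have hpos := hψtil_pos l (by omega) h2 (a (l + 1)) hmem
    have ht := htrans_a m (l + 1) (by omega) h2
    simp only [Nat.add_sub_cancel] at ht
    have hw := hmax_mid_til m l h1 h2 (a (l + 1)) hmem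
    have hc := hψtil_contr l (by omega) h2
    have hmono := hψtil_mono l h1 h2
    have hA0 : 0 ≤ M m l (a l) :=
      hM_nonneg m l (by omega) (by omega) _ (hmem_a l (by omega) (by omega))
    have hB0 : 0 ≤ M m l (b l) :=
      hM_nonneg m l (by omega) (by omega) _ (hmem_b l (by omega) (by omega))
    have key : M m l (a (l + 1)) ≤ max (M m l (a l)) (ρ * M m l (b l)) := by
      refine le_of_mul_le_mul_right ?_ hpos
      rw [max_mul_of_nonneg _ _ (le_of_lt hpos)]
      refine le_trans hw (max_le ?_ ?_)
      · refine le_trans ?_ (le_max_left _ _)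
        nlinarith [mul_le_mul_of_nonneg_left hmono hA0]
      · refine le_trans ?_ (le_max_right _ _)
        nlinarith [mul_le_mul_of_nonneg_left hc hB0]
    exact le_trans ht key
  -- L6 : second interval, til weight on first
  have L6 : ∀ m, M (m + 1) 2 (a 2) ≤ ρ * M m 1 (b 1) := by
    intro m
    have hmem : a 2 ∈ Icc (a 1) (b 1) := hmem_an 1 (le_refl 1) hI
    have hpos := hψtil_pos 1 (le_refl 1) hI (a 2) hmem
    have ht := htrans_a m 2 (le_refl 2) hI
    norm_num at ht
    have hw := hmax_first_til m (a 2) hmem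
    have hc := hψtil_contr 1 (le_refl 1) hI
    have hB0 : 0 ≤ M m 1 (b 1) :=
      hM_nonneg m 1 (le_refl 1) (by omega) _ (hmem_b 1 (le_refl 1) (by omega))
    have key : M m 1 (a 2) ≤ ρ * M m 1 (b 1) := by
      refine le_of_mul_le_mul_right ?_ hpos
      refine le_trans hw ?_
      nlinarith [mul_le_mul_of_nonneg_left hc hB0]
    exact le_trans ht key
  -- monotonicity of E
  have hmono : ∀ m, E (m + 1) ≤ E m := by
    intro m
    have hstep : E (m + 1) ≤ max (E m) (ρ * E (m + 1)) := by
      refine hE_le (m + 1) _ ?_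
      intro l h1 h2
      constructor
      · rcases eq_or_lt_of_le h1 with h | h
        · refine le_trans ?_ (le_max_right _ _)
          rw [← h]
          refine le_trans (L1 (m + 1)) ?_
          have := hle (m + 1) 1 (le_refl 1) (by omega) (b 1) (hmem_b 1 (le_refl 1) (by omega))
          nlinarith
        · refine le_trans ?_ (le_max_left _ _)
          obtain ⟨l', rfl⟩ : ∃ l', l = l' + 1 := ⟨l - 1, by omega⟩
          have ht := htrans_a m (l' + 1) (by omega) h2
          simp only [Nat.add_sub_cancel] at ht
          refine le_trans ht (hle m l' (by omega) (by omega) _ (hmem_an l' (by omega) h2))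
      · rcases eq_or_lt_of_le h2 with h | h
        · refine le_trans ?_ (le_max_right _ _)
          subst h
          refine le_trans (L2 (m + 1)) ?_
          have := hle (m + 1) l (by omega) (le_refl l) (a l) (hmem_a l (by omega) (le_refl l))
          nlinarith
        · refine le_trans ?_ (le_max_left _ _)
          have ht := htrans_b m l h1 (by omega)
          refine le_trans ht (hle m (l + 1) (by omega) (by omega) _ (hmem_bp l h1 (by omega)))
    rcases le_max_iff.mp hstep with h | h
    · exact h
    · nlinarith [hEpos (m + 1), hEpos m]
  have hEmono : ∀ m j, E (m + j) ≤ E m := by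
    intro m j
    induction j with
    | zero => simp
    | succ j ih => exact le_trans (by rw [← Nat.add_assoc]; exact hmono (m + j)) ih
  intro k hk
  -- right-moving smallness
  have hB : ∀ j l, 1 ≤ l → l ≤ I → I - l ≤ j → M (k + j) l (b l) ≤ ρ * E k := by
    intro j
    induction j with
    | zero =>
      intro l h1 h2 h3
      have hlI : l = I := by omega
      rw [hlI]
      refine le_trans (L2 (k + 0)) ?_
      have := hle (k + 0) I (by omega) (le_refl I) (a I) (hmem_a I (by omega) (le_refl I))
      have := hEmono k 0
      nlinarith
    | succ j ih =>
      intro l h1 h2 h3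
      by_cases hlI : l = I
      · rw [hlI]
        refine le_trans (L2 (k + (j + 1))) ?_
        have h4 := hle (k + (j + 1)) I (by omega) (le_refl I) (a I)
          (hmem_a I (by omega) (le_refl I))
        have h5 := hEmono k (j + 1)
        nlinarith
      · by_cases hl1 : l + 1 = I
        · have h4 : M (k + (j + 1)) l (b l) ≤ ρ * M (k + j) I (a I) :=
            L4 (k + j) l h1 hl1
          refine le_trans h4 ?_
          have h5 := hle (k + j) I (by omega) (le_refl I) (a I) (hmem_a I (by omega) (le_refl I))
          have h6 := hEmono k j
          nlinarith
        · have h4 : M (k + (j + 1)) l (b l) ≤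
              max (ρ * M (k + j) (l + 1) (a (l + 1))) (M (k + j) (l + 1) (b (l + 1))) :=
            L3 (k + j) l h1 (by omega)
          refine le_trans h4 (max_le ?_ ?_)
          · have h5 := hle (k + j) (l + 1) (by omega) (by omega) (a (l + 1))
              (hmem_a (l + 1) (by omega) (by omega))
            have h6 := hEmono k j
            nlinarith
          · exact ih (l + 1) (by omega) (by omega) (by omega)
  -- left-moving smallness
  have hA : ∀ j l, 1 ≤ l → l ≤ I → l - 1 ≤ j → M (k + j) l (a l) ≤ ρ * E k := by
    intro j
    induction j with
    | zero =>
      intro l h1 h2 h3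
      have : l = 1 := by omega
      subst this
      refine le_trans (L1 (k + 0)) ?_
      have := hle (k + 0) 1 (le_refl 1) (by omega) (b 1) (hmem_b 1 (le_refl 1) (by omega))
      have := hEmono k 0
      nlinarith
    | succ j ih =>
      intro l h1 h2 h3
      rcases eq_or_lt_of_le h1 with h | h
      · rw [← h]
        refine le_trans (L1 (k + (j + 1))) ?_
        have h4 := hle (k + (j + 1)) 1 (le_refl 1) (by omega) (b 1)
          (hmem_b 1 (le_refl 1) (by omega))
        have h5 := hEmono k (j + 1)
        nlinarith
      · rcases eq_or_lt_of_le (show 2 ≤ l by omega) with h' | h'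
        · have hl2 : l = 2 := by omega
          subst hl2
          have h4 : M (k + (j + 1)) 2 (a 2) ≤ ρ * M (k + j) 1 (b 1) :=
            L6 (k + j)
          refine le_trans h4 ?_
          have h5 := hle (k + j) 1 (le_refl 1) (by omega) (b 1) (hmem_b 1 (le_refl 1) (by omega))
          have h6 := hEmono k j
          nlinarith
        · obtain ⟨l', rfl⟩ : ∃ l', l = l' + 1 := ⟨l - 1, by omega⟩
          have h4 : M (k + (j + 1)) (l' + 1) (a (l' + 1)) ≤
              max (M (k + j) l' (a l')) (ρ * M (k + j) l' (b l')) :=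
            L5 (k + j) l' (by omega) (by omega)
          refine le_trans h4 (max_le ?_ ?_)
          · exact ih l' (by omega) (by omega) (by omega)
          · have h5 := hle (k + j) l' (by omega) (by omega) (b l')
              (hmem_b l' (by omega) (by omega))
            have h6 := hEmono k j
            nlinarith
  have hfinal : E (k + I) ≤ ρ * E k := by
    refine hE_le (k + I) _ ?_
    intro l h1 h2
    exact ⟨hA I l h1 h2 (by omega), hB I l h1 h2 (by omega)⟩
  refine le_trans hfinal ?_
  have h0 : E k ≤ (Finset.range I).sup' (Finset.nonempty_range_iff.mpr (by omega))
      (fun m => E (k + m)) := by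
    have := Finset.le_sup' (fun m => E (k + m))
      (Finset.mem_range.mpr (show 0 < I by omega))
    simpa only [Nat.add_zero] using this
  nlinarith
end
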